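/- arXiv:1809.09462 — 7 statements merged into one kernel-verified Lean document; each statement's English description precedes it below -/
import Mathlib

section
/- Let q ≥ 1 be a real number, and let A be an m×n matrix and B an m×k matrix, both with nonnegative real entries. Then ‖AᵀB‖_{L_{1,q}}² ≤ ‖AᵀA‖_{L_{q,q}} · ‖BᵀB‖_{L_{1,1}}. -/
open scoped Matrix

private lemma triple_comm {α β γ : Type*} [Fintype α] [Fintype β] [Fintype γ]
    (f : α → β → γ → ℝ) :
    ∑ a : α, ∑ b : β, ∑ c : γ, f a b c = ∑ c : γ, ∑ a : α, ∑ b : β, f a b c :=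
  calc ∑ a : α, ∑ b : β, ∑ c : γ, f a b c
      = ∑ a : α, ∑ c : γ, ∑ b : β, f a b c :=
        Finset.sum_congr rfl fun a _ => Finset.sum_comm
    _ = ∑ c : γ, ∑ a : α, ∑ b : β, f a b c := Finset.sum_comm

/-- The mixed matrix norm `‖M‖_{L_{p,q}} = (∑_i (∑_j |m_{ij}|^p)^{q/p})^{1/q}`. -/
noncomputable def mixedNorm {ι κ : Type*} [Fintype ι] [Fintype κ]
    (M : Matrix ι κ ℝ) (p q : ℝ) : ℝ :=
  (∑ i : ι, (∑ j : κ, |M i j| ^ p) ^ (q / p)) ^ (1 / q)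

/-- For `q ≥ 1` and nonnegative matrices `A`, `B`:
`‖AᵀB‖_{L_{1,q}}² ≤ ‖AᵀA‖_{L_{q,q}} · ‖BᵀB‖_{L_{1,1}}`. -/
theorem mixedNorm_transpose_mul_le {m n k : ℕ} (q : ℝ) (hq : 1 ≤ q)
    (A : Matrix (Fin m) (Fin n) ℝ) (B : Matrix (Fin m) (Fin k) ℝ)
    (hA : ∀ i j, 0 ≤ A i j) (hB : ∀ i j, 0 ≤ B i j) :
    mixedNorm (Aᵀ * B) 1 q ^ 2 ≤ mixedNorm (Aᵀ * A) q q * mixedNorm (Bᵀ * B) 1 1 := by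
  have hq0 : (0:ℝ) < q := lt_of_lt_of_le one_pos hq
  set s : Fin m → ℝ := fun i => ∑ l, B i l with hs_def
  set r : Fin n → ℝ := fun j => ∑ i, A i j * s i with hr_def
  have hs : ∀ i, 0 ≤ s i := fun i => Finset.sum_nonneg fun l _ => hB i l
  have hr : ∀ j, 0 ≤ r j := fun j =>
    Finset.sum_nonneg fun i _ => mul_nonneg (hA i j) (hs i)
  set R : ℝ := ∑ j, r j ^ q with hR_def
  set C : ℝ := ∑ j, ∑ j', (∑ i, A i j * A i j') ^ q with hC_def
  set S : ℝ := ∑ i, s i ^ 2 with hS_def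
  have hRnn : 0 ≤ R := Finset.sum_nonneg fun j _ => Real.rpow_nonneg (hr j) q
  have hCnn : 0 ≤ C := Finset.sum_nonneg fun j _ => Finset.sum_nonneg fun j' _ =>
    Real.rpow_nonneg (Finset.sum_nonneg fun i _ => mul_nonneg (hA i j) (hA i j')) q
  have hSnn : 0 ≤ S := Finset.sum_nonneg fun i _ => sq_nonneg _
  -- the three norms, simplified
  have h1 : mixedNorm (Aᵀ * B) 1 q = R ^ (1/q) := by
    unfold mixedNorm
    congr 1
    refine Finset.sum_congr rfl fun j _ => ?_
    rw [div_one]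
    congr 1
    simp only [Matrix.mul_apply, Matrix.transpose_apply, Real.rpow_one]
    have habs : ∀ l : Fin k, |∑ i, A i j * B i l| = ∑ i, A i j * B i l := fun l =>
      abs_of_nonneg (Finset.sum_nonneg fun i _ => mul_nonneg (hA i j) (hB i l))
    simp only [habs]
    rw [Finset.sum_comm, hr_def]
    exact Finset.sum_congr rfl fun i _ => (Finset.mul_sum _ _ _).symm
  have h2 : mixedNorm (Aᵀ * A) q q = C ^ (1/q) := by
    unfold mixedNorm
    congr 1
    refine Finset.sum_congr rfl fun j _ => ?_
    rw [div_self hq0.ne', Real.rpow_one]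
    refine Finset.sum_congr rfl fun j' _ => ?_
    congr 1
    simp only [Matrix.mul_apply, Matrix.transpose_apply]
    rw [abs_of_nonneg (Finset.sum_nonneg fun i _ => mul_nonneg (hA i j) (hA i j'))]
  have h3 : mixedNorm (Bᵀ * B) 1 1 = S := by
    unfold mixedNorm
    rw [div_one, Real.rpow_one]
    simp only [Real.rpow_one, Matrix.mul_apply, Matrix.transpose_apply]
    have habs : ∀ l l' : Fin k, |∑ i, B i l * B i l'| = ∑ i, B i l * B i l' := fun l l' =>
      abs_of_nonneg (Finset.sum_nonneg fun i _ => mul_nonneg (hB i l) (hB i l'))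
    simp only [habs]
    rw [triple_comm (fun l l' i => B i l * B i l')]
    refine Finset.sum_congr rfl fun i _ => ?_
    rw [sq, hs_def, Finset.sum_mul_sum]
  rw [h1, h2, h3]
  -- key arithmetic inequality : (R ^ (1/q)) ^ 2 ≤ C ^ (1/q) * S
  rcases eq_or_lt_of_le hq with hq1 | hq1
  · -- case q = 1
    subst hq1
    simp only [ne_eq, one_ne_zero, not_false_eq_true, div_self, Real.rpow_one]
    have hRt : R = ∑ i, (∑ j, A i j) * s i := by
      rw [hR_def]
      simp only [Real.rpow_one]
      rw [hr_def, Finset.sum_comm]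
      exact Finset.sum_congr rfl fun i _ => (Finset.sum_mul _ _ _).symm
    have hCt : C = ∑ i, (∑ j, A i j) ^ 2 := by
      rw [hC_def]
      simp only [Real.rpow_one]
      rw [triple_comm (fun j j' i => A i j * A i j')]
      exact Finset.sum_congr rfl fun i _ => by rw [sq, Finset.sum_mul_sum]
    rw [hRt, hCt]
    exact Finset.sum_mul_sq_le_sq_mul_sq _ _ _
  · -- case 1 < q
    set p : ℝ := Real.conjExponent q with hp_def
    have hpq : q.HolderConjugate p := Real.HolderConjugate.conjExponent hq1
    have hrq : ∀ j, r j ^ q = r j ^ (q - 1) * r j := by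
      intro j
      rcases eq_or_lt_of_le (hr j) with h0 | h0
      · rw [← h0, Real.zero_rpow hq0.ne',
          Real.zero_rpow (by linarith : q - 1 ≠ 0), zero_mul]
      · calc r j ^ q = r j ^ (q - 1 + 1) := by ring_nf
          _ = r j ^ (q - 1) * r j ^ (1:ℝ) := Real.rpow_add h0 _ _
          _ = r j ^ (q - 1) * r j := by rw [Real.rpow_one]
    set c : Fin n → ℝ := fun j => r j ^ (q - 1) with hc_def
    have hc : ∀ j, 0 ≤ c j := fun j => Real.rpow_nonneg (hr j) _
    have hcp : ∀ j, c j ^ p = r j ^ q := by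
      intro j
      rw [hc_def]
      show (r j ^ (q-1)) ^ p = r j ^ q
      rw [← Real.rpow_mul (hr j), hpq.sub_one_mul_conj]
    -- Step A : R = ∑ i, s i * (∑ j, c j * A i j)
    have stepA : R = ∑ i, s i * (∑ j, c j * A i j) := by
      calc R = ∑ j, c j * r j := Finset.sum_congr rfl fun j _ => hrq j
        _ = ∑ j, ∑ i, c j * (A i j * s i) := by
            refine Finset.sum_congr rfl fun j _ => ?_
            rw [hr_def, Finset.mul_sum]
        _ = ∑ i, ∑ j, c j * (A i j * s i) := Finset.sum_comm
        _ = ∑ i, s i * (∑ j, c j * A i j) := by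
            refine Finset.sum_congr rfl fun i _ => ?_
            rw [Finset.mul_sum]
            exact Finset.sum_congr rfl fun j _ => by ring
    set g : Fin m → ℝ := fun i => ∑ j, c j * A i j with hg_def
    -- Step B : Cauchy-Schwarz
    have stepB : R ^ 2 ≤ S * ∑ i, g i ^ 2 := by
      rw [stepA]
      exact Finset.sum_mul_sq_le_sq_mul_sq _ _ _
    -- Step C : expand ∑ g²
    have stepC : ∑ i, g i ^ 2 = ∑ j, ∑ j', c j * c j' * (∑ i, A i j * A i j') := by
      calc ∑ i, g i ^ 2 = ∑ i, ∑ j, ∑ j', (c j * A i j) * (c j' * A i j') := by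
            refine Finset.sum_congr rfl fun i _ => ?_
            rw [sq, hg_def, Finset.sum_mul_sum]
        _ = ∑ j, ∑ j', ∑ i, (c j * A i j) * (c j' * A i j') := by
            rw [triple_comm (fun j j' i => (c j * A i j) * (c j' * A i j'))]
        _ = ∑ j, ∑ j', c j * c j' * (∑ i, A i j * A i j') := by
            refine Finset.sum_congr rfl fun j _ => Finset.sum_congr rfl fun j' _ => ?_
            rw [Finset.mul_sum]
            exact Finset.sum_congr rfl fun i _ => by ring
    -- Step D : Hölder on pairs
    have stepD : ∑ j, ∑ j', c j * c j' * (∑ i, A i j * A i j')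
        ≤ R ^ ((2:ℝ)/p) * C ^ (1/q) := by
      have key := Real.inner_le_Lp_mul_Lq_of_nonneg (s := (Finset.univ : Finset (Fin n × Fin n)))
        (f := fun x => c x.1 * c x.2) (g := fun x => ∑ i, A i x.1 * A i x.2)
        hpq.symm
        (fun x _ => mul_nonneg (hc x.1) (hc x.2))
        (fun x _ => Finset.sum_nonneg fun i _ => mul_nonneg (hA i x.1) (hA i x.2))
      have e1 : (∑ x : Fin n × Fin n, (c x.1 * c x.2) ^ p) = R ^ ((2:ℝ)) := by
        have : ∀ x : Fin n × Fin n, (c x.1 * c x.2) ^ p = r x.1 ^ q * r x.2 ^ q := by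
          intro x
          rw [Real.mul_rpow (hc x.1) (hc x.2), hcp x.1, hcp x.2]
        simp only [this]
        rw [Real.rpow_two, sq, hR_def, Finset.sum_mul_sum]
        exact Fintype.sum_prod_type _
      have e2 : (∑ x : Fin n × Fin n, (∑ i, A i x.1 * A i x.2) ^ q) = C := by
        rw [Fintype.sum_prod_type, hC_def]
      rw [e1, e2, Fintype.sum_prod_type] at key
      calc ∑ j, ∑ j', c j * c j' * (∑ i, A i j * A i j')
          ≤ (R ^ (2:ℝ)) ^ (1/p) * C ^ (1/q) := key
        _ = R ^ ((2:ℝ)/p) * C ^ (1/q) := by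
            rw [← Real.rpow_mul hRnn]
            congr 1
            push_cast
            ring
    -- combine
    rcases eq_or_lt_of_le hRnn with hR0 | hR0
    · rw [← hR0, Real.zero_rpow (by positivity : (1:ℝ)/q ≠ 0)]
      have : (0:ℝ) ^ 2 = 0 := by norm_num
      rw [this]
      exact mul_nonneg (Real.rpow_nonneg hCnn _) hSnn
    · have hmain : R ^ ((2:ℝ)/q) * R ^ ((2:ℝ)/p) ≤ (C ^ (1/q) * S) * R ^ ((2:ℝ)/p) := by
        rw [← Real.rpow_add hR0]
        have hsum : (2:ℝ)/q + 2/p = 2 := by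
          rw [div_eq_mul_inv, div_eq_mul_inv, ← mul_add, hpq.inv_add_inv_eq_one, mul_one]
        rw [hsum]
        calc R ^ ((2:ℝ)) = R ^ 2 := Real.rpow_two R
          _ ≤ S * ∑ i, g i ^ 2 := stepB
          _ ≤ S * (R ^ ((2:ℝ)/p) * C ^ (1/q)) := by
              refine mul_le_mul_of_nonneg_left ?_ hSnn
              rw [stepC]; exact stepD
          _ = (C ^ (1/q) * S) * R ^ ((2:ℝ)/p) := by ring
      have hkey : R ^ ((2:ℝ)/q) ≤ C ^ (1/q) * S :=
        le_of_mul_le_mul_right hmain (Real.rpow_pos_of_pos hR0 _)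
      calc (R ^ ((1:ℝ)/q)) ^ 2 = R ^ ((2:ℝ)/q) := by
            rw [← Real.rpow_natCast (R ^ ((1:ℝ)/q)) 2, ← Real.rpow_mul hRnn]
            congr 1
            push_cast
            ring
        _ ≤ C ^ (1/q) * S := hkey
end

section
/- Let S, T, U, V be σ-finite measure spaces, let f(s,t), g(s,t,u), h(s,t,v) be nonnegative measurable functions, and let q ≥ 1 be a real number. Then (∫_{T×V} (∫_{U×S} f(s,t) g(s,t,u) h(s,t,v) du ds)^q dt dv)² ≤ (∫_T (∫_{U×U×S} f(s,t) g(s,t,u) g(s,t,u') du du' ds)^q dt) · (∫_{T×V×V} (∫_S f(s,t) h(s,t,v) h(s,t,v') ds)^q dt dv dv'), where the inequality is interpreted in [0,∞]. -/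
open MeasureTheory Set
open scoped ENNReal

private lemma CS2 {α : Type*} [MeasurableSpace α] {μ : Measure α} {a b : α → ℝ≥0∞}
    (ha : AEMeasurable a μ) (hb : AEMeasurable b μ) :
    (∫⁻ x, a x ^ (2⁻¹ : ℝ) * b x ^ (2⁻¹ : ℝ) ∂μ) ^ 2
      ≤ (∫⁻ x, a x ∂μ) * (∫⁻ x, b x ∂μ) := by
  have hpq : Real.HolderConjugate 2 2 := Real.HolderConjugate.two_two
  have H := ENNReal.lintegral_mul_le_Lp_mul_Lq (f := fun x => a x ^ (2⁻¹ : ℝ))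
    (g := fun x => b x ^ (2⁻¹ : ℝ)) μ hpq (ha.pow_const _) (hb.pow_const _)
  simp only [Pi.mul_apply] at H
  have h2 : ∀ x : ℝ≥0∞, (x ^ (2⁻¹ : ℝ)) ^ (2 : ℝ) = x := by
    intro x
    rw [← ENNReal.rpow_mul]
    norm_num
  simp only [h2] at H
  calc (∫⁻ x, a x ^ (2⁻¹ : ℝ) * b x ^ (2⁻¹ : ℝ) ∂μ) ^ 2
      ≤ ((∫⁻ x, a x ∂μ) ^ (1/2 : ℝ) * (∫⁻ x, b x ∂μ) ^ (1/2 : ℝ)) ^ 2 := by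
        gcongr
    _ = (∫⁻ x, a x ∂μ) * (∫⁻ x, b x ∂μ) := by
        rw [mul_pow, ← ENNReal.rpow_natCast (_ ^ _), ← ENNReal.rpow_natCast (_ ^ _),
          ← ENNReal.rpow_mul, ← ENNReal.rpow_mul]
        norm_num

private lemma wCS {α : Type*} [MeasurableSpace α] {μ : Measure α} (w a b : α → ℝ≥0∞)
    (haa : AEMeasurable (fun x => w x * a x * a x) μ)
    (hbb : AEMeasurable (fun x => w x * b x * b x) μ) :
    (∫⁻ x, w x * a x * b x ∂μ) ^ 2
      ≤ (∫⁻ x, w x * a x * a x ∂μ) * (∫⁻ x, w x * b x * b x ∂μ) := by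
  have key : ∀ x, w x * a x * b x
      = (w x * a x * a x) ^ (2⁻¹ : ℝ) * (w x * b x * b x) ^ (2⁻¹ : ℝ) := by
    intro x
    rw [← ENNReal.mul_rpow_of_nonneg _ _ (by norm_num : (0:ℝ) ≤ 2⁻¹)]
    have : w x * a x * a x * (w x * b x * b x) = (w x * a x * b x) ^ 2 := by ring
    rw [this, ← ENNReal.rpow_natCast (w x * a x * b x) 2, ← ENNReal.rpow_mul]
    norm_num
  calc (∫⁻ x, w x * a x * b x ∂μ) ^ 2
      = (∫⁻ x, (w x * a x * a x) ^ (2⁻¹:ℝ) * (w x * b x * b x) ^ (2⁻¹:ℝ) ∂μ) ^ 2 := by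
        congr 1; exact lintegral_congr key
    _ ≤ _ := CS2 haa hbb

private lemma holder_step {α : Type*} [MeasurableSpace α] (μ : Measure α)
    (a b : α → ℝ≥0∞) (ha : AEMeasurable a μ) (hb : AEMeasurable b μ)
    {q : ℝ} (hq : 1 ≤ q) :
    ∫⁻ x, a x ^ (q - 1) * b x ∂μ
      ≤ (∫⁻ x, a x ^ q ∂μ) ^ (1 - 1/q) * (∫⁻ x, b x ^ q ∂μ) ^ (1/q) := by
  rcases eq_or_lt_of_le hq with hq1 | hq1
  · subst hq1
    simp [ENNReal.rpow_one]
  · have hconj : Real.HolderConjugate (q / (q - 1)) q :=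
      (Real.HolderConjugate.conjExponent hq1).symm
    have H := ENNReal.lintegral_mul_le_Lp_mul_Lq μ hconj
      (ha.pow_const (q - 1)) hb
    simp only [Pi.mul_apply] at H
    have h1 : ∀ x, (a x ^ (q - 1)) ^ (q / (q - 1)) = a x ^ q := by
      intro x
      rw [← ENNReal.rpow_mul]
      congr 1
      rw [mul_comm]
      exact div_mul_cancel₀ q (sub_ne_zero.mpr (ne_of_gt hq1))
    have h2 : (1 : ℝ) / (q / (q - 1)) = 1 - 1/q := by
      field_simp
    simp only [h1] at H
    rw [h2] at H
    exact H

private lemma keyA {S V : Type*} [MeasurableSpace S] [MeasurableSpace V]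
    (μS : Measure S) (μV : Measure V) [SigmaFinite μS] [SigmaFinite μV]
    (f G : S → ℝ≥0∞) (h : S → V → ℝ≥0∞)
    (hf : Measurable f) (hG : Measurable G)
    (hh : Measurable (Function.uncurry h))
    (q : ℝ) (hq : 1 ≤ q) :
    (∫⁻ v, (∫⁻ s, f s * G s * h s v ∂μS) ^ q ∂μV) ^ 2
      ≤ (∫⁻ s, f s * G s * G s ∂μS) ^ q *
        ∫⁻ p : V × V, (∫⁻ s, f s * h s p.1 * h s p.2 ∂μS) ^ q ∂(μV.prod μV) := by
  have hq0 : (0:ℝ) < q := lt_of_lt_of_le one_pos hq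
  have hq1' : (0:ℝ) ≤ q - 1 := by linarith
  have hpow : ∀ x : ℝ≥0∞, x ^ (q - 1) * x = x ^ q := by
    intro x
    nth_rewrite 2 [← ENNReal.rpow_one x]
    rw [← ENNReal.rpow_add_of_nonneg _ _ hq1' zero_le_one]
    norm_num
  -- measurability of h in swapped order
  have hh' : ∀ v, Measurable fun s => h s v := fun v =>
    hh.comp (measurable_id.prodMk measurable_const)
  have hhsw : Measurable fun p : V × S => h p.2 p.1 := hh.comp measurable_swap
  set K : V → ℝ≥0∞ := fun v => ∫⁻ s, f s * G s * h s v ∂μS with hKdef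
  have hK : Measurable K := by
    apply Measurable.lintegral_prod_right (f := fun v s => f s * G s * h s v)
    exact ((hf.comp measurable_snd).mul (hG.comp measurable_snd)).mul hhsw
  set A : ℝ≥0∞ := ∫⁻ s, f s * G s * G s ∂μS with hAdef
  set B : V × V → ℝ≥0∞ := fun p => ∫⁻ s, f s * h s p.1 * h s p.2 ∂μS with hBdef
  have hB : Measurable B := by
    apply Measurable.lintegral_prod_right
      (f := fun (p : V × V) s => f s * h s p.1 * h s p.2)
    refine ((hf.comp measurable_snd).mul ?_).mul ?_
    · exact hh.comp (measurable_snd.prodMk (measurable_fst.comp measurable_fst))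
    · exact hh.comp (measurable_snd.prodMk (measurable_snd.comp measurable_fst))
  set C : ℝ≥0∞ := ∫⁻ p : V × V, B p ^ q ∂(μV.prod μV) with hCdef
  show (∫⁻ v, K v ^ q ∂μV) ^ 2 ≤ A ^ q * C
  -- truncations
  set χ : ℕ → V → ℝ≥0∞ := fun n => (spanningSets μV n).indicator (fun _ => 1) with hχdef
  have hχmeas : ∀ n, Measurable (χ n) := fun n =>
    measurable_const.indicator (measurableSet_spanningSets μV n)
  have hχle : ∀ n v, χ n v ≤ 1 := by
    intro n v
    by_cases hv : v ∈ spanningSets μV n <;> simp [hχdef, hv]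
  set ψ : ℕ → V → ℝ≥0∞ := fun n v => (K v ⊓ n) ^ (q - 1) * χ n v with hψdef
  have hψmeas : ∀ n, Measurable (ψ n) := fun n =>
    ((hK.min measurable_const).pow_const _).mul (hχmeas n)
  set M : ℕ → ℝ≥0∞ := fun n => ∫⁻ v, (K v ⊓ n) ^ q * χ n v ∂μV with hMdef
  have hMne : ∀ n, M n ≠ ⊤ := by
    intro n
    have hb : ∀ v, (K v ⊓ n) ^ q * χ n v ≤ (n : ℝ≥0∞) ^ q * χ n v := by
      intro v
      gcongr
      exact min_le_right _ _
    refine ne_top_of_le_ne_top (b := (n : ℝ≥0∞) ^ q * μV (spanningSets μV n))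
      (ENNReal.mul_ne_top
        (ENNReal.rpow_ne_top_of_nonneg (le_of_lt hq0) (ENNReal.natCast_ne_top n))
        (measure_spanningSets_lt_top μV n).ne) ?_
    calc M n ≤ ∫⁻ v, (n : ℝ≥0∞) ^ q * χ n v ∂μV := lintegral_mono hb
      _ = (n : ℝ≥0∞) ^ q * ∫⁻ v, χ n v ∂μV := lintegral_const_mul _ (hχmeas n)
      _ = (n : ℝ≥0∞) ^ q * μV (spanningSets μV n) := by
          congr 1
          simp only [hχdef]
          rw [lintegral_indicator (measurableSet_spanningSets μV n)]
          simp
  -- the truncated J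
  set Jn : ℕ → ℝ≥0∞ := fun n => ∫⁻ v, ψ n v * K v ∂μV with hJdef
  have hMJ : ∀ n, M n ≤ Jn n := by
    intro n
    refine lintegral_mono fun v => ?_
    rw [← hpow (K v ⊓ n)]
    calc (K v ⊓ n) ^ (q-1) * (K v ⊓ n) * χ n v
        = (K v ⊓ n) ^ (q-1) * χ n v * (K v ⊓ n) := by ring
      _ ≤ (K v ⊓ n) ^ (q-1) * χ n v * K v := by gcongr; exact min_le_left _ _
  have hh'' : ∀ s, Measurable fun v => h s v := fun s =>
    hh.comp (measurable_const.prodMk measurable_id)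
  set Φ : ℕ → S → ℝ≥0∞ := fun n s => ∫⁻ v, ψ n v * h s v ∂μV with hΦdef
  have hΦmeas : ∀ n, Measurable (Φ n) := by
    intro n
    apply Measurable.lintegral_prod_right (f := fun s v => ψ n v * h s v)
    exact ((hψmeas n).comp measurable_snd).mul hh
  -- Step 3 : Jn n = ∫_S f G Φ
  have hJ3 : ∀ n, Jn n = ∫⁻ s, f s * G s * Φ n s ∂μS := by
    intro n
    calc Jn n = ∫⁻ v, ∫⁻ s, ψ n v * (f s * G s * h s v) ∂μS ∂μV := by
          refine lintegral_congr fun v => ?_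
          rw [lintegral_const_mul (f := fun s => f s * G s * h s v) _ ((hf.mul hG).mul (hh' v))]
      _ = ∫⁻ s, ∫⁻ v, ψ n v * (f s * G s * h s v) ∂μV ∂μS := by
          apply lintegral_lintegral_swap
          exact (((hψmeas n).comp measurable_fst).mul
            (((hf.comp measurable_snd).mul (hG.comp measurable_snd)).mul hhsw)).aemeasurable
      _ = ∫⁻ s, f s * G s * Φ n s ∂μS := by
          refine lintegral_congr fun s => ?_
          have : ∀ v, ψ n v * (f s * G s * h s v) = (f s * G s) * (ψ n v * h s v) := by
            intro v; ring
          rw [lintegral_congr this, lintegral_const_mul (f := fun v => ψ n v * h s v) _ ((hψmeas n).mul (hh'' s))]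
  -- Step 4 : Cauchy-Schwarz in s
  set Dn : ℕ → ℝ≥0∞ := fun n => ∫⁻ s, f s * Φ n s * Φ n s ∂μS with hDdef
  have hJ4 : ∀ n, Jn n ^ 2 ≤ A * Dn n := by
    intro n
    rw [hJ3 n]
    exact wCS f G (Φ n) ((hf.mul hG).mul hG).aemeasurable
      ((hf.mul (hΦmeas n)).mul (hΦmeas n)).aemeasurable
  -- Step 5 : Dn as a double integral over V × V
  have hD5 : ∀ n, Dn n
      = ∫⁻ p : V × V, (ψ n p.1 * ψ n p.2) * B p ∂(μV.prod μV) := by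
    intro n
    have hmul : ∀ s, f s * Φ n s * Φ n s
        = ∫⁻ p : V × V, f s * ((ψ n p.1 * h s p.1) * (ψ n p.2 * h s p.2))
            ∂(μV.prod μV) := by
      intro s
      have hm : AEMeasurable (fun v => ψ n v * h s v) μV :=
        ((hψmeas n).mul (hh'' s)).aemeasurable
      have H : ∫⁻ p : V × V, (ψ n p.1 * h s p.1) * (ψ n p.2 * h s p.2) ∂(μV.prod μV)
          = Φ n s * Φ n s := lintegral_prod_mul hm hm
      calc f s * Φ n s * Φ n s
          = f s * ∫⁻ p : V × V, (ψ n p.1 * h s p.1) * (ψ n p.2 * h s p.2)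
              ∂(μV.prod μV) := by rw [mul_assoc, ← H]
        _ = ∫⁻ p : V × V, f s * ((ψ n p.1 * h s p.1) * (ψ n p.2 * h s p.2))
              ∂(μV.prod μV) := (lintegral_const_mul _
            ((((hψmeas n).comp measurable_fst).mul
              (hh.comp (measurable_const.prodMk measurable_fst))).mul
              (((hψmeas n).comp measurable_snd).mul
              (hh.comp (measurable_const.prodMk measurable_snd))))).symm
    calc Dn n = ∫⁻ s, ∫⁻ p : V × V,
          f s * ((ψ n p.1 * h s p.1) * (ψ n p.2 * h s p.2)) ∂(μV.prod μV) ∂μS :=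
          lintegral_congr hmul
      _ = ∫⁻ p : V × V, ∫⁻ s,
          f s * ((ψ n p.1 * h s p.1) * (ψ n p.2 * h s p.2)) ∂μS ∂(μV.prod μV) := by
          apply lintegral_lintegral_swap
          apply Measurable.aemeasurable
          apply (hf.comp measurable_fst).mul
          apply Measurable.mul
          · exact ((hψmeas n).comp (measurable_fst.comp measurable_snd)).mul
              (hh.comp (measurable_fst.prodMk (measurable_fst.comp measurable_snd)))
          · exact ((hψmeas n).comp (measurable_snd.comp measurable_snd)).mul
              (hh.comp (measurable_fst.prodMk (measurable_snd.comp measurable_snd)))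
      _ = ∫⁻ p : V × V, (ψ n p.1 * ψ n p.2) * B p ∂(μV.prod μV) := by
          refine lintegral_congr fun p => ?_
          have : ∀ s, f s * ((ψ n p.1 * h s p.1) * (ψ n p.2 * h s p.2))
              = (ψ n p.1 * ψ n p.2) * (f s * h s p.1 * h s p.2) := by
            intro s; ring
          rw [lintegral_congr this,
            lintegral_const_mul (f := fun s => f s * h s p.1 * h s p.2) _ ((hf.mul (hh' p.1)).mul (hh' p.2))]
  -- Step 6 : Hölder on V × V
  have hq1inv : (0:ℝ) ≤ 1 - 1/q := by
    have : 1/q ≤ 1 := by rw [div_le_one hq0]; exact hq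
    linarith
  have hD6 : ∀ n, Dn n ≤ (M n * M n) ^ (1 - 1/q) * C ^ (1/q) := by
    intro n
    set a : V × V → ℝ≥0∞ :=
      fun p => (K p.1 ⊓ n) * (K p.2 ⊓ n) * (χ n p.1 * χ n p.2) with hadef
    set b : V × V → ℝ≥0∞ := fun p => (χ n p.1 * χ n p.2) * B p with hbdef
    have hameas : Measurable a :=
      (((hK.comp measurable_fst).min measurable_const).mul
        ((hK.comp measurable_snd).min measurable_const)).mul
        (((hχmeas n).comp measurable_fst).mul ((hχmeas n).comp measurable_snd))
    have hbmeas : Measurable b :=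
      (((hχmeas n).comp measurable_fst).mul ((hχmeas n).comp measurable_snd)).mul hB
    have hpoint : ∀ p : V × V, (ψ n p.1 * ψ n p.2) * B p = a p ^ (q - 1) * b p := by
      intro p
      simp only [hψdef, hadef, hbdef, hχdef]
      by_cases h1 : p.1 ∈ spanningSets μV n
      · by_cases h2 : p.2 ∈ spanningSets μV n
        · simp only [indicator_of_mem h1, indicator_of_mem h2, mul_one, one_mul]
          rw [ENNReal.mul_rpow_of_nonneg _ _ hq1']
        · simp [indicator_of_notMem h2]
      · simp [indicator_of_notMem h1]
    have h6a : ∫⁻ p : V × V, a p ^ q ∂(μV.prod μV) = M n * M n := by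
      have : ∀ p : V × V, a p ^ q
          = ((K p.1 ⊓ n) ^ q * χ n p.1) * ((K p.2 ⊓ n) ^ q * χ n p.2) := by
        intro p
        simp only [hadef, hχdef]
        rw [ENNReal.mul_rpow_of_nonneg _ _ hq0.le, ENNReal.mul_rpow_of_nonneg _ _ hq0.le,
          ENNReal.mul_rpow_of_nonneg _ _ hq0.le]
        have hc : ∀ w : V, ((spanningSets μV n).indicator (fun _ => (1:ℝ≥0∞)) w) ^ q
            = (spanningSets μV n).indicator (fun _ => (1:ℝ≥0∞)) w := by
          intro w
          by_cases hw : w ∈ spanningSets μV n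
          · simp [indicator_of_mem hw]
          · simp [indicator_of_notMem hw, ENNReal.zero_rpow_of_pos hq0]
        rw [hc, hc]
        ring
      rw [lintegral_congr this,
        lintegral_prod_mul (f := fun v => (K v ⊓ (n:ℝ≥0∞)) ^ q * χ n v) (g := fun v => (K v ⊓ (n:ℝ≥0∞)) ^ q * χ n v) (((hK.min measurable_const).pow_const q).mul (hχmeas n)).aemeasurable
          (((hK.min measurable_const).pow_const q).mul (hχmeas n)).aemeasurable]
    have h6b : ∫⁻ p : V × V, b p ^ q ∂(μV.prod μV) ≤ C := by
      refine lintegral_mono fun p => ?_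
      have hble : b p ≤ B p := by
        calc b p ≤ 1 * B p := by
              apply mul_le_mul_left
              exact mul_le_one' (hχle n p.1) (hχle n p.2)
          _ = B p := one_mul _
      exact ENNReal.rpow_le_rpow hble hq0.le
    calc Dn n = ∫⁻ p : V × V, a p ^ (q - 1) * b p ∂(μV.prod μV) := by
          rw [hD5 n]; exact lintegral_congr hpoint
      _ ≤ (∫⁻ p : V × V, a p ^ q ∂(μV.prod μV)) ^ (1 - 1/q)
          * (∫⁻ p : V × V, b p ^ q ∂(μV.prod μV)) ^ (1/q) :=
          holder_step _ a b hameas.aemeasurable hbmeas.aemeasurable hq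
      _ ≤ (M n * M n) ^ (1 - 1/q) * C ^ (1/q) := by
          rw [h6a]
          gcongr
  -- Step 7 : bootstrap
  have h7 : ∀ n, M n * M n ≤ A ^ q * C := by
    intro n
    by_cases hx0 : M n = 0
    · simp [hx0]
    have hxt : M n * M n ≠ ⊤ := ENNReal.mul_ne_top (hMne n) (hMne n)
    have hxx0 : M n * M n ≠ 0 := mul_ne_zero hx0 hx0
    have hchain : M n * M n ≤ (M n * M n) ^ (1 - 1/q) * (A * C ^ (1/q)) := by
      calc M n * M n ≤ Jn n * Jn n := mul_le_mul' (hMJ n) (hMJ n)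
        _ = Jn n ^ 2 := (pow_two _).symm
        _ ≤ A * Dn n := hJ4 n
        _ ≤ A * ((M n * M n) ^ (1 - 1/q) * C ^ (1/q)) := by gcongr; exact hD6 n
        _ = (M n * M n) ^ (1 - 1/q) * (A * C ^ (1/q)) := by ring
    have hsplit : M n * M n = (M n * M n) ^ (1 - 1/q) * (M n * M n) ^ (1/q) := by
      rw [← ENNReal.rpow_add_of_nonneg _ _ hq1inv (by positivity)]
      norm_num
    nth_rewrite 1 [hsplit] at hchain
    have hcancel : (M n * M n) ^ (1/q) ≤ A * C ^ (1/q) := by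
      have hne0 : (M n * M n) ^ (1 - 1/q) ≠ 0 := by
        simp [ENNReal.rpow_eq_zero_iff, hxx0, hxt]
      have hnetop : (M n * M n) ^ (1 - 1/q) ≠ ⊤ :=
        ENNReal.rpow_ne_top_of_nonneg hq1inv hxt
      exact (ENNReal.mul_le_mul_iff_right hne0 hnetop).mp hchain
    have := ENNReal.rpow_le_rpow hcancel hq0.le
    rw [← ENNReal.rpow_mul, one_div_mul_cancel hq0.ne', ENNReal.rpow_one,
      ENNReal.mul_rpow_of_nonneg _ _ hq0.le, ← ENNReal.rpow_mul,
      one_div_mul_cancel hq0.ne', ENNReal.rpow_one] at this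
    exact this
  -- Step 8 : pass to the limit
  have hMmono : Monotone M := by
    intro n m hnm
    refine lintegral_mono fun v => ?_
    refine mul_le_mul' ?_ ?_
    · gcongr
    · exact indicator_le_indicator_of_subset (monotone_spanningSets μV hnm)
        (fun _ => zero_le_one) v
  have hKsup : (∫⁻ v, K v ^ q ∂μV) ≤ ⨆ n, M n := by
    have hFmeas : ∀ n : ℕ, Measurable fun v => (K v ⊓ (n:ℝ≥0∞)) ^ q * χ n v := fun n =>
      ((hK.min measurable_const).pow_const q).mul (hχmeas n)
    have hFmono : Monotone fun n : ℕ => fun v => (K v ⊓ (n:ℝ≥0∞)) ^ q * χ n v := by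
      intro n m hnm v
      refine mul_le_mul' ?_ ?_
      · gcongr
      · exact indicator_le_indicator_of_subset (monotone_spanningSets μV hnm)
          (fun _ => zero_le_one) v
    rw [hMdef, ← lintegral_iSup hFmeas hFmono]
    refine lintegral_mono fun v => ?_
    obtain ⟨N, hN⟩ : ∃ N, v ∈ spanningSets μV N := by
      have := iUnion_spanningSets μV
      have hv : v ∈ ⋃ i, spanningSets μV i := by rw [this]; trivial
      exact mem_iUnion.mp hv
    by_cases hKv : K v = ⊤
    · rw [hKv, ENNReal.top_rpow_of_pos hq0]
      rw [top_le_iff, iSup_eq_top]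
      intro c hc
      obtain ⟨m, hm⟩ := ENNReal.exists_nat_gt hc.ne
      refine ⟨N + m, ?_⟩
      show c < ((⊤ : ℝ≥0∞) ⊓ ((N + m : ℕ) : ℝ≥0∞)) ^ q * χ (N + m) v
      have hmem : v ∈ spanningSets μV (N + m) :=
        monotone_spanningSets μV (Nat.le_add_right N m) hN
      have hχ1 : χ (N + m) v = 1 := by simp [hχdef, indicator_of_mem hmem]
      rw [hχ1, mul_one, top_inf_eq]
      calc c < (m : ℝ≥0∞) := hm
        _ = (m : ℝ≥0∞) ^ (1:ℝ) := (ENNReal.rpow_one _).symm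
        _ ≤ (m : ℝ≥0∞) ^ q := by
            by_cases hm0 : m = 0
            · subst hm0
              simp at hm
            · apply ENNReal.rpow_le_rpow_of_exponent_le _ hq
              exact_mod_cast Nat.one_le_iff_ne_zero.mpr hm0
        _ ≤ ((N + m : ℕ) : ℝ≥0∞) ^ q := by
            gcongr
            exact_mod_cast Nat.le_add_left m N
    · obtain ⟨m, hm⟩ := ENNReal.exists_nat_gt hKv
      have hmem : v ∈ spanningSets μV (N + m) :=
        monotone_spanningSets μV (Nat.le_add_right N m) hN
      have hχ1 : χ (N + m) v = 1 := by simp [hχdef, indicator_of_mem hmem]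
      have hinf : K v ⊓ ((N + m : ℕ) : ℝ≥0∞) = K v := by
        apply inf_eq_left.mpr
        calc K v ≤ (m : ℝ≥0∞) := hm.le
          _ ≤ ((N + m : ℕ) : ℝ≥0∞) := by exact_mod_cast Nat.le_add_left m N
      calc K v ^ q = (K v ⊓ ((N + m:ℕ) : ℝ≥0∞)) ^ q * χ (N + m) v := by
            rw [hinf, hχ1, mul_one]
        _ ≤ ⨆ n : ℕ, (K v ⊓ (n:ℝ≥0∞)) ^ q * χ n v := le_iSup
            (fun n : ℕ => (K v ⊓ (n:ℝ≥0∞)) ^ q * χ n v) (N + m)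
  calc (∫⁻ v, K v ^ q ∂μV) ^ 2 = (∫⁻ v, K v ^ q ∂μV) * (∫⁻ v, K v ^ q ∂μV) := pow_two _
    _ ≤ (⨆ n, M n) * (⨆ n, M n) := mul_le_mul' hKsup hKsup
    _ ≤ A ^ q * C := by
        rw [ENNReal.iSup_mul]
        refine iSup_le fun i => ?_
        rw [ENNReal.mul_iSup]
        refine iSup_le fun j => ?_
        calc M i * M j ≤ M (max i j) * M (max i j) :=
              mul_le_mul' (hMmono (le_max_left i j)) (hMmono (le_max_right i j))
          _ ≤ A ^ q * C := h7 _


/-- A mixed-norm Cauchy–Schwarz / Hölder type inequality: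
`(∫_{T×V} (∫_{U×S} f g h)^q)² ≤ (∫_T (∫_{U×U×S} f g g')^q) · (∫_{T×V×V} (∫_S f h h')^q)`. -/
theorem mixed_norm_ineq {S T U V : Type*} [MeasurableSpace S] [MeasurableSpace T]
    [MeasurableSpace U] [MeasurableSpace V]
    (μS : Measure S) (μT : Measure T) (μU : Measure U) (μV : Measure V)
    [SigmaFinite μS] [SigmaFinite μT] [SigmaFinite μU] [SigmaFinite μV]
    (f : S → T → ℝ≥0∞) (g : S → T → U → ℝ≥0∞) (h : S → T → V → ℝ≥0∞)
    (hf : Measurable fun p : S × T => f p.1 p.2)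
    (hg : Measurable fun p : S × T × U => g p.1 p.2.1 p.2.2)
    (hh : Measurable fun p : S × T × V => h p.1 p.2.1 p.2.2)
    (q : ℝ) (hq : 1 ≤ q) :
    (∫⁻ tv : T × V,
        (∫⁻ us : U × S, f us.2 tv.1 * g us.2 tv.1 us.1 * h us.2 tv.1 tv.2
          ∂(μU.prod μS)) ^ q
      ∂(μT.prod μV)) ^ 2
    ≤ (∫⁻ t : T,
          (∫⁻ p : U × U × S, f p.2.2 t * g p.2.2 t p.1 * g p.2.2 t p.2.1
            ∂(μU.prod (μU.prod μS))) ^ q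
        ∂μT)
      * (∫⁻ p : T × V × V,
          (∫⁻ s : S, f s p.1 * h s p.1 p.2.1 * h s p.1 p.2.2 ∂μS) ^ q
        ∂(μT.prod (μV.prod μV))) := by
  set G : S → T → ℝ≥0∞ := fun s t => ∫⁻ u, g s t u ∂μU with hGdef
  have hGmeas : Measurable fun p : S × T => G p.1 p.2 := by
    apply Measurable.lintegral_prod_right (f := fun (p : S × T) u => g p.1 p.2 u)
    exact hg.comp ((measurable_fst.comp measurable_fst).prodMk
      ((measurable_snd.comp measurable_fst).prodMk measurable_snd))
  have hft : ∀ t, Measurable fun s => f s t := fun t =>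
    hf.comp (measurable_id.prodMk measurable_const)
  have hGt : ∀ t, Measurable fun s => G s t := fun t =>
    hGmeas.comp (measurable_id.prodMk measurable_const)
  have hgtu : ∀ s t, Measurable fun u => g s t u := fun s t =>
    hg.comp (measurable_const.prodMk (measurable_const.prodMk measurable_id))
  have hht : ∀ t, Measurable (Function.uncurry fun s v => h s t v) := fun t =>
    hh.comp (measurable_fst.prodMk (measurable_const.prodMk measurable_snd))
  -- the three slice quantities
  set P : T → ℝ≥0∞ :=
    fun t => ∫⁻ v, (∫⁻ s, f s t * G s t * h s t v ∂μS) ^ q ∂μV with hPdef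
  set Aq : T → ℝ≥0∞ :=
    fun t => (∫⁻ s, f s t * G s t * G s t ∂μS) ^ q with hAqdef
  set Ct : T → ℝ≥0∞ :=
    fun t => ∫⁻ p : V × V, (∫⁻ s, f s t * h s t p.1 * h s t p.2 ∂μS) ^ q
      ∂(μV.prod μV) with hCtdef
  -- measurability of slice quantities
  have mAq : Measurable Aq := by
    apply Measurable.pow_const
    apply Measurable.lintegral_prod_right (f := fun t s => f s t * G s t * G s t)
    exact ((hf.comp (measurable_snd.prodMk measurable_fst)).mul
      (hGmeas.comp (measurable_snd.prodMk measurable_fst))).mul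
      (hGmeas.comp (measurable_snd.prodMk measurable_fst))
  have mCt : Measurable Ct := by
    apply Measurable.lintegral_prod_right
      (f := fun t (p : V × V) =>
        (∫⁻ s, f s t * h s t p.1 * h s t p.2 ∂μS) ^ q)
    apply Measurable.pow_const
    apply Measurable.lintegral_prod_right
      (f := fun (tp : T × V × V) s => f s tp.1 * h s tp.1 tp.2.1 * h s tp.1 tp.2.2)
    exact ((hf.comp (measurable_snd.prodMk (measurable_fst.comp measurable_fst))).mul
      (hh.comp (measurable_snd.prodMk ((measurable_fst.comp measurable_fst).prodMk
        (measurable_fst.comp (measurable_snd.comp measurable_fst)))))).mul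
      (hh.comp (measurable_snd.prodMk ((measurable_fst.comp measurable_fst).prodMk
        (measurable_snd.comp (measurable_snd.comp measurable_fst)))))
  -- inner integral identity
  have Einner : ∀ t v, (∫⁻ us : U × S, f us.2 t * g us.2 t us.1 * h us.2 t v
      ∂(μU.prod μS)) = ∫⁻ s, f s t * G s t * h s t v ∂μS := by
    intro t v
    refine (lintegral_prod_symm _ ?_).trans (lintegral_congr fun s => ?_)
    · apply Measurable.aemeasurable
      exact ((hf.comp (measurable_snd.prodMk measurable_const)).mul (hg.comp (measurable_snd.prodMk (measurable_const.prodMk measurable_fst)))).mul (hh.comp (measurable_snd.prodMk (measurable_const.prodMk measurable_const)))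
    · show ∫⁻ u, f s t * g s t u * h s t v ∂μU = f s t * G s t * h s t v
      have : ∀ u, f s t * g s t u * h s t v = (f s t * h s t v) * g s t u := by
        intro u; ring
      rw [lintegral_congr this, lintegral_const_mul _ (hgtu s t)]
      show f s t * h s t v * G s t = _
      ring
  -- the gg' integral identity
  have EA : ∀ t, (∫⁻ p : U × U × S, f p.2.2 t * g p.2.2 t p.1 * g p.2.2 t p.2.1
      ∂(μU.prod (μU.prod μS))) = ∫⁻ s, f s t * G s t * G s t ∂μS := by
    intro t
    calc (∫⁻ p : U × U × S, f p.2.2 t * g p.2.2 t p.1 * g p.2.2 t p.2.1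
        ∂(μU.prod (μU.prod μS)))
        = ∫⁻ u, ∫⁻ p' : U × S, f p'.2 t * g p'.2 t u * g p'.2 t p'.1
            ∂(μU.prod μS) ∂μU := by
          refine lintegral_prod _ ?_
          apply Measurable.aemeasurable
          exact ((hf.comp ((measurable_snd.comp measurable_snd).prodMk measurable_const)).mul
            (hg.comp ((measurable_snd.comp measurable_snd).prodMk
              (measurable_const.prodMk measurable_fst)))).mul
            (hg.comp ((measurable_snd.comp measurable_snd).prodMk
              (measurable_const.prodMk (measurable_fst.comp measurable_snd))))
      _ = ∫⁻ u, ∫⁻ s, (f s t * g s t u) * G s t ∂μS ∂μU := by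
          refine lintegral_congr fun u => ?_
          refine (lintegral_prod_symm _ ?_).trans (lintegral_congr fun s => ?_)
          · apply Measurable.aemeasurable
            exact ((hf.comp (measurable_snd.prodMk measurable_const)).mul (hg.comp (measurable_snd.prodMk (measurable_const.prodMk measurable_const)))).mul (hg.comp (measurable_snd.prodMk (measurable_const.prodMk measurable_fst)))
          · show ∫⁻ u', f s t * g s t u * g s t u' ∂μU = (f s t * g s t u) * G s t
            exact lintegral_const_mul _ (hgtu s t)
      _ = ∫⁻ s, ∫⁻ u, (f s t * g s t u) * G s t ∂μU ∂μS := by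
          apply lintegral_lintegral_swap
          apply Measurable.aemeasurable
          exact ((hf.comp (measurable_snd.prodMk measurable_const)).mul (hg.comp (measurable_snd.prodMk (measurable_const.prodMk measurable_fst)))).mul (hGmeas.comp (measurable_snd.prodMk measurable_const))
      _ = ∫⁻ s, f s t * G s t * G s t ∂μS := by
          refine lintegral_congr fun s => ?_
          have : ∀ u, (f s t * g s t u) * G s t = (f s t * G s t) * g s t u := by
            intro u; ring
          rw [lintegral_congr this, lintegral_const_mul _ (hgtu s t)]
  -- split the outer integrals
  have Eouter : (∫⁻ tv : T × V,
      (∫⁻ us : U × S, f us.2 tv.1 * g us.2 tv.1 us.1 * h us.2 tv.1 tv.2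
        ∂(μU.prod μS)) ^ q ∂(μT.prod μV)) = ∫⁻ t, P t ∂μT := by
    calc (∫⁻ tv : T × V,
        (∫⁻ us : U × S, f us.2 tv.1 * g us.2 tv.1 us.1 * h us.2 tv.1 tv.2
          ∂(μU.prod μS)) ^ q ∂(μT.prod μV))
        = ∫⁻ t, ∫⁻ v,
            (∫⁻ us : U × S, f us.2 t * g us.2 t us.1 * h us.2 t v
              ∂(μU.prod μS)) ^ q ∂μV ∂μT := by
          refine lintegral_prod _ ?_
          apply Measurable.aemeasurable
          apply Measurable.pow_const
          apply Measurable.lintegral_prod_right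
            (f := fun (tv : T × V) (us : U × S) =>
              f us.2 tv.1 * g us.2 tv.1 us.1 * h us.2 tv.1 tv.2)
          exact ((hf.comp ((measurable_snd.comp measurable_snd).prodMk
              (measurable_fst.comp measurable_fst))).mul
            (hg.comp ((measurable_snd.comp measurable_snd).prodMk
              ((measurable_fst.comp measurable_fst).prodMk
                (measurable_fst.comp measurable_snd))))).mul
            (hh.comp ((measurable_snd.comp measurable_snd).prodMk
              ((measurable_fst.comp measurable_fst).prodMk
                (measurable_snd.comp measurable_fst))))
      _ = ∫⁻ t, P t ∂μT := by
          refine lintegral_congr fun t => ?_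
          refine lintegral_congr fun v => ?_
          rw [Einner t v]
  have ERHS2 : (∫⁻ p : T × V × V,
      (∫⁻ s : S, f s p.1 * h s p.1 p.2.1 * h s p.1 p.2.2 ∂μS) ^ q
        ∂(μT.prod (μV.prod μV))) = ∫⁻ t, Ct t ∂μT := by
    refine lintegral_prod _ ?_
    apply Measurable.aemeasurable
    apply Measurable.pow_const
    apply Measurable.lintegral_prod_right
      (f := fun (tp : T × V × V) s => f s tp.1 * h s tp.1 tp.2.1 * h s tp.1 tp.2.2)
    exact ((hf.comp (measurable_snd.prodMk (measurable_fst.comp measurable_fst))).mul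
      (hh.comp (measurable_snd.prodMk ((measurable_fst.comp measurable_fst).prodMk
        (measurable_fst.comp (measurable_snd.comp measurable_fst)))))).mul
      (hh.comp (measurable_snd.prodMk ((measurable_fst.comp measurable_fst).prodMk
        (measurable_snd.comp (measurable_snd.comp measurable_fst)))))
  have EAint : (∫⁻ t, (∫⁻ p : U × U × S,
      f p.2.2 t * g p.2.2 t p.1 * g p.2.2 t p.2.1
        ∂(μU.prod (μU.prod μS))) ^ q ∂μT) = ∫⁻ t, Aq t ∂μT := by
    refine lintegral_congr fun t => ?_
    rw [EA t]
  -- per-t key inequality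
  have key : ∀ t, P t ^ 2 ≤ Aq t * Ct t := fun t =>
    keyA μS μV (fun s => f s t) (fun s => G s t) (fun s v => h s t v)
      (hft t) (hGt t) (hht t) q hq
  have hstep : ∀ t, P t ≤ Aq t ^ (2⁻¹ : ℝ) * Ct t ^ (2⁻¹ : ℝ) := by
    intro t
    calc P t = (P t ^ (2 : ℕ)) ^ (2⁻¹ : ℝ) := by
          rw [← ENNReal.rpow_natCast (P t) 2, ← ENNReal.rpow_mul]
          norm_num
      _ ≤ (Aq t * Ct t) ^ (2⁻¹ : ℝ) := ENNReal.rpow_le_rpow (key t) (by norm_num)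
      _ = Aq t ^ (2⁻¹ : ℝ) * Ct t ^ (2⁻¹ : ℝ) :=
          ENNReal.mul_rpow_of_nonneg _ _ (by norm_num)
  rw [Eouter, ERHS2, EAint]
  calc (∫⁻ t, P t ∂μT) ^ 2
      ≤ (∫⁻ t, Aq t ^ (2⁻¹ : ℝ) * Ct t ^ (2⁻¹ : ℝ) ∂μT) ^ 2 :=
        pow_le_pow_left' (lintegral_mono hstep) 2
    _ ≤ (∫⁻ t, Aq t ∂μT) * (∫⁻ t, Ct t ∂μT) := CS2 mAq.aemeasurable mCt.aemeasurable
end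

section
/- Let Ω_1, Ω_2, Ω_3 be σ-finite measure spaces, and let f_{12} : Ω_1 × Ω_2 → [0,∞) and f_{23} : Ω_2 × Ω_3 → [0,∞) be measurable. Let β, γ, Δ be integers with 1 ≤ β ≤ Δ and γ ≥ 2. For x ∈ Ω_1 define f_{23}^x : Ω_2 × Ω_3 → [0,∞) by f_{23}^x(y,z) := f_{12}(x,y)^{1/(γ−1)} f_{23}(y,z). Then ∫_{Ω_1} ‖f_{23}^x‖_{K_{β,γ−1}}^{Δ(γ−1)} dx ≤ ‖f_{12}‖_{K_{γ,Δ}}^{Δ} · ‖f_{23}‖_{K_{β,γ}}^{Δ(γ−1)}, interpreted in [0,∞]. -/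
open MeasureTheory
open scoped ENNReal NNReal

/-- The bipartite graphical "norm" `‖f‖_{K_{a,b}}` of a two-variable nonnegative function:
`(∫_{Ω₁^a × Ω₂^b} ∏_{i,j} f(x_i,y_j))^{1/(ab)}`. -/
noncomputable def bipNorm {Ω₁ Ω₂ : Type*} [MeasurableSpace Ω₁] [MeasurableSpace Ω₂]
    (μ₁ : Measure Ω₁) (μ₂ : Measure Ω₂) (f : Ω₁ → Ω₂ → ℝ≥0∞) (a b : ℕ) : ℝ≥0∞ :=
  (∫⁻ x : Fin a → Ω₁, ∫⁻ y : Fin b → Ω₂,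
      ∏ i : Fin a, ∏ j : Fin b, f (x i) (y j)
    ∂(Measure.pi fun _ => μ₂) ∂(Measure.pi fun _ => μ₁)) ^ (((a : ℝ) * b)⁻¹)

/-- The `n`-th power of a Lebesgue integral as an integral over a finite power space. -/
lemma lintegral_pi_pow {α : Type*} [MeasurableSpace α] (μ : Measure α) [SigmaFinite μ]
    {g : α → ℝ≥0∞} (hg : Measurable g) :
    ∀ n : ℕ, (∫⁻ x : Fin n → α, ∏ k, g (x k) ∂(Measure.pi fun _ => μ))
      = (∫⁻ a, g a ∂μ) ^ n := by
  intro n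
  induction n with
  | zero =>
      rw [Measure.pi_of_empty]
      simp
  | succ n ih =>
      have hmp := measurePreserving_piFinSuccAbove (fun _ : Fin (n + 1) => μ) 0
      set e := MeasurableEquiv.piFinSuccAbove (fun _ : Fin (n + 1) => α) 0 with he
      have hG : Measurable fun q : α × (Fin n → α) => g q.1 * ∏ k, g (q.2 k) :=
        (hg.comp measurable_fst).mul
          (Finset.measurable_prod _ fun k _ => hg.comp ((measurable_pi_apply k).comp measurable_snd))
      have h1 : (∫⁻ x : Fin (n + 1) → α, ∏ k, g (x k) ∂(Measure.pi fun _ => μ))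
          = ∫⁻ x : Fin (n + 1) → α, (fun q : α × (Fin n → α) => g q.1 * ∏ k, g (q.2 k)) (e x)
              ∂(Measure.pi fun _ => μ) := by
        refine lintegral_congr fun x => ?_
        simp only [MeasurableEquiv.piFinSuccAbove_apply, Fin.insertNthEquiv]
        rw [Fin.prod_univ_succ]
        rfl
      rw [h1, hmp.lintegral_comp hG, lintegral_prod _ hG.aemeasurable]
      calc (∫⁻ a, ∫⁻ xs : Fin n → α, g a * ∏ k, g (xs k) ∂(Measure.pi fun _ => μ) ∂μ)
          = ∫⁻ a, g a * ∫⁻ xs : Fin n → α, ∏ k, g (xs k) ∂(Measure.pi fun _ => μ) ∂μ := by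
            refine lintegral_congr fun a => ?_
            exact lintegral_const_mul _
              (Finset.measurable_prod _ fun k _ => hg.comp (measurable_pi_apply k))
        _ = (∫⁻ a, g a ∂μ) * (∫⁻ a, g a ∂μ) ^ n := by
            rw [ih, lintegral_mul_const _ hg]
        _ = (∫⁻ a, g a ∂μ) ^ (n + 1) := by ring


private lemma measurable_coe_comp₂ {δ α β : Type*}
    [MeasurableSpace δ] [MeasurableSpace α] [MeasurableSpace β]
    {f : α → β → ℝ≥0} (hf : Measurable fun p : α × β => f p.1 p.2)
    {g₁ : δ → α} {g₂ : δ → β} (h₁ : Measurable g₁) (h₂ : Measurable g₂) :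
    Measurable fun d => (f (g₁ d) (g₂ d) : ℝ≥0∞) :=
  (hf.coe_nnreal_ennreal).comp (h₁.prodMk h₂)

/-- The local inequality (Lemma 3.3): with `f²³ₓ(y,z) = f₁₂(x,y)^{1/(γ−1)} f₂₃(y,z)`,
`∫ ‖f²³ₓ‖_{K_{β,γ−1}}^{Δ(γ−1)} dx ≤ ‖f₁₂‖_{K_{γ,Δ}}^Δ · ‖f₂₃‖_{K_{β,γ}}^{Δ(γ−1)}`. -/
theorem local_inequality {Ω₁ Ω₂ Ω₃ : Type*}
    [MeasurableSpace Ω₁] [MeasurableSpace Ω₂] [MeasurableSpace Ω₃]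
    (μ₁ : Measure Ω₁) (μ₂ : Measure Ω₂) (μ₃ : Measure Ω₃)
    [SigmaFinite μ₁] [SigmaFinite μ₂] [SigmaFinite μ₃]
    (f₁₂ : Ω₁ → Ω₂ → ℝ≥0) (f₂₃ : Ω₂ → Ω₃ → ℝ≥0)
    (h₁₂ : Measurable fun p : Ω₁ × Ω₂ => f₁₂ p.1 p.2)
    (h₂₃ : Measurable fun p : Ω₂ × Ω₃ => f₂₃ p.1 p.2)
    (β γ Δ : ℕ) (hβ : 1 ≤ β) (hβΔ : β ≤ Δ) (hγ : 2 ≤ γ) :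
    (∫⁻ x : Ω₁,
        (bipNorm μ₂ μ₃
            (fun y z => (f₁₂ x y : ℝ≥0∞) ^ (((γ : ℝ) - 1)⁻¹) * (f₂₃ y z : ℝ≥0∞))
            β (γ - 1))
          ^ ((Δ * (γ - 1) : ℕ) : ℝ) ∂μ₁)
    ≤ (bipNorm μ₁ μ₂ (fun x y => (f₁₂ x y : ℝ≥0∞)) γ Δ) ^ (Δ : ℝ)
      * (bipNorm μ₂ μ₃ (fun y z => (f₂₃ y z : ℝ≥0∞)) β γ) ^ ((Δ * (γ - 1) : ℕ) : ℝ) := by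
  -- replace γ by γ' + 1
  obtain ⟨γ', rfl⟩ : ∃ γ'', γ = γ'' + 1 := ⟨γ - 1, by omega⟩
  have hγ'1 : 1 ≤ γ' := by omega
  simp only [Nat.add_sub_cancel, Nat.cast_add, Nat.cast_one, add_sub_cancel_right]
  -- basic cast facts
  have hb0 : (0:ℝ) < (β : ℝ) := by exact_mod_cast Nat.pos_of_ne_zero (by omega)
  have hd0 : (0:ℝ) < (Δ : ℝ) := by exact_mod_cast Nat.pos_of_ne_zero (by omega)
  have hc0 : (0:ℝ) < (γ' : ℝ) := by exact_mod_cast Nat.pos_of_ne_zero (by omega)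
  set gR : ℝ := (γ' : ℝ) + 1 with hgR
  have hg0 : (0:ℝ) < gR := by linarith
  have hgcast : ((γ' + 1 : ℕ) : ℝ) = gR := by push_cast [hgR]; ring
  set p : ℝ := (Δ : ℝ) / (β : ℝ) with hp
  have hp0 : 0 < p := div_pos hd0 hb0
  have hp1 : 1 ≤ p := (one_le_div hb0).2 (by exact_mod_cast hβΔ)
  set eB : ℝ := ((Δ * γ' : ℕ) : ℝ) / ((β : ℝ) * gR) with heB
  -- measurability of coerced functions
  have m12 : Measurable fun q : Ω₁ × Ω₂ => (f₁₂ q.1 q.2 : ℝ≥0∞) := h₁₂.coe_nnreal_ennreal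
  have m23 : Measurable fun q : Ω₂ × Ω₃ => (f₂₃ q.1 q.2 : ℝ≥0∞) := h₂₃.coe_nnreal_ennreal
  -- the basic quantities
  set H : (Fin β → Ω₂) → ℝ≥0∞ := fun ys => ∫⁻ z, ∏ i, (f₂₃ (ys i) z : ℝ≥0∞) ∂μ₃ with hH
  set v : (Fin (γ' + 1) → Ω₁) → ℝ≥0∞ := fun xs => ∫⁻ w, ∏ k, (f₁₂ (xs k) w : ℝ≥0∞) ∂μ₂ with hv
  set I : Ω₁ → ℝ≥0∞ :=
    fun x => ∫⁻ ys : Fin β → Ω₂, (∏ i, (f₁₂ x (ys i) : ℝ≥0∞)) * H ys ^ (γ' : ℝ)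
      ∂(Measure.pi fun _ => μ₂) with hI
  set Ab : ℝ≥0∞ := ∫⁻ xs : Fin (γ' + 1) → Ω₁, v xs ^ (Δ : ℝ)
      ∂(Measure.pi fun _ => μ₁) with hAb
  set Bb : ℝ≥0∞ := ∫⁻ ys : Fin β → Ω₂, H ys ^ gR ∂(Measure.pi fun _ => μ₂) with hBb
  -- measurability of everything
  have mP23 : Measurable fun q : (Fin β → Ω₂) × Ω₃ => ∏ i, (f₂₃ (q.1 i) q.2 : ℝ≥0∞) :=
    Finset.measurable_prod _ fun i _ =>
      measurable_coe_comp₂ h₂₃ ((measurable_pi_apply i).comp measurable_fst) measurable_snd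
  have mH : Measurable H := mP23.lintegral_prod_right'
  have mP12 : Measurable fun q : (Fin (γ' + 1) → Ω₁) × Ω₂ => ∏ k, (f₁₂ (q.1 k) q.2 : ℝ≥0∞) :=
    Finset.measurable_prod _ fun k _ =>
      measurable_coe_comp₂ h₁₂ ((measurable_pi_apply k).comp measurable_fst) measurable_snd
  have mv : Measurable v := mP12.lintegral_prod_right'
  have mΘ : Measurable fun q : Ω₁ × (Fin β → Ω₂) =>
      (∏ i, (f₁₂ q.1 (q.2 i) : ℝ≥0∞)) * H q.2 ^ (γ' : ℝ) :=
    (Finset.measurable_prod _ fun i _ =>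
        measurable_coe_comp₂ h₁₂ measurable_fst ((measurable_pi_apply i).comp measurable_snd)).mul
      ((ENNReal.continuous_rpow_const.measurable).comp (mH.comp measurable_snd))
  have mI : Measurable I := mΘ.lintegral_prod_right'
  -- Step 1: rewrite the LHS integrand
  have hu : ∀ u : ℝ≥0∞, (u ^ ((γ' : ℝ))⁻¹) ^ (γ' : ℕ) = u := by
    intro u
    rw [← ENNReal.rpow_natCast (u ^ ((γ' : ℝ))⁻¹) γ', ← ENNReal.rpow_mul,
      inv_mul_cancel₀ hc0.ne', ENNReal.rpow_one]
  have S1 : ∀ x : Ω₁,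
      (bipNorm μ₂ μ₃
          (fun y z => (f₁₂ x y : ℝ≥0∞) ^ (((γ' : ℝ))⁻¹) * (f₂₃ y z : ℝ≥0∞)) β γ')
        ^ ((Δ * γ' : ℕ) : ℝ) = I x ^ p := by
    intro x
    have hbase : (∫⁻ ys : Fin β → Ω₂, ∫⁻ zs : Fin γ' → Ω₃,
        ∏ i, ∏ j, ((f₁₂ x (ys i) : ℝ≥0∞) ^ (((γ' : ℝ))⁻¹) * (f₂₃ (ys i) (zs j) : ℝ≥0∞))
          ∂(Measure.pi fun _ => μ₃) ∂(Measure.pi fun _ => μ₂)) = I x := by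
      simp only [hI]
      refine lintegral_congr fun ys => ?_
      have hgz : Measurable fun z : Ω₃ => ∏ i, (f₂₃ (ys i) z : ℝ≥0∞) :=
        Finset.measurable_prod _ fun i _ =>
          measurable_coe_comp₂ h₂₃ measurable_const measurable_id
      have hprodid : ∀ zs : Fin γ' → Ω₃,
          ∏ i, ∏ j, ((f₁₂ x (ys i) : ℝ≥0∞) ^ (((γ' : ℝ))⁻¹) * (f₂₃ (ys i) (zs j) : ℝ≥0∞))
            = (∏ i, (f₁₂ x (ys i) : ℝ≥0∞)) * ∏ j, ∏ i, (f₂₃ (ys i) (zs j) : ℝ≥0∞) := by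
        intro zs
        calc ∏ i, ∏ j, ((f₁₂ x (ys i) : ℝ≥0∞) ^ (((γ' : ℝ))⁻¹) * (f₂₃ (ys i) (zs j) : ℝ≥0∞))
            = ∏ i, (((f₁₂ x (ys i) : ℝ≥0∞) ^ (((γ' : ℝ))⁻¹)) ^ (γ' : ℕ)
                * ∏ j, (f₂₃ (ys i) (zs j) : ℝ≥0∞)) := by
              refine Finset.prod_congr rfl fun i _ => ?_
              rw [Finset.prod_mul_distrib, Finset.prod_const, Finset.card_univ, Fintype.card_fin]
          _ = (∏ i, ((f₁₂ x (ys i) : ℝ≥0∞) ^ (((γ' : ℝ))⁻¹)) ^ (γ' : ℕ))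
                * ∏ i, ∏ j, (f₂₃ (ys i) (zs j) : ℝ≥0∞) := Finset.prod_mul_distrib
          _ = (∏ i, (f₁₂ x (ys i) : ℝ≥0∞)) * ∏ j, ∏ i, (f₂₃ (ys i) (zs j) : ℝ≥0∞) := by
              rw [Finset.prod_comm]
              exact congrArg (· * _) (Finset.prod_congr rfl fun i _ => hu _)
      calc (∫⁻ zs : Fin γ' → Ω₃,
          ∏ i, ∏ j, ((f₁₂ x (ys i) : ℝ≥0∞) ^ (((γ' : ℝ))⁻¹) * (f₂₃ (ys i) (zs j) : ℝ≥0∞))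
            ∂(Measure.pi fun _ => μ₃))
          = ∫⁻ zs : Fin γ' → Ω₃,
              (∏ i, (f₁₂ x (ys i) : ℝ≥0∞)) * ∏ j, ∏ i, (f₂₃ (ys i) (zs j) : ℝ≥0∞)
              ∂(Measure.pi fun _ => μ₃) := lintegral_congr hprodid
        _ = (∏ i, (f₁₂ x (ys i) : ℝ≥0∞)) * ∫⁻ zs : Fin γ' → Ω₃,
              ∏ j, ∏ i, (f₂₃ (ys i) (zs j) : ℝ≥0∞) ∂(Measure.pi fun _ => μ₃) :=
            lintegral_const_mul _
              (Finset.measurable_prod _ fun j _ => hgz.comp (measurable_pi_apply j))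
        _ = (∏ i, (f₁₂ x (ys i) : ℝ≥0∞)) * H ys ^ (γ' : ℕ) := by
            rw [lintegral_pi_pow μ₃ hgz γ']
        _ = (∏ i, (f₁₂ x (ys i) : ℝ≥0∞)) * H ys ^ (γ' : ℝ) := by
            rw [← ENNReal.rpow_natCast]
    simp only [bipNorm]
    rw [hbase, ← ENNReal.rpow_mul]
    congr 1
    rw [hp]
    push_cast
    field_simp
  -- Step 2: rewrite the two RHS factors
  have RHS1 : (bipNorm μ₁ μ₂ (fun x y => (f₁₂ x y : ℝ≥0∞)) (γ' + 1) Δ) ^ (Δ : ℝ)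
      = Ab ^ gR⁻¹ := by
    have hbase : (∫⁻ xs : Fin (γ' + 1) → Ω₁, ∫⁻ ws : Fin Δ → Ω₂,
        ∏ k, ∏ l, (f₁₂ (xs k) (ws l) : ℝ≥0∞)
          ∂(Measure.pi fun _ => μ₂) ∂(Measure.pi fun _ => μ₁)) = Ab := by
      simp only [hAb]
      refine lintegral_congr fun xs => ?_
      have hg : Measurable fun w : Ω₂ => ∏ k, (f₁₂ (xs k) w : ℝ≥0∞) :=
        Finset.measurable_prod _ fun k _ =>
          measurable_coe_comp₂ h₁₂ measurable_const measurable_id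
      calc (∫⁻ ws : Fin Δ → Ω₂, ∏ k, ∏ l, (f₁₂ (xs k) (ws l) : ℝ≥0∞)
            ∂(Measure.pi fun _ => μ₂))
          = ∫⁻ ws : Fin Δ → Ω₂, ∏ l, ∏ k, (f₁₂ (xs k) (ws l) : ℝ≥0∞)
            ∂(Measure.pi fun _ => μ₂) := lintegral_congr fun ws => Finset.prod_comm
        _ = v xs ^ (Δ : ℕ) := lintegral_pi_pow μ₂ hg Δ
        _ = v xs ^ (Δ : ℝ) := by rw [← ENNReal.rpow_natCast]
    simp only [bipNorm]
    rw [hbase, ← ENNReal.rpow_mul]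
    congr 1
    push_cast
    field_simp
    ring
  have RHS2 : (bipNorm μ₂ μ₃ (fun y z => (f₂₃ y z : ℝ≥0∞)) β (γ' + 1)) ^ ((Δ * γ' : ℕ) : ℝ)
      = Bb ^ eB := by
    have hbase : (∫⁻ ys : Fin β → Ω₂, ∫⁻ zs : Fin (γ' + 1) → Ω₃,
        ∏ i, ∏ j, (f₂₃ (ys i) (zs j) : ℝ≥0∞)
          ∂(Measure.pi fun _ => μ₃) ∂(Measure.pi fun _ => μ₂)) = Bb := by
      simp only [hBb]
      refine lintegral_congr fun ys => ?_
      have hgz : Measurable fun z : Ω₃ => ∏ i, (f₂₃ (ys i) z : ℝ≥0∞) :=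
        Finset.measurable_prod _ fun i _ =>
          measurable_coe_comp₂ h₂₃ measurable_const measurable_id
      calc (∫⁻ zs : Fin (γ' + 1) → Ω₃, ∏ i, ∏ j, (f₂₃ (ys i) (zs j) : ℝ≥0∞)
            ∂(Measure.pi fun _ => μ₃))
          = ∫⁻ zs : Fin (γ' + 1) → Ω₃, ∏ j, ∏ i, (f₂₃ (ys i) (zs j) : ℝ≥0∞)
            ∂(Measure.pi fun _ => μ₃) := lintegral_congr fun zs => Finset.prod_comm
        _ = H ys ^ (γ' + 1 : ℕ) := lintegral_pi_pow μ₃ hgz (γ' + 1)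
        _ = H ys ^ gR := by rw [← ENNReal.rpow_natCast, hgcast]
    simp only [bipNorm]
    rw [hbase, ← ENNReal.rpow_mul]
    congr 1
    rw [heB, hgcast]
    push_cast
    field_simp
  -- the key estimate
  have key : ∀ ψ : Ω₁ → ℝ≥0∞, Measurable ψ →
      (∫⁻ x, I x * ψ x ∂μ₁)
        ≤ Bb ^ ((γ' : ℝ) / gR)
          * (∫⁻ xs : Fin (γ' + 1) → Ω₁, (∏ k, ψ (xs k)) * v xs ^ (β : ℝ)
              ∂(Measure.pi fun _ => μ₁)) ^ gR⁻¹ := by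
    intro ψ mψ
    set Φ : (Fin β → Ω₂) → ℝ≥0∞ :=
      fun ys => ∫⁻ x, (∏ i, (f₁₂ x (ys i) : ℝ≥0∞)) * ψ x ∂μ₁ with hΦ
    have mA : Measurable fun q : Ω₁ × (Fin β → Ω₂) => ∏ i, (f₁₂ q.1 (q.2 i) : ℝ≥0∞) :=
      Finset.measurable_prod _ fun i _ =>
        measurable_coe_comp₂ h₁₂ measurable_fst ((measurable_pi_apply i).comp measurable_snd)
    have mΦ : Measurable Φ := (mA.mul (mψ.comp measurable_fst)).lintegral_prod_left'
    have mAψ : ∀ ys : Fin β → Ω₂, Measurable fun x => (∏ i, (f₁₂ x (ys i) : ℝ≥0∞)) * ψ x :=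
      fun ys => (Finset.measurable_prod _ fun i _ =>
        measurable_coe_comp₂ h₁₂ measurable_id measurable_const).mul mψ
    have stepA : (∫⁻ x, I x * ψ x ∂μ₁)
        = ∫⁻ ys, H ys ^ (γ' : ℝ) * Φ ys ∂(Measure.pi fun _ : Fin β => μ₂) := by
      calc (∫⁻ x, I x * ψ x ∂μ₁)
          = ∫⁻ x, ∫⁻ ys, ((∏ i, (f₁₂ x (ys i) : ℝ≥0∞)) * H ys ^ (γ' : ℝ)) * ψ x
              ∂(Measure.pi fun _ : Fin β => μ₂) ∂μ₁ := by
            refine lintegral_congr fun x => ?_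
            simp only [hI]
            exact (lintegral_mul_const _
              ((Finset.measurable_prod _ fun i _ =>
                  measurable_coe_comp₂ h₁₂ measurable_const (measurable_pi_apply i)).mul
                ((ENNReal.continuous_rpow_const.measurable).comp mH))).symm
        _ = ∫⁻ ys, ∫⁻ x, ((∏ i, (f₁₂ x (ys i) : ℝ≥0∞)) * H ys ^ (γ' : ℝ)) * ψ x ∂μ₁
              ∂(Measure.pi fun _ : Fin β => μ₂) :=
            lintegral_lintegral_swap ((mΘ.mul (mψ.comp measurable_fst)).aemeasurable)
        _ = ∫⁻ ys, H ys ^ (γ' : ℝ) * Φ ys ∂(Measure.pi fun _ : Fin β => μ₂) := by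
            refine lintegral_congr fun ys => ?_
            simp only [hΦ]
            rw [← lintegral_const_mul _ (mAψ ys)]
            exact lintegral_congr fun x => by ring
    have hconj1 : Real.HolderConjugate (gR / (γ' : ℝ)) gR := by
      refine ⟨?_, div_pos hg0 hc0, hg0⟩
      rw [inv_div, inv_one, ← one_div, ← add_div]
      exact div_self hg0.ne'
    have stepC : (∫⁻ ys, Φ ys ^ gR ∂(Measure.pi fun _ : Fin β => μ₂))
        = ∫⁻ xs : Fin (γ' + 1) → Ω₁, (∏ k, ψ (xs k)) * v xs ^ (β : ℝ)
            ∂(Measure.pi fun _ => μ₁) := by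
      have mS2 : Measurable fun q : (Fin β → Ω₂) × (Fin (γ' + 1) → Ω₁) =>
          ∏ k, ((∏ i, (f₁₂ (q.2 k) (q.1 i) : ℝ≥0∞)) * ψ (q.2 k)) :=
        Finset.measurable_prod _ fun k _ =>
          (Finset.measurable_prod _ fun i _ =>
            measurable_coe_comp₂ h₁₂ ((measurable_pi_apply k).comp measurable_snd)
              ((measurable_pi_apply i).comp measurable_fst)).mul
            (mψ.comp ((measurable_pi_apply k).comp measurable_snd))
      calc (∫⁻ ys, Φ ys ^ gR ∂(Measure.pi fun _ : Fin β => μ₂))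
          = ∫⁻ ys, ∫⁻ xs : Fin (γ' + 1) → Ω₁,
              ∏ k, ((∏ i, (f₁₂ (xs k) (ys i) : ℝ≥0∞)) * ψ (xs k))
              ∂(Measure.pi fun _ => μ₁) ∂(Measure.pi fun _ : Fin β => μ₂) := by
            refine lintegral_congr fun ys => ?_
            rw [← hgcast, ENNReal.rpow_natCast]
            simp only [hΦ]
            exact (lintegral_pi_pow μ₁ (mAψ ys) (γ' + 1)).symm
        _ = ∫⁻ xs : Fin (γ' + 1) → Ω₁, ∫⁻ ys : Fin β → Ω₂,
              ∏ k, ((∏ i, (f₁₂ (xs k) (ys i) : ℝ≥0∞)) * ψ (xs k))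
              ∂(Measure.pi fun _ => μ₂) ∂(Measure.pi fun _ => μ₁) :=
            lintegral_lintegral_swap (mS2.aemeasurable)
        _ = ∫⁻ xs : Fin (γ' + 1) → Ω₁, (∏ k, ψ (xs k)) * v xs ^ (β : ℝ)
              ∂(Measure.pi fun _ => μ₁) := by
            refine lintegral_congr fun xs => ?_
            have hgw : Measurable fun w : Ω₂ => ∏ k, (f₁₂ (xs k) w : ℝ≥0∞) :=
              Finset.measurable_prod _ fun k _ =>
                measurable_coe_comp₂ h₁₂ measurable_const measurable_id
            have h1 : ∀ ys : Fin β → Ω₂,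
                ∏ k, ((∏ i, (f₁₂ (xs k) (ys i) : ℝ≥0∞)) * ψ (xs k))
                  = (∏ k, ψ (xs k)) * ∏ i, ∏ k, (f₁₂ (xs k) (ys i) : ℝ≥0∞) := by
              intro ys
              rw [Finset.prod_mul_distrib, mul_comm, Finset.prod_comm]
            calc (∫⁻ ys : Fin β → Ω₂, ∏ k, ((∏ i, (f₁₂ (xs k) (ys i) : ℝ≥0∞)) * ψ (xs k))
                  ∂(Measure.pi fun _ => μ₂))
                = ∫⁻ ys : Fin β → Ω₂, (∏ k, ψ (xs k)) * ∏ i, ∏ k, (f₁₂ (xs k) (ys i) : ℝ≥0∞)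
                  ∂(Measure.pi fun _ => μ₂) := lintegral_congr h1
              _ = (∏ k, ψ (xs k)) * ∫⁻ ys : Fin β → Ω₂, ∏ i, ∏ k, (f₁₂ (xs k) (ys i) : ℝ≥0∞)
                  ∂(Measure.pi fun _ => μ₂) :=
                lintegral_const_mul _
                  (Finset.measurable_prod _ fun i _ => hgw.comp (measurable_pi_apply i))
              _ = (∏ k, ψ (xs k)) * v xs ^ (β : ℕ) := by
                  rw [lintegral_pi_pow μ₂ hgw β]
              _ = (∏ k, ψ (xs k)) * v xs ^ (β : ℝ) := by rw [← ENNReal.rpow_natCast]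
    have mHc : Measurable fun ys => H ys ^ (γ' : ℝ) :=
      (ENNReal.continuous_rpow_const.measurable).comp mH
    calc (∫⁻ x, I x * ψ x ∂μ₁)
        = ∫⁻ a, ((fun ys => H ys ^ (γ' : ℝ)) * Φ) a ∂(Measure.pi fun _ : Fin β => μ₂) := stepA
      _ ≤ (∫⁻ ys, (H ys ^ (γ' : ℝ)) ^ (gR / (γ' : ℝ)) ∂(Measure.pi fun _ : Fin β => μ₂))
              ^ (1 / (gR / (γ' : ℝ)))
            * (∫⁻ ys, Φ ys ^ gR ∂(Measure.pi fun _ : Fin β => μ₂)) ^ (1 / gR) :=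
          ENNReal.lintegral_mul_le_Lp_mul_Lq _ hconj1 mHc.aemeasurable mΦ.aemeasurable
      _ = Bb ^ ((γ' : ℝ) / gR)
            * (∫⁻ xs : Fin (γ' + 1) → Ω₁, (∏ k, ψ (xs k)) * v xs ^ (β : ℝ)
                ∂(Measure.pi fun _ => μ₁)) ^ gR⁻¹ := by
          rw [stepC, one_div gR]
          congr 2
          · simp only [hBb]
            refine lintegral_congr fun ys => ?_
            rw [← ENNReal.rpow_mul]
            congr 1
            field_simp
          · rw [one_div_div]
  -- the main bound
  have Tle : (∫⁻ x, I x ^ p ∂μ₁) ≤ Ab ^ gR⁻¹ * Bb ^ eB := by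
    rcases eq_or_lt_of_le hβΔ with hcase | hcase
    · -- β = Δ : direct
      have hpone : p = 1 := by rw [hp, ← hcase]; exact div_self hb0.ne'
      have heB' : eB = (γ' : ℝ) / gR := by
        rw [heB, ← hcase]
        push_cast
        field_simp
      calc (∫⁻ x, I x ^ p ∂μ₁) = ∫⁻ x, I x * (fun _ : Ω₁ => (1:ℝ≥0∞)) x ∂μ₁ := by
            refine lintegral_congr fun x => ?_
            rw [hpone, ENNReal.rpow_one, mul_one]
        _ ≤ Bb ^ ((γ' : ℝ) / gR)
              * (∫⁻ xs : Fin (γ' + 1) → Ω₁,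
                  (∏ _k : Fin (γ' + 1), (fun _ : Ω₁ => (1:ℝ≥0∞)) (xs _k)) * v xs ^ (β : ℝ)
                  ∂(Measure.pi fun _ => μ₁)) ^ gR⁻¹ := key _ measurable_const
        _ = Bb ^ ((γ' : ℝ) / gR) * Ab ^ gR⁻¹ := by
            congr 2
            simp only [hAb]
            refine lintegral_congr fun xs => ?_
            rw [Finset.prod_const_one, one_mul, ← hcase]
        _ = Ab ^ gR⁻¹ * Bb ^ eB := by rw [heB', mul_comm]
    · -- β < Δ : truncation and self-improvement
      have hplt : 1 < p := (one_lt_div hb0).2 (by exact_mod_cast hcase)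
      have hpne1 : p - 1 ≠ 0 := by linarith
      set p' : ℝ := p / (p - 1) with hp'
      have hp'0 : 0 < p' := div_pos hp0 (by linarith)
      have hconj2 : Real.HolderConjugate p p' := by
        exact (Real.holderConjugate_iff_eq_conjExponent hplt).2 hp'
      have hpp' : (p - 1) * p' = p := by
        rw [hp']
        field_simp
      have hsum : 1 / p + 1 / p' = 1 := by
        rw [hp']
        field_simp
        ring
      set W : ℕ → Ω₁ → ℝ≥0∞ :=
        fun n x => (spanningSets μ₁ n).indicator (fun x' => min (I x') (n : ℝ≥0∞)) x with hW
      have mW : ∀ n, Measurable (W n) := fun n =>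
        (mI.min measurable_const).indicator (measurableSet_spanningSets μ₁ n)
      have hWleI : ∀ n x, W n x ≤ I x := by
        intro n x
        refine le_trans (Set.indicator_le_self' (fun _ _ => zero_le) x) (min_le_left _ _)
      set J : ℕ → ℝ≥0∞ := fun n => ∫⁻ x, W n x ^ p ∂μ₁ with hJ
      have Jfin : ∀ n, J n ≠ ∞ := by
        intro n
        have hb : ∀ x, W n x ^ p ≤ (spanningSets μ₁ n).indicator
            (fun _ => ((n : ℝ≥0∞)) ^ p) x := by
          intro x
          by_cases hx : x ∈ spanningSets μ₁ n
          · simp only [hW, Set.indicator_of_mem hx]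
            exact ENNReal.rpow_le_rpow (min_le_right _ _) hp0.le
          · simp only [hW, Set.indicator_of_notMem hx]
            rw [ENNReal.zero_rpow_of_pos hp0]
        have : J n ≤ ((n : ℝ≥0∞)) ^ p * μ₁ (spanningSets μ₁ n) := by
          rw [hJ]
          refine le_trans (lintegral_mono hb) ?_
          rw [lintegral_indicator_const (measurableSet_spanningSets μ₁ n)]
        refine ne_top_of_le_ne_top ?_ this
        exact (ENNReal.mul_lt_top
          (ENNReal.rpow_lt_top_of_nonneg hp0.le (by simp))
          (measure_spanningSets_lt_top μ₁ n)).ne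
      set C : ℝ≥0∞ := Bb ^ ((γ' : ℝ) / gR) * Ab ^ (1 / (p * gR)) with hC
      have chain : ∀ n, J n ≤ C * J n ^ (1 / p') := by
        intro n
        have mψ : Measurable fun x => W n x ^ (p - 1) :=
          (ENNReal.continuous_rpow_const.measurable).comp (mW n)
        have mWp : Measurable fun x => W n x ^ p :=
          (ENNReal.continuous_rpow_const.measurable).comp (mW n)
        have hQ : (∫⁻ xs : Fin (γ' + 1) → Ω₁,
            (∏ k, W n (xs k) ^ (p - 1)) * v xs ^ (β : ℝ) ∂(Measure.pi fun _ => μ₁))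
            ≤ Ab ^ (1 / p) * (J n ^ (γ' + 1 : ℕ)) ^ (1 / p') := by
          have mvβ : Measurable fun xs : Fin (γ' + 1) → Ω₁ => v xs ^ (β : ℝ) :=
            (ENNReal.continuous_rpow_const.measurable).comp mv
          have mprodW : Measurable fun xs : Fin (γ' + 1) → Ω₁ =>
              ∏ k, W n (xs k) ^ (p - 1) :=
            Finset.measurable_prod _ fun k _ => mψ.comp (measurable_pi_apply k)
          calc (∫⁻ xs : Fin (γ' + 1) → Ω₁,
              (∏ k, W n (xs k) ^ (p - 1)) * v xs ^ (β : ℝ) ∂(Measure.pi fun _ => μ₁))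
              = ∫⁻ a, ((fun xs : Fin (γ' + 1) → Ω₁ => v xs ^ (β : ℝ))
                  * (fun xs : Fin (γ' + 1) → Ω₁ => ∏ k, W n (xs k) ^ (p - 1))) a
                  ∂(Measure.pi fun _ => μ₁) :=
                lintegral_congr fun xs => mul_comm _ _
            _ ≤ (∫⁻ xs : Fin (γ' + 1) → Ω₁, (v xs ^ (β : ℝ)) ^ p ∂(Measure.pi fun _ => μ₁))
                  ^ (1 / p)
                * (∫⁻ xs : Fin (γ' + 1) → Ω₁, (∏ k, W n (xs k) ^ (p - 1)) ^ p'
                  ∂(Measure.pi fun _ => μ₁)) ^ (1 / p') :=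
                ENNReal.lintegral_mul_le_Lp_mul_Lq _ hconj2 mvβ.aemeasurable
                  mprodW.aemeasurable
            _ = Ab ^ (1 / p) * (J n ^ (γ' + 1 : ℕ)) ^ (1 / p') := by
                congr 2
                · simp only [hAb]
                  refine lintegral_congr fun xs => ?_
                  rw [← ENNReal.rpow_mul]
                  congr 1
                  rw [hp]
                  field_simp
                · calc (∫⁻ xs : Fin (γ' + 1) → Ω₁, (∏ k, W n (xs k) ^ (p - 1)) ^ p'
                      ∂(Measure.pi fun _ => μ₁))
                      = ∫⁻ xs : Fin (γ' + 1) → Ω₁, ∏ k, W n (xs k) ^ p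
                        ∂(Measure.pi fun _ => μ₁) := by
                        refine lintegral_congr fun xs => ?_
                        rw [← ENNReal.prod_rpow_of_nonneg hp'0.le]
                        refine Finset.prod_congr rfl fun k _ => ?_
                        rw [← ENNReal.rpow_mul, hpp']
                    _ = J n ^ (γ' + 1 : ℕ) := by
                        rw [hJ]
                        exact lintegral_pi_pow μ₁ mWp (γ' + 1)
        calc J n = ∫⁻ x, W n x ^ p ∂μ₁ := by rw [hJ]
          _ ≤ ∫⁻ x, I x * (W n x ^ (p - 1)) ∂μ₁ := by
              refine lintegral_mono fun x => ?_
              have h1 : W n x ^ p = W n x ^ ((1 : ℝ) + (p - 1)) := by congr 1; ring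
              rw [h1, ENNReal.rpow_add_of_nonneg _ _ zero_le_one (by linarith),
                ENNReal.rpow_one]
              exact mul_le_mul_left (hWleI n x) _
          _ ≤ Bb ^ ((γ' : ℝ) / gR)
                * (∫⁻ xs : Fin (γ' + 1) → Ω₁,
                    (∏ k, W n (xs k) ^ (p - 1)) * v xs ^ (β : ℝ)
                    ∂(Measure.pi fun _ => μ₁)) ^ gR⁻¹ := key _ mψ
          _ ≤ Bb ^ ((γ' : ℝ) / gR)
                * (Ab ^ (1 / p) * (J n ^ (γ' + 1 : ℕ)) ^ (1 / p')) ^ gR⁻¹ :=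
              mul_le_mul_right (ENNReal.rpow_le_rpow hQ (by positivity)) _
          _ = C * J n ^ (1 / p') := by
              have e1 : (Ab ^ (1 / p)) ^ gR⁻¹ = Ab ^ (1 / (p * gR)) := by
                rw [← ENNReal.rpow_mul]
                congr 1
                rw [one_div, one_div, mul_inv]
              have e2 : ((J n ^ (γ' + 1 : ℕ)) ^ (1 / p')) ^ gR⁻¹ = J n ^ (1 / p') := by
                rw [← ENNReal.rpow_natCast (J n) (γ' + 1), hgcast, ← ENNReal.rpow_mul,
                  ← ENNReal.rpow_mul]
                congr 1
                rw [mul_comm (1 / p') gR⁻¹, ← mul_assoc, mul_inv_cancel₀ hg0.ne', one_mul]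
              rw [hC, ENNReal.mul_rpow_of_nonneg _ _ (by positivity), e1, e2, mul_assoc]
      have Jle : ∀ n, J n ≤ C ^ p := by
        intro n
        rcases eq_or_ne (J n) 0 with h0 | h0
        · rw [h0]; exact zero_le
        · have hne0 : J n ^ (1 / p') ≠ 0 := by
            simp only [ne_eq, ENNReal.rpow_eq_zero_iff, not_or]
            constructor
            · rintro ⟨h, -⟩; exact h0 h
            · rintro ⟨h, -⟩; exact Jfin n h
          have hnet : J n ^ (1 / p') ≠ ∞ :=
            ENNReal.rpow_ne_top_of_nonneg (by positivity) (Jfin n)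
          have h1 : J n ^ (1 / p) * J n ^ (1 / p') ≤ C * J n ^ (1 / p') := by
            rw [← ENNReal.rpow_add_of_nonneg _ _ (by positivity) (by positivity), hsum,
              ENNReal.rpow_one]
            exact chain n
          have h2 : J n ^ (1 / p) ≤ C := (ENNReal.mul_le_mul_iff_left hne0 hnet).1 h1
          calc J n = (J n ^ (1 / p)) ^ p := by
                rw [← ENNReal.rpow_mul, one_div, inv_mul_cancel₀ hp0.ne', ENNReal.rpow_one]
            _ ≤ C ^ p := ENNReal.rpow_le_rpow h2 hp0.le
      -- monotone convergence
      have hWmono : ∀ x, Monotone fun n => W n x := by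
        intro x m n hmn
        simp only [hW]
        by_cases hx : x ∈ spanningSets μ₁ m
        · have hx' : x ∈ spanningSets μ₁ n := monotone_spanningSets μ₁ hmn hx
          rw [Set.indicator_of_mem hx, Set.indicator_of_mem hx']
          exact min_le_min le_rfl (by exact_mod_cast hmn)
        · rw [Set.indicator_of_notMem hx]
          exact zero_le
      have hWsup : ∀ x, (⨆ n, W n x) = I x := by
        intro x
        refine le_antisymm (iSup_le fun n => hWleI n x) ?_
        obtain ⟨n₀, hn₀⟩ : ∃ n, x ∈ spanningSets μ₁ n := by
          have : x ∈ ⋃ n, spanningSets μ₁ n := by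
            rw [iUnion_spanningSets]; trivial
          exact Set.mem_iUnion.1 this
        have hle : ∀ n : ℕ, min (I x) (n : ℝ≥0∞) ≤ ⨆ m, W m x := by
          intro n
          refine le_iSup_of_le (max n n₀) ?_
          have hmem : x ∈ spanningSets μ₁ (max n n₀) :=
            monotone_spanningSets μ₁ (le_max_right _ _) hn₀
          simp only [hW]
          rw [Set.indicator_of_mem hmem]
          exact min_le_min le_rfl (by exact_mod_cast le_max_left _ _)
        have hIx : I x ≤ ⨆ n : ℕ, min (I x) (n : ℝ≥0∞) := by
          rcases eq_or_ne (I x) ∞ with h | h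
          · rw [h]
            calc (⊤ : ℝ≥0∞) = ⨆ n : ℕ, (n : ℝ≥0∞) := ENNReal.iSup_natCast.symm
              _ ≤ ⨆ n : ℕ, min (⊤ : ℝ≥0∞) (n : ℝ≥0∞) :=
                iSup_mono fun n => (min_eq_right le_top).ge
          · obtain ⟨n, hn⟩ := ENNReal.exists_nat_gt h
            exact le_iSup_of_le n (le_min le_rfl hn.le)
        exact le_trans hIx (iSup_le hle)
      have Tsup : (∫⁻ x, I x ^ p ∂μ₁) = ⨆ n, J n := by
        have hptw : ∀ x, I x ^ p = ⨆ n, W n x ^ p := by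
          intro x
          rw [← hWsup x]
          exact (ENNReal.orderIsoRpow p hp0).map_iSup _
        rw [lintegral_congr hptw]
        exact lintegral_iSup
          (fun n => (ENNReal.continuous_rpow_const.measurable).comp (mW n))
          (fun m n h x => ENNReal.rpow_le_rpow (hWmono x h) hp0.le)
      have hCp : C ^ p = Ab ^ gR⁻¹ * Bb ^ eB := by
        rw [hC, ENNReal.mul_rpow_of_nonneg _ _ hp0.le, ← ENNReal.rpow_mul, ← ENNReal.rpow_mul,
          mul_comm]
        congr 1
        · congr 1
          rw [hp]
          field_simp
        · congr 1
          rw [heB, hp]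
          push_cast
          field_simp
      rw [Tsup, ← hCp]
      exact iSup_le Jle
  -- assemble
  calc (∫⁻ x, (bipNorm μ₂ μ₃
          (fun y z => (f₁₂ x y : ℝ≥0∞) ^ (((γ' : ℝ))⁻¹) * (f₂₃ y z : ℝ≥0∞)) β γ')
        ^ ((Δ * γ' : ℕ) : ℝ) ∂μ₁)
      = ∫⁻ x, I x ^ p ∂μ₁ := lintegral_congr S1
    _ ≤ Ab ^ gR⁻¹ * Bb ^ eB := Tle
    _ = (bipNorm μ₁ μ₂ (fun x y => (f₁₂ x y : ℝ≥0∞)) (γ' + 1) Δ) ^ (Δ : ℝ)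
        * (bipNorm μ₂ μ₃ (fun y z => (f₂₃ y z : ℝ≥0∞)) β (γ' + 1)) ^ ((Δ * γ' : ℕ) : ℝ) := by
        rw [RHS1, RHS2]
end

section
/- Let H : {0,1} × {0,1} → [0,∞) be symmetric with H(0,0)·H(1,1) ≤ H(0,1)^2 (antiferromagnetic), and let μ_0, μ_1 ≥ 0 be vertex weights. For a finite simple graph G = (V,E), let Z(G) := ∑_{x : V → {0,1}} ∏_{uv∈E} H(x_u,x_v) ∏_{v∈V} μ_{x_v}, and let G × K_2 be the bipartite double cover of G: the graph with vertex set V × {0,1} and an edge between (u,i) and (v,1−i) for every edge uv ∈ E and each i ∈ {0,1}, with vertex weight μ_j at (v,j). Then Z(G)² ≤ Z(G × K_2). -/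
open scoped ENNReal NNReal Classical
open Finset

/-- The partition function of a 2-spin model `(H, μ)` on a finite simple graph `G`:
`Z(G) = ∑_{x : V → {0,1}} ∏_{uv∈E} H(x_u,x_v) ∏_v μ_{x_v}`, where the product over unordered
edges is encoded as the square root of the product over all ordered adjacent pairs. -/
noncomputable def Zspin {V : Type*} [Fintype V] (G : SimpleGraph V)
    (H : Fin 2 → Fin 2 → ℝ≥0) (μ : Fin 2 → ℝ≥0) : ℝ≥0∞ :=
  ∑ x : V → Fin 2,
    (∏ u : V, ∏ v : V, if G.Adj u v then (H (x u) (x v) : ℝ≥0∞) else 1) ^ (2⁻¹ : ℝ) *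
      ∏ v : V, (μ (x v) : ℝ≥0∞)

/-- The bipartite double cover `G × K₂` of a simple graph `G`: vertex set `V × Fin 2`, with
`(u,i)` adjacent to `(v,j)` iff `uv ∈ E(G)` and `i ≠ j`. -/
def doubleCover {V : Type*} (G : SimpleGraph V) : SimpleGraph (V × Fin 2) where
  Adj a b := G.Adj a.1 b.1 ∧ a.2 ≠ b.2
  symm := ⟨fun a b hab => ⟨hab.1.symm, hab.2.symm⟩⟩
  loopless := ⟨fun a ha => ha.2 rfl⟩

lemma fin2_cases (z : Fin 2) : z = 0 ∨ z = 1 := by omega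

lemma fin2_add_self (z : Fin 2) : z + z = 0 := by
  rcases fin2_cases z with h | h <;> subst h <;> rfl

lemma fin2_add_one_add_one (z : Fin 2) : z + 1 + 1 = z := by
  rcases fin2_cases z with h | h <;> subst h <;> rfl

lemma fin2_ne_iff {s t : Fin 2} (h : s ≠ t) : t = s + 1 := by
  rcases fin2_cases s with h1 | h1 <;> rcases fin2_cases t with h2 | h2 <;>
    subst h1 <;> subst h2 <;> first | rfl | simp_all

lemma fin2_eq_one_of_ne_zero {s : Fin 2} (h : s ≠ 0) : s = 1 := by omega

/-- multi-flip invariance from single flips -/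
lemma flips {V : Type*} [Fintype V] [DecidableEq V] (d : V → Fin 2)
    (Ψ : (V → Fin 2) → ℝ≥0∞)
    (hΨ : ∀ x v, d v = 1 → Ψ (Function.update x v (x v + 1)) = Ψ x) :
    ∀ x x' : V → Fin 2, (∀ v, d v ≠ 1 → x v = x' v) → Ψ x = Ψ x' := by
  suffices h : ∀ (n : ℕ) (x x' : V → Fin 2),
      (Finset.univ.filter fun v => x v ≠ x' v).card ≤ n →
      (∀ v, d v ≠ 1 → x v = x' v) → Ψ x = Ψ x' by
    intro x x' hagree
    exact h _ x x' le_rfl hagree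
  intro n
  induction n with
  | zero =>
    intro x x' hcard _
    have hemp : (Finset.univ.filter fun v => x v ≠ x' v) = ∅ :=
      Finset.card_eq_zero.mp (Nat.le_zero.mp hcard)
    have : x = x' := by
      funext v
      by_contra hv
      have : v ∈ (Finset.univ.filter fun v => x v ≠ x' v) := by
        simp [hv]
      simp [hemp] at this
    rw [this]
  | succ n ih =>
    intro x x' hcard hagree
    by_cases hxx : x = x'
    · rw [hxx]
    · obtain ⟨v₀, hv₀⟩ := Function.ne_iff.mp hxx
      have hd : d v₀ = 1 := by
        by_contra hd
        exact hv₀ (hagree v₀ hd)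
      have hx' : x' v₀ = x v₀ + 1 := fin2_ne_iff hv₀
      set x₁ := Function.update x v₀ (x v₀ + 1) with hx₁
      have h1 : Ψ x = Ψ x₁ := (hΨ x v₀ hd).symm
      rw [h1]
      apply ih
      · have hsub : (Finset.univ.filter fun v => x₁ v ≠ x' v) ⊆
            (Finset.univ.filter fun v => x v ≠ x' v).erase v₀ := by
          intro v hv
          simp only [Finset.mem_filter, Finset.mem_univ, true_and] at hv
          have hne : v ≠ v₀ := by
            rintro rfl
            apply hv
            rw [hx₁, Function.update_self, hx']
          rw [Finset.mem_erase]
          refine ⟨hne, ?_⟩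
          simp only [Finset.mem_filter, Finset.mem_univ, true_and]
          rwa [hx₁, Function.update_of_ne hne] at hv
        calc (Finset.univ.filter fun v => x₁ v ≠ x' v).card
            ≤ ((Finset.univ.filter fun v => x v ≠ x' v).erase v₀).card :=
              Finset.card_le_card hsub
          _ = (Finset.univ.filter fun v => x v ≠ x' v).card - 1 :=
              Finset.card_erase_of_mem (by simp [hv₀])
          _ ≤ n := by omega
      · intro v hv
        have hne : v ≠ v₀ := by rintro rfl; exact hv hd
        rw [hx₁, Function.update_of_ne hne]
        exact hagree v hv

/-- Number (Ψ-weighted) of "all-cut" configurations is at most that of "all-mono" ones. -/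
lemma inj_step {V : Type*} [Fintype V] [DecidableEq V] (d : V → Fin 2)
    (F : Finset (V × V)) (hF : ∀ p ∈ F, d p.1 = 1 ∧ d p.2 = 1)
    (Ψ : (V → Fin 2) → ℝ≥0∞)
    (hΨ : ∀ x x' : V → Fin 2, (∀ v, d v ≠ 1 → x v = x' v) → Ψ x = Ψ x') :
    ∑ x ∈ Finset.univ.filter (fun x : V → Fin 2 => ∀ p ∈ F, x p.1 + x p.2 = 1), Ψ x ≤
    ∑ x ∈ Finset.univ.filter (fun x : V → Fin 2 => ∀ p ∈ F, x p.1 + x p.2 = 0), Ψ x := by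
  set Gr : SimpleGraph V := SimpleGraph.fromRel (fun u v => (u, v) ∈ F ∨ (v, u) ∈ F) with hGr
  set Φ : (V → Fin 2) → (V → Fin 2) :=
    fun x v => if d v = 1 then x (Gr.connectedComponentMk v).out else x v with hΦ
  set A := Finset.univ.filter (fun x : V → Fin 2 => ∀ p ∈ F, x p.1 + x p.2 = 1) with hA
  set B := Finset.univ.filter (fun x : V → Fin 2 => ∀ p ∈ F, x p.1 + x p.2 = 0) with hB
  have hΦdef : ∀ x v, Φ x v = if d v = 1 then x (Gr.connectedComponentMk v).out else x v :=
    fun x v => rfl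
  -- key walk lemma
  have key : ∀ x x' : V → Fin 2, (∀ p ∈ F, x p.1 + x p.2 = 1) →
      (∀ p ∈ F, x' p.1 + x' p.2 = 1) → ∀ u v : V, Gr.Reachable u v →
      x u = x' u → x v = x' v := by
    intro x x' hx hx' u v hr
    obtain ⟨w⟩ := hr
    induction w with
    | nil => exact fun h => h
    | cons adj w ih =>
      rename_i a b c
      intro hab
      apply ih
      have hor : (a, b) ∈ F ∨ (b, a) ∈ F := by
        have := adj.2
        tauto
      have hxab : x a + x b = 1 := by
        rcases hor with h | h
        · exact hx _ h
        · rw [add_comm]; exact hx _ h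
      have hx'ab : x' a + x' b = 1 := by
        rcases hor with h | h
        · exact hx' _ h
        · rw [add_comm]; exact hx' _ h
      have : x a + x b = x' a + x' b := hxab.trans hx'ab.symm
      rw [hab] at this
      exact add_left_cancel this
  -- Φ maps A into B
  have himage : ∀ x ∈ A, Φ x ∈ B := by
    intro x hx
    rw [hB, Finset.mem_filter]
    refine ⟨Finset.mem_univ _, ?_⟩
    intro p hp
    have hp1 := (hF p hp).1
    have hp2 := (hF p hp).2
    have hcc : Gr.connectedComponentMk p.1 = Gr.connectedComponentMk p.2 := by
      by_cases hpe : p.1 = p.2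
      · rw [hpe]
      · exact SimpleGraph.ConnectedComponent.sound
          (SimpleGraph.Adj.reachable ⟨hpe, Or.inl (Or.inl (by simpa using hp))⟩)
    have heq : Φ x p.1 = Φ x p.2 := by
      rw [hΦdef, hΦdef, if_pos hp1, if_pos hp2, hcc]
    rw [heq]
    exact fin2_add_self _
  -- Φ is injective on A
  have hinj : ∀ x ∈ A, ∀ x' ∈ A, Φ x = Φ x' → x = x' := by
    intro x hx x' hx' heq
    rw [hA, Finset.mem_filter] at hx hx'
    funext v
    by_cases hd : d v = 1
    · have hroot : x (Gr.connectedComponentMk v).out = x' (Gr.connectedComponentMk v).out := by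
        have h := congrFun heq v
        rwa [hΦdef, hΦdef, if_pos hd, if_pos hd] at h
      have hreach : Gr.Reachable (Gr.connectedComponentMk v).out v := by
        rw [← SimpleGraph.ConnectedComponent.eq]
        exact Quot.out_eq _
      exact key x x' hx.2 hx'.2 _ v hreach hroot
    · have h := congrFun heq v
      rwa [hΦdef, hΦdef, if_neg hd, if_neg hd] at h
  -- assemble
  have hval : ∀ x ∈ A, Ψ x = Ψ (Φ x) := by
    intro x _
    apply hΨ
    intro v hv
    rw [hΦdef, if_neg hv]
  calc ∑ x ∈ A, Ψ x = ∑ x ∈ A, Ψ (Φ x) := Finset.sum_congr rfl hval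
    _ = ∑ x ∈ A.image Φ, Ψ x := (Finset.sum_image hinj).symm
    _ ≤ ∑ x ∈ B, Ψ x := Finset.sum_le_sum_of_subset (by
        intro y hy
        obtain ⟨x, hxA, rfl⟩ := Finset.mem_image.mp hy
        exact himage x hxA)

/-- The core swapping inequality on the "flipped set". -/
lemma star {V : Type*} [Fintype V] [DecidableEq V] (d : V → Fin 2)
    (F : Finset (V × V)) (hF : ∀ p ∈ F, d p.1 = 1 ∧ d p.2 = 1)
    (φ : Fin 2 → ℝ≥0∞) (hφ : φ 0 ≤ φ 1)
    (Ψ : (V → Fin 2) → ℝ≥0∞)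
    (hΨ : ∀ x v, d v = 1 → Ψ (Function.update x v (x v + 1)) = Ψ x) :
    ∑ x : V → Fin 2, (∏ p ∈ F, φ (x p.1 + x p.2)) * Ψ x ≤
    ∑ x : V → Fin 2, (∏ p ∈ F, φ (x p.1 + x p.2 + 1)) * Ψ x := by
  have hΨmulti := flips d Ψ hΨ
  set a := φ 0 with ha
  set c := φ 1 - φ 0 with hc
  have hφ' : ∀ σ : Fin 2, φ σ = c * (if σ = 1 then 1 else 0) + a := by
    intro σ
    rcases fin2_cases σ with h | h <;> subst h
    · simp [ha]
    · simp [hc, ha, tsub_add_cancel_of_le (show φ 0 ≤ φ 1 from hφ)]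
  -- expand both sides
  have expand : ∀ g : (V → Fin 2) → (V × V) → Fin 2,
      ∑ x : V → Fin 2, (∏ p ∈ F, φ (g x p)) * Ψ x =
      ∑ F' ∈ F.powerset, ∑ x : V → Fin 2,
        (c ^ F'.card * (if ∀ p ∈ F', g x p = 1 then 1 else 0) * a ^ (F \ F').card) * Ψ x := by
    intro g
    have hx : ∀ x : V → Fin 2, (∏ p ∈ F, φ (g x p)) * Ψ x =
        ∑ F' ∈ F.powerset,
          (c ^ F'.card * (if ∀ p ∈ F', g x p = 1 then 1 else 0) * a ^ (F \ F').card) * Ψ x := by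
      intro x
      rw [← Finset.sum_mul]
      congr 1
      calc ∏ p ∈ F, φ (g x p)
          = ∏ p ∈ F, (c * (if g x p = 1 then 1 else 0) + a) := by
            exact Finset.prod_congr rfl fun p _ => hφ' (g x p)
        _ = ∑ F' ∈ F.powerset,
              (∏ p ∈ F', c * (if g x p = 1 then 1 else 0)) * ∏ p ∈ F \ F', a :=
            Finset.prod_add _ _ _
        _ = ∑ F' ∈ F.powerset,
              c ^ F'.card * (if ∀ p ∈ F', g x p = 1 then 1 else 0) * a ^ (F \ F').card := by
            apply Finset.sum_congr rfl
            intro F' _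
            rw [Finset.prod_mul_distrib, Finset.prod_const, Finset.prod_const,
              Finset.prod_boole]
            simp
    calc ∑ x : V → Fin 2, (∏ p ∈ F, φ (g x p)) * Ψ x
        = ∑ x : V → Fin 2, ∑ F' ∈ F.powerset,
            (c ^ F'.card * (if ∀ p ∈ F', g x p = 1 then 1 else 0) * a ^ (F \ F').card) * Ψ x :=
          Finset.sum_congr rfl fun x _ => hx x
      _ = _ := Finset.sum_comm
  rw [expand (fun x p => x p.1 + x p.2), expand (fun x p => x p.1 + x p.2 + 1)]
  apply Finset.sum_le_sum
  intro F' hF'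
  have hF'sub : F' ⊆ F := Finset.mem_powerset.mp hF'
  -- rewrite indicator * Ψ sums as sums over filters
  have harr : ∀ (P : (V → Fin 2) → Prop) [DecidablePred P],
      ∑ x : V → Fin 2, (c ^ F'.card * (if P x then 1 else 0) * a ^ (F \ F').card) * Ψ x =
      c ^ F'.card * a ^ (F \ F').card * ∑ x ∈ Finset.univ.filter P, Ψ x := by
    intro P _
    rw [Finset.sum_filter, Finset.mul_sum]
    apply Finset.sum_congr rfl
    intro x _
    by_cases h : P x <;> simp [h] <;> ring
  rw [harr, harr]
  apply mul_le_mul_right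
  have hcond : ∀ x : V → Fin 2, (∀ p ∈ F', x p.1 + x p.2 + 1 = 1) ↔ (∀ p ∈ F', x p.1 + x p.2 = 0) := by
    intro x
    constructor <;> intro h p hp
    · have h2 := h p hp
      have h3 : x p.1 + x p.2 = x p.1 + x p.2 + 1 + 1 := (fin2_add_one_add_one _).symm
      rw [h2] at h3
      exact h3
    · rw [h p hp, zero_add]
  have : Finset.univ.filter (fun x : V → Fin 2 => ∀ p ∈ F', x p.1 + x p.2 + 1 = 1) =
      Finset.univ.filter (fun x : V → Fin 2 => ∀ p ∈ F', x p.1 + x p.2 = 0) := by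
    apply Finset.filter_congr
    intro x _
    exact hcond x
  rw [this]
  exact inj_step d F' (fun p hp => hF p (hF'sub hp)) Ψ
    (flips d Ψ hΨ)

/-- Ordered-pair product of a symmetric edge function equals the square of the
product over edges oriented by a linear order. -/
lemma half_sq {V : Type*} [Fintype V] [LinearOrder V] (G : SimpleGraph V)
    (f : V → V → ℝ≥0∞) (hf : ∀ u v, G.Adj u v → f u v = f v u) :
    (∏ u : V, ∏ v : V, if G.Adj u v then f u v else 1) =
    (∏ p ∈ Finset.univ.filter (fun p : V × V => G.Adj p.1 p.2 ∧ p.1 < p.2), f p.1 p.2) ^ 2 := by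
  classical
  have h2 : ∀ p : V × V, (if G.Adj p.1 p.2 then f p.1 p.2 else 1) =
      (if G.Adj p.1 p.2 ∧ p.1 < p.2 then f p.1 p.2 else 1) *
      (if G.Adj p.1 p.2 ∧ p.2 < p.1 then f p.1 p.2 else 1) := by
    intro p
    by_cases h : G.Adj p.1 p.2
    · rcases lt_trichotomy p.1 p.2 with hlt | heq | hgt
      · simp [h, hlt, not_lt.mpr hlt.le]
      · exact absurd heq h.ne
      · simp [h, hgt, not_lt.mpr hgt.le]
    · simp [h]
  have h3 : (∏ p : V × V, (if G.Adj p.1 p.2 ∧ p.2 < p.1 then f p.1 p.2 else 1)) =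
      ∏ p : V × V, (if G.Adj p.1 p.2 ∧ p.1 < p.2 then f p.1 p.2 else 1) := by
    apply Fintype.prod_equiv (Equiv.prodComm V V)
    intro p
    simp only [Equiv.prodComm_apply, Prod.fst_swap, Prod.snd_swap]
    show (if G.Adj p.1 p.2 ∧ p.2 < p.1 then f p.1 p.2 else 1) =
      (if G.Adj p.2 p.1 ∧ p.2 < p.1 then f p.2 p.1 else 1)
    by_cases h : G.Adj p.1 p.2 ∧ p.2 < p.1
    · rw [if_pos h, if_pos ⟨h.1.symm, h.2⟩, hf _ _ h.1]
    · rw [if_neg h, if_neg (fun hcon => h ⟨hcon.1.symm, hcon.2⟩)]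
  calc (∏ u : V, ∏ v : V, if G.Adj u v then f u v else 1)
      = ∏ p : V × V, (if G.Adj p.1 p.2 then f p.1 p.2 else 1) := by
        rw [← Finset.univ_product_univ, Finset.prod_product]
    _ = ∏ p : V × V, ((if G.Adj p.1 p.2 ∧ p.1 < p.2 then f p.1 p.2 else 1) *
          (if G.Adj p.1 p.2 ∧ p.2 < p.1 then f p.1 p.2 else 1)) :=
        Finset.prod_congr rfl fun p _ => h2 p
    _ = (∏ p : V × V, (if G.Adj p.1 p.2 ∧ p.1 < p.2 then f p.1 p.2 else 1)) *
          ∏ p : V × V, (if G.Adj p.1 p.2 ∧ p.2 < p.1 then f p.1 p.2 else 1) :=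
        Finset.prod_mul_distrib
    _ = (∏ p : V × V, (if G.Adj p.1 p.2 ∧ p.1 < p.2 then f p.1 p.2 else 1)) ^ 2 := by
        rw [h3, sq]
    _ = (∏ p ∈ Finset.univ.filter (fun p : V × V => G.Adj p.1 p.2 ∧ p.1 < p.2), f p.1 p.2) ^ 2 := by
        rw [Finset.prod_filter]

lemma sq_rpow_half (T : ℝ≥0∞) : (T ^ 2) ^ (2⁻¹ : ℝ) = T := by
  rw [← ENNReal.rpow_natCast T 2, ← ENNReal.rpow_mul]
  norm_num

section zspinEq

variable {V : Type*} [Fintype V] [LinearOrder V]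

noncomputable def oEdges (G : SimpleGraph V) : Finset (V × V) :=
  Finset.univ.filter (fun p : V × V => G.Adj p.1 p.2 ∧ p.1 < p.2)

lemma Zspin_eq (G : SimpleGraph V) (H : Fin 2 → Fin 2 → ℝ≥0) (hsymm : ∀ a b, H a b = H b a)
    (μ : Fin 2 → ℝ≥0) :
    Zspin G H μ = ∑ x : V → Fin 2,
      (∏ p ∈ oEdges G, (H (x p.1) (x p.2) : ℝ≥0∞)) * ∏ v : V, (μ (x v) : ℝ≥0∞) := by
  unfold Zspin
  refine Finset.sum_congr (by congr!) fun x _ => ?_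
  congr 1
  have hf : ∀ u v : V, G.Adj u v →
      (fun u v => (H (x u) (x v) : ℝ≥0∞)) u v = (fun u v => (H (x u) (x v) : ℝ≥0∞)) v u := by
    intro u v _
    show (H (x u) (x v) : ℝ≥0∞) = (H (x v) (x u) : ℝ≥0∞)
    rw [hsymm (x u) (x v)]
  rw [half_sq G (fun u v => (H (x u) (x v) : ℝ≥0∞)) hf, sq_rpow_half]
  rfl

end zspinEq

def pairEquiv (V : Type*) : ((V → Fin 2) × (V → Fin 2)) ≃ ((V × Fin 2) → Fin 2) where
  toFun p w := if w.2 = 0 then p.1 w.1 else p.2 w.1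
  invFun z := (fun v => z (v, 0), fun v => z (v, 1))
  left_inv p := by
    ext v <;> simp
  right_inv z := by
    funext w
    rcases w with ⟨v, i⟩
    rcases fin2_cases i with h | h <;> subst h <;> simp

@[simp] lemma pairEquiv_zero {V : Type*} (p : (V → Fin 2) × (V → Fin 2)) (v : V) :
    pairEquiv V p (v, 0) = p.1 v := rfl

@[simp] lemma pairEquiv_one {V : Type*} (p : (V → Fin 2) × (V → Fin 2)) (v : V) :
    pairEquiv V p (v, 1) = p.2 v := by
  show (if (1 : Fin 2) = 0 then p.1 v else p.2 v) = p.2 v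
  norm_num

lemma dc_adj {V : Type*} (G : SimpleGraph V) (a b : V × Fin 2) :
    (doubleCover G).Adj a b ↔ G.Adj a.1 b.1 ∧ a.2 ≠ b.2 := Iff.rfl

lemma dc_inner_prod {V : Type*} [Fintype V] (G : SimpleGraph V)
    (H : Fin 2 → Fin 2 → ℝ≥0) (x y : V → Fin 2) :
    (∏ u : V × Fin 2, ∏ v : V × Fin 2,
        if (doubleCover G).Adj u v then (H ((pairEquiv V (x, y)) u) ((pairEquiv V (x, y)) v) : ℝ≥0∞) else 1) =
    ∏ u : V, ∏ v : V, if G.Adj u v then ((H (x u) (y v) : ℝ≥0∞) * (H (y u) (x v) : ℝ≥0∞)) else 1 := by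
  set z := pairEquiv V (x, y) with hz
  calc (∏ u : V × Fin 2, ∏ v : V × Fin 2,
          if (doubleCover G).Adj u v then (H (z u) (z v) : ℝ≥0∞) else 1)
      = ∏ u : V, ∏ i : Fin 2, ∏ v : V, ∏ j : Fin 2,
          (if (doubleCover G).Adj (u, i) (v, j) then (H (z (u, i)) (z (v, j)) : ℝ≥0∞) else 1) := by
        rw [Fintype.prod_prod_type]
        apply Finset.prod_congr rfl; intro u _
        apply Finset.prod_congr rfl; intro i _
        rw [Fintype.prod_prod_type]
    _ = ∏ u : V, ∏ v : V, ∏ i : Fin 2, ∏ j : Fin 2,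
          (if (doubleCover G).Adj (u, i) (v, j) then (H (z (u, i)) (z (v, j)) : ℝ≥0∞) else 1) := by
        apply Finset.prod_congr rfl; intro u _
        exact Finset.prod_comm
    _ = ∏ u : V, ∏ v : V, if G.Adj u v then ((H (x u) (y v) : ℝ≥0∞) * (H (y u) (x v) : ℝ≥0∞)) else 1 := by
        apply Finset.prod_congr rfl; intro u _
        apply Finset.prod_congr rfl; intro v _
        rw [Fin.prod_univ_two, Fin.prod_univ_two, Fin.prod_univ_two]
        simp only [dc_adj]
        norm_num
        by_cases h : G.Adj u v
        · simp [h, hz]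
        · simp [h]

lemma Zspin_dc_eq {V : Type*} [Fintype V] [LinearOrder V] (G : SimpleGraph V)
    (H : Fin 2 → Fin 2 → ℝ≥0) (hsymm : ∀ a b, H a b = H b a) (μ : Fin 2 → ℝ≥0) :
    Zspin (doubleCover G) H μ = ∑ x : V → Fin 2, ∑ y : V → Fin 2,
      (∏ p ∈ oEdges G, (H (x p.1) (y p.2) : ℝ≥0∞) * (H (y p.1) (x p.2) : ℝ≥0∞)) *
      ((∏ v : V, (μ (x v) : ℝ≥0∞)) * ∏ v : V, (μ (y v) : ℝ≥0∞)) := by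
  unfold Zspin
  trans (∑ q : (V → Fin 2) × (V → Fin 2),
      ((∏ u : V × Fin 2, ∏ v : V × Fin 2,
        if (doubleCover G).Adj u v then (H ((pairEquiv V q) u) ((pairEquiv V q) v) : ℝ≥0∞) else 1) ^ (2⁻¹ : ℝ) *
        ∏ w : V × Fin 2, (μ ((pairEquiv V q) w) : ℝ≥0∞)))
  · apply Finset.sum_equiv (pairEquiv V).symm (by simp)
    intro z _
    rw [Equiv.apply_symm_apply]
  rw [Fintype.sum_prod_type]
  apply Finset.sum_congr (by congr!)
  intro x _
  apply Finset.sum_congr (by congr!)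
  intro y _
  have hmu : (∏ w : V × Fin 2, (μ (pairEquiv V (x, y) w) : ℝ≥0∞)) =
      (∏ v : V, (μ (x v) : ℝ≥0∞)) * ∏ v : V, (μ (y v) : ℝ≥0∞) := by
    rw [Fintype.prod_prod_type, ← Finset.prod_mul_distrib]
    apply Finset.prod_congr rfl
    intro v _
    rw [Fin.prod_univ_two]
    simp
  have hf : ∀ u v : V, G.Adj u v →
      (fun u v => (H (x u) (y v) : ℝ≥0∞) * (H (y u) (x v) : ℝ≥0∞)) u v =
      (fun u v => (H (x u) (y v) : ℝ≥0∞) * (H (y u) (x v) : ℝ≥0∞)) v u := by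
    intro u v _
    show (H (x u) (y v) : ℝ≥0∞) * (H (y u) (x v) : ℝ≥0∞) =
      (H (x v) (y u) : ℝ≥0∞) * (H (y v) (x u) : ℝ≥0∞)
    rw [hsymm (x u) (y v), hsymm (y u) (x v), mul_comm]
  rw [dc_inner_prod G H x y, half_sq G _ hf, sq_rpow_half, hmu]
  rfl

lemma key_d {V : Type*} [Fintype V] [LinearOrder V] (G : SimpleGraph V)
    (H : Fin 2 → Fin 2 → ℝ≥0) (hsymm : ∀ a b, H a b = H b a)
    (hanti : H 0 0 * H 1 1 ≤ H 0 1 ^ 2) (μ : Fin 2 → ℝ≥0) (d : V → Fin 2) :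
    ∑ x : V → Fin 2,
      (∏ p ∈ oEdges G, (H (x p.1) (x p.2) : ℝ≥0∞) * (H (x p.1 + d p.1) (x p.2 + d p.2) : ℝ≥0∞)) *
        ∏ v : V, ((μ (x v) : ℝ≥0∞) * (μ (x v + d v) : ℝ≥0∞)) ≤
    ∑ x : V → Fin 2,
      (∏ p ∈ oEdges G, (H (x p.1) (x p.2 + d p.2) : ℝ≥0∞) * (H (x p.1 + d p.1) (x p.2) : ℝ≥0∞)) *
        ∏ v : V, ((μ (x v) : ℝ≥0∞) * (μ (x v + d v) : ℝ≥0∞)) := by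
  classical
  set O := oEdges G with hO
  set P : V × V → Prop := fun p => d p.1 = 1 ∧ d p.2 = 1 with hP
  set F := O.filter P with hFdef
  set O₀ := O.filter (fun p => ¬ P p) with hO₀
  set φ : Fin 2 → ℝ≥0∞ :=
    fun σ => if σ = 0 then (H 0 0 : ℝ≥0∞) * (H 1 1 : ℝ≥0∞) else (H 0 1 : ℝ≥0∞) * (H 1 0 : ℝ≥0∞)
    with hφdef
  set Ψ : (V → Fin 2) → ℝ≥0∞ := fun x =>
    (∏ p ∈ O₀, (H (x p.1) (x p.2) : ℝ≥0∞) * (H (x p.1 + d p.1) (x p.2 + d p.2) : ℝ≥0∞)) *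
      ∏ v : V, ((μ (x v) : ℝ≥0∞) * (μ (x v + d v) : ℝ≥0∞)) with hΨdef
  -- pointwise Fin 2 computations
  have L1 : ∀ s t : Fin 2, (H s t : ℝ≥0∞) * (H (s + 1) (t + 1) : ℝ≥0∞) = φ (s + t) := by
    intro s t
    rcases fin2_cases s with hs | hs <;> rcases fin2_cases t with ht | ht <;>
      subst hs <;> subst ht <;> simp [hφdef, hsymm 1 0, mul_comm]
  have L2 : ∀ s t : Fin 2, (H s (t + 1) : ℝ≥0∞) * (H (s + 1) t : ℝ≥0∞) = φ (s + t + 1) := by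
    intro s t
    rcases fin2_cases s with hs | hs <;> rcases fin2_cases t with ht | ht <;>
      subst hs <;> subst ht <;> simp [hφdef, hsymm 1 0, mul_comm]
  have L3 : ∀ (s t ds dt : Fin 2), ¬(ds = 1 ∧ dt = 1) →
      (H s (t + dt) : ℝ≥0∞) * (H (s + ds) t : ℝ≥0∞) =
      (H s t : ℝ≥0∞) * (H (s + ds) (t + dt) : ℝ≥0∞) := by
    intro s t ds dt hnot
    rcases fin2_cases ds with h1 | h1 <;> rcases fin2_cases dt with h2 | h2 <;>
      subst h1 <;> subst h2 <;> simp [mul_comm] at hnot ⊢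
  have hφ01 : φ 0 ≤ φ 1 := by
    simp only [hφdef, if_pos rfl, if_neg one_ne_zero]
    rw [← ENNReal.coe_mul, ← ENNReal.coe_mul]
    apply ENNReal.coe_le_coe.mpr
    rw [hsymm 1 0]
    calc H 0 0 * H 1 1 ≤ H 0 1 ^ 2 := hanti
      _ = H 0 1 * H 0 1 := sq (H 0 1) ▸ rfl
  -- flip invariance of Ψ
  have hΨflip : ∀ (x : V → Fin 2) (v₀ : V), d v₀ = 1 →
      Ψ (Function.update x v₀ (x v₀ + 1)) = Ψ x := by
    intro x v₀ hd
    simp only [hΨdef]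
    set x' := Function.update x v₀ (x v₀ + 1) with hx'
    have hx'v₀ : x' v₀ = x v₀ + 1 := Function.update_self _ _ _
    have hx'ne : ∀ v, v ≠ v₀ → x' v = x v := fun v hv => Function.update_of_ne hv _ _
    congr 1
    · apply Finset.prod_congr rfl
      intro p hp
      have hnP : ¬ P p := (Finset.mem_filter.mp hp).2
      by_cases h1 : p.1 = v₀ <;> by_cases h2 : p.2 = v₀
      · exfalso; exact hnP ⟨h1 ▸ hd, h2 ▸ hd⟩
      · -- p.1 = v₀, p.2 ≠ v₀ : d p.1 = 1 so d p.2 = 0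
        have hdp1 : d p.1 = 1 := h1 ▸ hd
        have hdp2 : d p.2 = 0 := by
          by_contra hcon
          exact hnP ⟨hdp1, fin2_eq_one_of_ne_zero hcon⟩
        rw [h1, hx'v₀, hx'ne _ h2, hdp2, hd]
        rw [fin2_add_one_add_one, mul_comm]
        simp only [add_zero]
      · -- p.2 = v₀, p.1 ≠ v₀
        have hdp2 : d p.2 = 1 := h2 ▸ hd
        have hdp1 : d p.1 = 0 := by
          by_contra hcon
          exact hnP ⟨fin2_eq_one_of_ne_zero hcon, hdp2⟩
        rw [h2, hx'v₀, hx'ne _ h1, hdp1, hd]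
        rw [fin2_add_one_add_one, mul_comm]
        simp only [add_zero]
      · rw [hx'ne _ h1, hx'ne _ h2]
    · apply Finset.prod_congr rfl
      intro v _
      by_cases hv : v = v₀
      · subst hv
        rw [hx'v₀, hd, fin2_add_one_add_one, mul_comm]
      · rw [hx'ne _ hv]
  -- rewrite both sides and apply star
  have hFprop : ∀ p ∈ F, d p.1 = 1 ∧ d p.2 = 1 := fun p hp => (Finset.mem_filter.mp hp).2
  have lhs_eq : ∀ x : V → Fin 2,
      (∏ p ∈ O, (H (x p.1) (x p.2) : ℝ≥0∞) * (H (x p.1 + d p.1) (x p.2 + d p.2) : ℝ≥0∞)) *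
        ∏ v : V, ((μ (x v) : ℝ≥0∞) * (μ (x v + d v) : ℝ≥0∞)) =
      (∏ p ∈ F, φ (x p.1 + x p.2)) * Ψ x := by
    intro x
    simp only [hΨdef]
    rw [← mul_assoc]
    congr 1
    rw [← Finset.prod_filter_mul_prod_filter_not O P, ← hFdef, ← hO₀]
    congr 1
    apply Finset.prod_congr rfl
    intro p hp
    have h12 := hFprop p hp
    rw [h12.1, h12.2, L1]
  have rhs_eq : ∀ x : V → Fin 2,
      (∏ p ∈ O, (H (x p.1) (x p.2 + d p.2) : ℝ≥0∞) * (H (x p.1 + d p.1) (x p.2) : ℝ≥0∞)) *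
        ∏ v : V, ((μ (x v) : ℝ≥0∞) * (μ (x v + d v) : ℝ≥0∞)) =
      (∏ p ∈ F, φ (x p.1 + x p.2 + 1)) * Ψ x := by
    intro x
    simp only [hΨdef]
    rw [← mul_assoc]
    congr 1
    rw [← Finset.prod_filter_mul_prod_filter_not O P, ← hFdef, ← hO₀]
    congr 1
    · apply Finset.prod_congr rfl
      intro p hp
      have h12 := hFprop p hp
      rw [h12.1, h12.2, L2]
    · apply Finset.prod_congr rfl
      intro p hp
      exact L3 _ _ _ _ (Finset.mem_filter.mp hp).2
  calc ∑ x : V → Fin 2,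
        (∏ p ∈ O, (H (x p.1) (x p.2) : ℝ≥0∞) * (H (x p.1 + d p.1) (x p.2 + d p.2) : ℝ≥0∞)) *
          ∏ v : V, ((μ (x v) : ℝ≥0∞) * (μ (x v + d v) : ℝ≥0∞))
      = ∑ x : V → Fin 2, (∏ p ∈ F, φ (x p.1 + x p.2)) * Ψ x :=
        Finset.sum_congr rfl fun x _ => lhs_eq x
    _ ≤ ∑ x : V → Fin 2, (∏ p ∈ F, φ (x p.1 + x p.2 + 1)) * Ψ x :=
        star d F hFprop φ hφ01 Ψ hΨflip
    _ = ∑ x : V → Fin 2,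
        (∏ p ∈ O, (H (x p.1) (x p.2 + d p.2) : ℝ≥0∞) * (H (x p.1 + d p.1) (x p.2) : ℝ≥0∞)) *
          ∏ v : V, ((μ (x v) : ℝ≥0∞) * (μ (x v + d v) : ℝ≥0∞)) :=
        (Finset.sum_congr rfl fun x _ => (rhs_eq x).symm)

/-- The bipartite swapping trick for antiferromagnetic 2-spin models:
`Z(G)² ≤ Z(G × K₂)`. -/
theorem Zspin_sq_le_doubleCover (H : Fin 2 → Fin 2 → ℝ≥0) (hsymm : ∀ a b, H a b = H b a)
    (hanti : H 0 0 * H 1 1 ≤ H 0 1 ^ 2) (μ : Fin 2 → ℝ≥0)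
    {V : Type*} [Fintype V] (G : SimpleGraph V) :
    Zspin G H μ ^ 2 ≤ Zspin (doubleCover G) H μ := by
  classical
  letI : LinearOrder V := LinearOrder.lift' (Fintype.equivFin V) (Equiv.injective _)
  rw [Zspin_eq G H hsymm μ, Zspin_dc_eq G H hsymm μ]
  have hL : (∑ x : V → Fin 2,
        (∏ p ∈ oEdges G, (H (x p.1) (x p.2) : ℝ≥0∞)) * ∏ v : V, (μ (x v) : ℝ≥0∞)) ^ 2 =
      ∑ d : V → Fin 2, ∑ x : V → Fin 2,
        (∏ p ∈ oEdges G, (H (x p.1) (x p.2) : ℝ≥0∞) * (H (x p.1 + d p.1) (x p.2 + d p.2) : ℝ≥0∞)) *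
          ∏ v : V, ((μ (x v) : ℝ≥0∞) * (μ (x v + d v) : ℝ≥0∞)) := by
    rw [sq, Finset.sum_mul_sum]
    refine Eq.trans (Finset.sum_congr rfl fun x _ => ?_) Finset.sum_comm
    refine Eq.trans ?_ (Fintype.sum_equiv (Equiv.addLeft x)
      (fun d => (∏ p ∈ oEdges G, (H (x p.1) (x p.2) : ℝ≥0∞) *
          (H (x p.1 + d p.1) (x p.2 + d p.2) : ℝ≥0∞)) *
          ∏ v : V, ((μ (x v) : ℝ≥0∞) * (μ (x v + d v) : ℝ≥0∞)))
      (fun y => ((∏ p ∈ oEdges G, (H (x p.1) (x p.2) : ℝ≥0∞)) * ∏ v : V, (μ (x v) : ℝ≥0∞)) *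
        ((∏ p ∈ oEdges G, (H (y p.1) (y p.2) : ℝ≥0∞)) * ∏ v : V, (μ (y v) : ℝ≥0∞)))
      (fun d => ?_)).symm
    · rfl
    · show (∏ p ∈ oEdges G, (H (x p.1) (x p.2) : ℝ≥0∞) *
          (H (x p.1 + d p.1) (x p.2 + d p.2) : ℝ≥0∞)) *
          (∏ v : V, ((μ (x v) : ℝ≥0∞) * (μ (x v + d v) : ℝ≥0∞))) =
        ((∏ p ∈ oEdges G, (H (x p.1) (x p.2) : ℝ≥0∞)) * ∏ v : V, (μ (x v) : ℝ≥0∞)) *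
        ((∏ p ∈ oEdges G, (H (x p.1 + d p.1) (x p.2 + d p.2) : ℝ≥0∞)) *
          ∏ v : V, (μ (x v + d v) : ℝ≥0∞))
      rw [Finset.prod_mul_distrib, Finset.prod_mul_distrib]
      ring
  have hR : (∑ x : V → Fin 2, ∑ y : V → Fin 2,
        (∏ p ∈ oEdges G, (H (x p.1) (y p.2) : ℝ≥0∞) * (H (y p.1) (x p.2) : ℝ≥0∞)) *
        ((∏ v : V, (μ (x v) : ℝ≥0∞)) * ∏ v : V, (μ (y v) : ℝ≥0∞))) =
      ∑ d : V → Fin 2, ∑ x : V → Fin 2,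
        (∏ p ∈ oEdges G, (H (x p.1) (x p.2 + d p.2) : ℝ≥0∞) * (H (x p.1 + d p.1) (x p.2) : ℝ≥0∞)) *
          ∏ v : V, ((μ (x v) : ℝ≥0∞) * (μ (x v + d v) : ℝ≥0∞)) := by
    refine Eq.trans (Finset.sum_congr rfl fun x _ => ?_) Finset.sum_comm
    refine Eq.trans ?_ (Fintype.sum_equiv (Equiv.addLeft x)
      (fun d => (∏ p ∈ oEdges G, (H (x p.1) (x p.2 + d p.2) : ℝ≥0∞) *
          (H (x p.1 + d p.1) (x p.2) : ℝ≥0∞)) *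
          ∏ v : V, ((μ (x v) : ℝ≥0∞) * (μ (x v + d v) : ℝ≥0∞)))
      (fun y => (∏ p ∈ oEdges G, (H (x p.1) (y p.2) : ℝ≥0∞) * (H (y p.1) (x p.2) : ℝ≥0∞)) *
        ((∏ v : V, (μ (x v) : ℝ≥0∞)) * ∏ v : V, (μ (y v) : ℝ≥0∞)))
      (fun d => ?_)).symm
    · rfl
    · show (∏ p ∈ oEdges G, (H (x p.1) (x p.2 + d p.2) : ℝ≥0∞) *
          (H (x p.1 + d p.1) (x p.2) : ℝ≥0∞)) *
          (∏ v : V, ((μ (x v) : ℝ≥0∞) * (μ (x v + d v) : ℝ≥0∞))) =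
        (∏ p ∈ oEdges G, (H (x p.1) (x p.2 + d p.2) : ℝ≥0∞) * (H (x p.1 + d p.1) (x p.2) : ℝ≥0∞)) *
        ((∏ v : V, (μ (x v) : ℝ≥0∞)) * ∏ v : V, (μ (x v + d v) : ℝ≥0∞))
      rw [Finset.prod_mul_distrib]
      rw [Finset.prod_mul_distrib]
  rw [hL, hR]
  exact Finset.sum_le_sum fun d _ => key_d G H hsymm hanti μ d
end

section
/- Let n ≥ 1 and k ≥ 1 be integers and let α_1, …, α_n ≥ 0 be reals. For a tuple x ∈ {1,…,n}^k, let |x| denote the number of distinct entries of x. For 1 ≤ ℓ ≤ min(n,k), define m_ℓ as the average of ∏_{i=1}^k α_{x_i} over all x ∈ {1,…,n}^k with |x| = ℓ. Then m_1 ≥ m_2 ≥ ⋯ ≥ m_{min(n,k)}. -/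
open Finset

/-- weighted sum over tuples with image exactly `T` -/
noncomputable def WS {n : ℕ} (α : Fin n → ℝ) (k : ℕ) (T : Finset (Fin n)) : ℝ :=
  ∑ x ∈ Finset.univ.filter (fun x : Fin k → Fin n => Finset.univ.image x = T), ∏ i, α (x i)

/-- number of surjections `Fin k → Fin r` -/
def CS (k r : ℕ) : ℕ :=
  (Finset.univ.filter (fun x : Fin k → Fin r =>
      Finset.univ.image x = (Finset.univ : Finset (Fin r)))).card

lemma WS_nonneg {n : ℕ} {α : Fin n → ℝ} (hα : ∀ i, 0 ≤ α i) (k : ℕ) (T : Finset (Fin n)) :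
    0 ≤ WS α k T :=
  Finset.sum_nonneg fun _ _ => Finset.prod_nonneg fun i _ => hα _

lemma image_cons {n k : ℕ} (v : Fin n) (y : Fin k → Fin n) :
    Finset.univ.image (Fin.cons v y : Fin (k+1) → Fin n) = insert v (Finset.univ.image y) := by
  ext w
  simp only [Finset.mem_image, Finset.mem_insert, Finset.mem_univ, true_and]
  constructor
  · rintro ⟨i, rfl⟩
    induction i using Fin.cases with
    | zero => exact Or.inl rfl
    | succ j => exact Or.inr ⟨j, rfl⟩
  · rintro (rfl | ⟨i, rfl⟩)
    · exact ⟨0, rfl⟩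
    · exact ⟨i.succ, rfl⟩

lemma insert_eq_iff' {n : ℕ} {v : Fin n} {I T : Finset (Fin n)} :
    insert v I = T ↔ v ∈ T ∧ (I = T ∨ I = T.erase v) := by
  constructor
  · rintro rfl
    refine ⟨Finset.mem_insert_self _ _, ?_⟩
    by_cases hv : v ∈ I
    · left; rw [Finset.insert_eq_self.2 hv]
    · right
      rw [Finset.erase_insert hv]
  · rintro ⟨hvT, rfl | rfl⟩
    · exact Finset.insert_eq_self.2 hvT
    · exact Finset.insert_erase hvT

lemma WS_succ {n : ℕ} (α : Fin n → ℝ) (k : ℕ) (T : Finset (Fin n)) :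
    WS α (k+1) T = ∑ v ∈ T, α v * (WS α k T + WS α k (T.erase v)) := by
  have h1 : WS α (k+1) T = ∑ x : Fin (k+1) → Fin n,
      (if Finset.univ.image x = T then ∏ i, α (x i) else 0) := by
    rw [WS, Finset.sum_filter]
  rw [h1, ← Fintype.sum_equiv (Fin.consEquiv (fun _ => Fin n))
    (fun p => if Finset.univ.image (Fin.cons p.1 p.2 : Fin (k+1) → Fin n) = T
        then ∏ i, α ((Fin.cons p.1 p.2 : Fin (k+1) → Fin n) i) else 0)
    (fun x => if Finset.univ.image x = T then ∏ i, α (x i) else 0) (fun ⟨v, y⟩ => rfl)]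
  rw [Fintype.sum_prod_type]
  have key : ∀ v : Fin n, (∑ y : Fin k → Fin n,
      if Finset.univ.image (Fin.cons v y : Fin (k+1) → Fin n) = T
        then ∏ i, α ((Fin.cons v y : Fin (k+1) → Fin n) i) else 0)
      = if v ∈ T then α v * (WS α k T + WS α k (T.erase v)) else 0 := by
    intro v
    have hprod : ∀ y : Fin k → Fin n,
        (∏ i, α ((Fin.cons v y : Fin (k+1) → Fin n) i)) = α v * ∏ i, α (y i) := by
      intro y
      rw [Fin.prod_univ_succ]
      simp [Fin.cons_succ, Fin.cons_zero]
    by_cases hv : v ∈ T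
    · have hne : T.erase v ≠ T := by
        intro h
        exact (Finset.notMem_erase v T) (h.symm ▸ hv)
      have step : ∀ y : Fin k → Fin n,
          (if Finset.univ.image (Fin.cons v y : Fin (k+1) → Fin n) = T
            then ∏ i, α ((Fin.cons v y : Fin (k+1) → Fin n) i) else 0)
          = (if Finset.univ.image y = T then α v * ∏ i, α (y i) else 0)
            + (if Finset.univ.image y = T.erase v then α v * ∏ i, α (y i) else 0) := by
        intro y
        rw [image_cons, hprod]
        by_cases h1 : Finset.univ.image y = T
        · rw [if_pos h1, if_pos, if_neg (h1.symm ▸ hne ∘ Eq.symm), add_zero]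
          rw [insert_eq_iff']
          exact ⟨hv, Or.inl h1⟩
        · by_cases h2 : Finset.univ.image y = T.erase v
          · rw [if_pos, if_neg h1, if_pos h2, zero_add]
            rw [insert_eq_iff']
            exact ⟨hv, Or.inr h2⟩
          · rw [if_neg, if_neg h1, if_neg h2, add_zero]
            rw [insert_eq_iff']
            rintro ⟨-, h | h⟩
            · exact h1 h
            · exact h2 h
      rw [if_pos hv]
      calc (∑ y : Fin k → Fin n, _) = _ := Finset.sum_congr rfl (fun y _ => step y)
        _ = (∑ y : Fin k → Fin n, if Finset.univ.image y = T then α v * ∏ i, α (y i) else 0)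
            + (∑ y : Fin k → Fin n,
              if Finset.univ.image y = T.erase v then α v * ∏ i, α (y i) else 0) :=
          Finset.sum_add_distrib
        _ = α v * WS α k T + α v * WS α k (T.erase v) := by
          rw [WS, WS, Finset.sum_filter, Finset.sum_filter, Finset.mul_sum, Finset.mul_sum]
          congr 1 <;> exact Finset.sum_congr rfl (fun y _ => by split_ifs <;> simp)
        _ = α v * (WS α k T + WS α k (T.erase v)) := by ring
    · rw [if_neg hv]
      refine Finset.sum_eq_zero fun y _ => ?_
      rw [if_neg]
      rw [image_cons, insert_eq_iff']
      rintro ⟨h, -⟩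
      exact hv h
  calc (∑ v : Fin n, _) = ∑ v : Fin n,
        (if v ∈ T then α v * (WS α k T + WS α k (T.erase v)) else 0) :=
      Finset.sum_congr rfl (fun v _ => key v)
    _ = ∑ v ∈ T, α v * (WS α k T + WS α k (T.erase v)) := by
      rw [Finset.sum_ite_mem, Finset.univ_inter]

lemma mem_of_image_eq {n k : ℕ} {x : Fin k → Fin n} {S : Finset (Fin n)}
    (h : Finset.univ.image x = S) (c : Fin k) : x c ∈ S :=
  h ▸ Finset.mem_image_of_mem x (Finset.mem_univ c)

lemma card_filter_image {n k : ℕ} (S : Finset (Fin n)) :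
    (Finset.univ.filter (fun x : Fin k → Fin n => Finset.univ.image x = S)).card
      = CS k S.card := by
  classical
  set e := S.equivFin with he
  refine Finset.card_bij (fun x hx => fun c => e ⟨x c,
    mem_of_image_eq (Finset.mem_filter.1 hx).2 c⟩) ?_ ?_ ?_
  · intro x hx
    rw [Finset.mem_filter]
    refine ⟨Finset.mem_univ _, ?_⟩
    ext j
    simp only [Finset.mem_univ, iff_true, Finset.mem_image, true_and]
    obtain ⟨c, hc⟩ : ∃ c, x c = (e.symm j).1 := by
      have : (e.symm j).1 ∈ Finset.univ.image x := by
        rw [(Finset.mem_filter.1 hx).2]; exact (e.symm j).2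
      obtain ⟨c, -, hc⟩ := Finset.mem_image.1 this
      exact ⟨c, hc⟩
    refine ⟨c, ?_⟩
    have : (⟨x c, mem_of_image_eq (Finset.mem_filter.1 hx).2 c⟩ : {a // a ∈ S})
        = e.symm j := Subtype.ext hc
    rw [this, Equiv.apply_symm_apply]
  · intro x hx y hy hxy
    funext c
    have := congrFun hxy c
    have := e.injective this
    exact congrArg Subtype.val this
  · intro z hz
    refine ⟨fun c => (e.symm (z c)).1, ?_, ?_⟩
    · rw [Finset.mem_filter]
      refine ⟨Finset.mem_univ _, ?_⟩
      apply Finset.Subset.antisymm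
      · intro a ha
        obtain ⟨c, -, hc⟩ := Finset.mem_image.1 ha
        exact hc ▸ (e.symm (z c)).2
      · intro a ha
        have : e ⟨a, ha⟩ ∈ Finset.univ.image z := by
          rw [(Finset.mem_filter.1 hz).2]; exact Finset.mem_univ _
        obtain ⟨c, -, hc⟩ := Finset.mem_image.1 this
        refine Finset.mem_image.2 ⟨c, Finset.mem_univ _, ?_⟩
        have : e.symm (z c) = ⟨a, ha⟩ := by rw [hc, Equiv.symm_apply_apply]
        rw [this]
    · funext c
      simp

lemma WS_one {n k : ℕ} (S : Finset (Fin n)) :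
    WS (fun _ => (1:ℝ)) k S = CS k S.card := by
  rw [WS, ← card_filter_image S]
  simp

lemma filter_image_eq_empty {n k : ℕ} {S : Finset (Fin n)} (h : k < S.card) :
    (Finset.univ.filter (fun x : Fin k → Fin n => Finset.univ.image x = S)) = ∅ := by
  refine Finset.filter_eq_empty_iff.2 fun {x} _ hx => ?_
  have h1 : (Finset.univ.image x).card ≤ k := by
    calc (Finset.univ.image x).card ≤ (Finset.univ : Finset (Fin k)).card :=
      Finset.card_image_le
    _ = k := by simp
  rw [hx] at h1
  omega

lemma WS_eq_zero {n k : ℕ} {α : Fin n → ℝ} {S : Finset (Fin n)} (h : k < S.card) :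
    WS α k S = 0 := by
  rw [WS, filter_image_eq_empty h, Finset.sum_empty]

lemma CS_eq_zero {k r : ℕ} (h : k < r) : CS k r = 0 := by
  rw [CS]
  have := filter_image_eq_empty (n := r) (k := k) (S := Finset.univ) (by simpa using h)
  rw [this, Finset.card_empty]

lemma CS_pos {k r : ℕ} (h1 : 1 ≤ r) (h2 : r ≤ k) : 0 < CS k r := by
  rw [CS, Finset.card_pos]
  refine ⟨fun c => ⟨min c (r-1), by omega⟩, ?_⟩
  rw [Finset.mem_filter]
  refine ⟨Finset.mem_univ _, ?_⟩
  ext j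
  simp only [Finset.mem_univ, iff_true, Finset.mem_image, true_and]
  refine ⟨⟨j, by omega⟩, ?_⟩
  have : (j : ℕ) < r := j.2
  exact Fin.ext (by simp; omega)

lemma CS_succ (k r : ℕ) :
    (CS (k+1) r : ℝ) = r * (CS k r + CS k (r-1)) := by
  rcases Nat.eq_zero_or_pos r with rfl | hr
  · have : CS (k+1) 0 = 0 := by
      rw [CS]
      have : (Finset.univ : Finset (Fin (k+1) → Fin 0)) = ∅ := by
        apply Finset.univ_eq_empty
      rw [this, Finset.filter_empty, Finset.card_empty]
    rw [this]
    simp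
  · have hcard : (Finset.univ : Finset (Fin r)).card = r := by simp
    have h0 : (CS (k+1) r : ℝ) = WS (fun _ => (1:ℝ)) (k+1) (Finset.univ : Finset (Fin r)) := by
      rw [WS_one, hcard]
    rw [h0, WS_succ]
    have herase : ∀ v : Fin r, WS (fun _ => (1:ℝ)) k (Finset.univ.erase v) = CS k (r-1) := by
      intro v
      rw [WS_one, Finset.card_erase_of_mem (Finset.mem_univ v), hcard]
    have : ∀ v ∈ (Finset.univ : Finset (Fin r)), (fun _ => (1:ℝ)) v *
        (WS (n := r) (fun _ => (1:ℝ)) k Finset.univ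
          + WS (fun _ => (1:ℝ)) k (Finset.univ.erase v))
        = ((CS k r : ℝ) + CS k (r-1)) := by
      intro v _
      rw [herase, WS_one, hcard, one_mul]
    rw [Finset.sum_congr rfl this, Finset.sum_const, hcard, nsmul_eq_mul]

lemma CS_succ_nat (k r : ℕ) : CS (k+1) r = r * (CS k r + CS k (r-1)) := by
  have := CS_succ k r
  exact_mod_cast this

lemma CS_pos_iff {k r : ℕ} (h1 : 1 ≤ r) : 0 < CS k r ↔ r ≤ k := by
  constructor
  · intro h
    by_contra hc
    rw [CS_eq_zero (by omega)] at h
    omega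
  · exact CS_pos h1

lemma CS_log_concave (K r : ℕ) :
    CS K (r+2) * CS K r ≤ CS K (r+1) * CS K (r+1) := by
  induction K generalizing r with
  | zero =>
    have : CS 0 (r+2) = 0 := CS_eq_zero (by omega)
    rw [this, zero_mul]
    exact Nat.zero_le _
  | succ K ih =>
    rcases Nat.eq_zero_or_pos r with rfl | hr
    · have : CS (K+1) 0 = 0 := by rw [CS_succ_nat]; simp
      rw [this, Nat.mul_zero]
      exact Nat.zero_le _
    obtain ⟨s, rfl⟩ : ∃ s, r = s + 1 := ⟨r - 1, by omega⟩
    set A2 := CS K (s+3) with hA2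
    set A1 := CS K (s+2) with hA1
    set A0 := CS K (s+1) with hA0
    set Am := CS K s with hAm
    have e1 : CS (K+1) (s+3) = (s+3) * (A2 + A1) := by
      rw [CS_succ_nat]; rfl
    have e2 : CS (K+1) (s+1) = (s+1) * (A0 + Am) := by
      rw [CS_succ_nat]; rfl
    have e3 : CS (K+1) (s+2) = (s+2) * (A1 + A0) := by
      rw [CS_succ_nat]; rfl
    have ih1 : A2 * A0 ≤ A1 * A1 := ih (s+1)
    have ih2 : A1 * Am ≤ A0 * A0 := ih s
    have key : A2 * Am ≤ A1 * A0 := by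
      rcases Nat.eq_zero_or_pos A1 with h1 | h1
      · have : K < s + 2 := by
          by_contra hc
          have := CS_pos (k := K) (r := s+2) (by omega) (by omega)
          omega
        have : A2 = 0 := CS_eq_zero (by omega)
        rw [this, zero_mul]
        exact Nat.zero_le _
      rcases Nat.eq_zero_or_pos A0 with h0 | h0
      · have : K < s + 1 := by
          by_contra hc
          have := CS_pos (k := K) (r := s+1) (by omega) (by omega)
          omega
        have : A2 = 0 := CS_eq_zero (by omega)
        rw [this, zero_mul]
        exact Nat.zero_le _
      have hmul : (A2 * Am) * (A1 * A0) ≤ (A1 * A0) * (A1 * A0) := by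
        calc (A2 * Am) * (A1 * A0) = (A2 * A0) * (A1 * Am) := by ring
        _ ≤ (A1 * A1) * (A0 * A0) := Nat.mul_le_mul ih1 ih2
        _ = (A1 * A0) * (A1 * A0) := by ring
      exact Nat.le_of_mul_le_mul_right
        (by calc A2 * Am * (A1 * A0) ≤ (A1 * A0) * (A1 * A0) := hmul
              _ = A1 * A0 * (A1 * A0) := by ring)
        (Nat.mul_pos h1 h0)
    have prodle : (A2 + A1) * (A0 + Am) ≤ (A1 + A0) * (A1 + A0) := by
      nlinarith [ih1, ih2, key]
    have coefle : (s+3) * (s+1) ≤ (s+2) * (s+2) := by nlinarith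
    calc CS (K+1) (s+3) * CS (K+1) (s+1) = ((s+3)*(s+1)) * ((A2+A1)*(A0+Am)) := by
          rw [e1, e2]; ring
      _ ≤ ((s+2)*(s+2)) * ((A1+A0)*(A1+A0)) := Nat.mul_le_mul coefle prodle
      _ = CS (K+1) (s+2) * CS (K+1) (s+2) := by rw [e3]; ring

lemma WS_erase_swap {n k : ℕ} {α : Fin n → ℝ} (hα : ∀ i, 0 ≤ α i) {S : Finset (Fin n)}
    {i j : Fin n} (hiS : i ∈ S) (hjS : j ∈ S) (hij : α i ≤ α j) :
    WS α k (S.erase j) ≤ WS α k (S.erase i) := by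
  rcases eq_or_ne i j with rfl | hne
  · exact le_refl _
  have hmem : ∀ a, Equiv.swap i j a ∈ S ↔ a ∈ S := by
    intro a
    rcases eq_or_ne a i with rfl | hai
    · rw [Equiv.swap_apply_left]; exact ⟨fun _ => hiS, fun _ => hjS⟩
    rcases eq_or_ne a j with rfl | haj
    · rw [Equiv.swap_apply_right]; exact ⟨fun _ => hjS, fun _ => hiS⟩
    · rw [Equiv.swap_apply_of_ne_of_ne hai haj]
  have himg : (S.erase j).image (Equiv.swap i j) = S.erase i := by
    ext a
    simp only [Finset.mem_image, Finset.mem_erase]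
    constructor
    · rintro ⟨b, ⟨hbj, hbS⟩, rfl⟩
      refine ⟨?_, (hmem b).2 hbS⟩
      intro h
      apply hbj
      have h2 : Equiv.swap i j b = Equiv.swap i j j := by
        rw [h, Equiv.swap_apply_right]
      exact (Equiv.swap i j).injective h2
    · rintro ⟨hai', haS⟩
      refine ⟨Equiv.swap i j a, ⟨?_, (hmem a).2 haS⟩, Equiv.swap_apply_self i j a⟩
      intro h
      apply hai'
      have h2 : Equiv.swap i j a = Equiv.swap i j i := by
        rw [h, Equiv.swap_apply_left]
      exact (Equiv.swap i j).injective h2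
  have himage : ∀ x : Fin k → Fin n, Finset.univ.image x = S.erase j →
      Finset.univ.image (fun c => Equiv.swap i j (x c)) = S.erase i := by
    intro x hx
    have : Finset.univ.image (fun c => Equiv.swap i j (x c))
        = (Finset.univ.image x).image (Equiv.swap i j) := by
      rw [Finset.image_image]; rfl
    rw [this, hx, himg]
  have himage' : ∀ y : Fin k → Fin n, Finset.univ.image y = S.erase i →
      Finset.univ.image (fun c => Equiv.swap i j (y c)) = S.erase j := by
    intro y hy
    have h3 : (S.erase i).image (Equiv.swap i j) = S.erase j := by
      have : ((S.erase j).image (Equiv.swap i j)).image (Equiv.swap i j)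
          = S.erase j := by
        rw [Finset.image_image]
        have : (Equiv.swap i j) ∘ (Equiv.swap i j) = id := by
          funext a; exact Equiv.swap_apply_self i j a
        rw [this, Finset.image_id]
      rw [himg] at this
      exact this
    have : Finset.univ.image (fun c => Equiv.swap i j (y c))
        = (Finset.univ.image y).image (Equiv.swap i j) := by
      rw [Finset.image_image]; rfl
    rw [this, hy, h3]
  rw [WS, WS]
  calc ∑ x ∈ Finset.univ.filter
        (fun x : Fin k → Fin n => Finset.univ.image x = S.erase j), ∏ c, α (x c)
      ≤ ∑ x ∈ Finset.univ.filter
        (fun x : Fin k → Fin n => Finset.univ.image x = S.erase j),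
          ∏ c, α (Equiv.swap i j (x c)) := by
        refine Finset.sum_le_sum fun x hx => ?_
        refine Finset.prod_le_prod (fun c _ => hα _) fun c _ => ?_
        have hxc : x c ∈ S.erase j := mem_of_image_eq (Finset.mem_filter.1 hx).2 c
        rcases eq_or_ne (x c) i with hxi | hxi
        · rw [hxi, Equiv.swap_apply_left]; exact hij
        · rw [Equiv.swap_apply_of_ne_of_ne hxi (Finset.mem_erase.1 hxc).1]
    _ = ∑ y ∈ Finset.univ.filter
        (fun y : Fin k → Fin n => Finset.univ.image y = S.erase i), ∏ c, α (y c) := by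
        refine Finset.sum_nbij' (fun x => fun c => Equiv.swap i j (x c))
          (fun y => fun c => Equiv.swap i j (y c)) ?_ ?_ ?_ ?_ ?_
        · intro x hx
          rw [Finset.mem_filter]
          exact ⟨Finset.mem_univ _, himage x (Finset.mem_filter.1 hx).2⟩
        · intro y hy
          rw [Finset.mem_filter]
          exact ⟨Finset.mem_univ _, himage' y (Finset.mem_filter.1 hy).2⟩
        · intro x _
          funext c
          exact Equiv.swap_apply_self i j (x c)
        · intro y _
          funext c
          exact Equiv.swap_apply_self i j (y c)
        · intro x _
          rfl

lemma cheby_WS {n k : ℕ} {α : Fin n → ℝ} (hα : ∀ i, 0 ≤ α i) (S : Finset (Fin n)) :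
    (S.card : ℝ) * ∑ j ∈ S, α j * WS α k (S.erase j)
      ≤ (∑ j ∈ S, α j) * ∑ j ∈ S, WS α k (S.erase j) := by
  have hanti : AntivaryOn (fun j => WS α k (S.erase j)) α ↑S := by
    intro i hi j hj hlt
    exact WS_erase_swap hα hi hj hlt.le
  have h := hanti.card_mul_sum_le_sum_mul_sum
  calc (S.card : ℝ) * ∑ j ∈ S, α j * WS α k (S.erase j)
      = (S.card : ℝ) * ∑ j ∈ S, WS α k (S.erase j) * α j := by
        rw [Finset.sum_congr rfl fun j _ => mul_comm (α j) _]
    _ ≤ (∑ j ∈ S, WS α k (S.erase j)) * ∑ j ∈ S, α j := h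
    _ = (∑ j ∈ S, α j) * ∑ j ∈ S, WS α k (S.erase j) := mul_comm _ _

set_option maxHeartbeats 1000000 in
lemma star_s15 {n : ℕ} {α : Fin n → ℝ} (hα : ∀ i, 0 ≤ α i) :
    ∀ k : ℕ, ∀ S : Finset (Fin n), 1 ≤ S.card →
    (S.card : ℝ) * CS k (S.card - 1) * WS α k S
      ≤ (CS k S.card : ℝ) * ∑ j ∈ S, WS α k (S.erase j) := by
  intro k
  induction k with
  | zero =>
    intro S hS
    rw [WS_eq_zero hS, mul_zero]
    exact mul_nonneg (Nat.cast_nonneg _)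
      (Finset.sum_nonneg fun j _ => WS_nonneg hα _ _)
  | succ k ih =>
    intro S hS
    have hRHSnn : (0:ℝ) ≤ (CS (k+1) S.card : ℝ) * ∑ j ∈ S, WS α (k+1) (S.erase j) :=
      mul_nonneg (Nat.cast_nonneg _) (Finset.sum_nonneg fun j _ => WS_nonneg hα _ _)
    by_cases hm1 : S.card = 1
    · have h0 : CS (k+1) (S.card - 1) = 0 := by
        rw [hm1]
        rw [CS_succ_nat]
        simp
      rw [h0]
      simpa using hRHSnn
    by_cases hkm : k + 1 < S.card
    · rw [WS_eq_zero hkm, mul_zero]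
      exact hRHSnn
    -- main case
    obtain ⟨p, hp⟩ : ∃ p, S.card = p + 2 := ⟨S.card - 2, by omega⟩
    have hmk : p + 2 ≤ k + 1 := by omega
    set m := S.card with hm
    set s' := (CS k m : ℝ) with hs'
    set t' := (CS k (m-1) : ℝ) with ht'
    set u' := (CS k (m-2) : ℝ) with hu'
    set σ := ∑ v ∈ S, α v with hσ
    set a' := WS α k S with ha'
    set B := ∑ j ∈ S, WS α k (S.erase j) with hB
    set Y := ∑ j ∈ S, α j * WS α k (S.erase j) with hY
    set Z := ∑ j ∈ S, ∑ v ∈ S.erase j, α v * WS α k ((S.erase j).erase v) with hZ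
    have hσnn : 0 ≤ σ := Finset.sum_nonneg fun v _ => hα v
    have hann : 0 ≤ a' := WS_nonneg hα _ _
    have hBnn : 0 ≤ B := Finset.sum_nonneg fun j _ => WS_nonneg hα _ _
    have hYnn : 0 ≤ Y :=
      Finset.sum_nonneg fun j _ => mul_nonneg (hα j) (WS_nonneg hα _ _)
    have hZnn : 0 ≤ Z := Finset.sum_nonneg fun j _ =>
      Finset.sum_nonneg fun v _ => mul_nonneg (hα v) (WS_nonneg hα _ _)
    have hs'nn : 0 ≤ s' := Nat.cast_nonneg _
    have hu'nn : 0 ≤ u' := Nat.cast_nonneg _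
    have ht'pos : (0:ℝ) < t' := by
      rw [ht']
      exact_mod_cast CS_pos (r := m-1) (by omega) (by omega)
    -- recursion rewrites
    have R1 : WS α (k+1) S = σ * a' + Y := by
      rw [WS_succ]
      rw [Finset.sum_congr rfl (fun v _ => mul_add (α v) a' (WS α k (S.erase v))),
        Finset.sum_add_distrib, ← Finset.sum_mul]
    have R2 : ∑ j ∈ S, WS α (k+1) (S.erase j) = σ * B - Y + Z := by
      have hj1 : ∀ j ∈ S, WS α (k+1) (S.erase j)
          = (σ - α j) * WS α k (S.erase j)
            + ∑ v ∈ S.erase j, α v * WS α k ((S.erase j).erase v) := by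
        intro j hj
        rw [WS_succ]
        rw [Finset.sum_congr rfl
          (fun v _ => mul_add (α v) (WS α k (S.erase j)) (WS α k ((S.erase j).erase v))),
          Finset.sum_add_distrib, ← Finset.sum_mul]
        congr 2
        rw [hσ, Finset.sum_erase_eq_sub hj]
      rw [Finset.sum_congr rfl hj1, Finset.sum_add_distrib]
      congr 1
      rw [Finset.sum_congr rfl (fun j _ => sub_mul σ (α j) (WS α k (S.erase j))),
        Finset.sum_sub_distrib, ← Finset.mul_sum]
    have R3 : (CS (k+1) m : ℝ) = m * (s' + t') := CS_succ k m
    have R4 : (CS (k+1) (m-1) : ℝ) = (m-1 : ℕ) * (t' + u') := by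
      have := CS_succ k (m-1)
      rw [this]
      congr 2
    -- hypotheses
    have H1 : (m:ℝ) * t' * a' ≤ s' * B := by
      have := ih S hS
      calc (m:ℝ) * t' * a' = (S.card : ℝ) * CS k (S.card - 1) * WS α k S := rfl
        _ ≤ (CS k S.card : ℝ) * ∑ j ∈ S, WS α k (S.erase j) := this
        _ = s' * B := rfl
    have H2 : ((m:ℝ)-1) * u' * Y ≤ t' * Z := by
      have step : ∀ j ∈ S, ((m:ℝ)-1) * u' * (α j * WS α k (S.erase j))
          ≤ t' * (α j * ∑ v ∈ S.erase j, WS α k ((S.erase j).erase v)) := by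
        intro j hj
        have hcard : (S.erase j).card = m - 1 := by
          rw [Finset.card_erase_of_mem hj]
        have := ih (S.erase j) (by omega)
        rw [hcard] at this
        have hmm : ((m:ℝ) - 1) = ((m - 1 : ℕ) : ℝ) := by
          push_cast [Nat.cast_sub (by omega : 1 ≤ m)]; ring
        have hmm2 : m - 1 - 1 = m - 2 := by omega
        rw [hmm2] at this
        calc ((m:ℝ)-1) * u' * (α j * WS α k (S.erase j))
            = α j * (((m-1:ℕ):ℝ) * CS k (m-2) * WS α k (S.erase j)) := by
              rw [← hmm]; ring
          _ ≤ α j * ((CS k (m-1) : ℝ) * ∑ v ∈ S.erase j, WS α k ((S.erase j).erase v)) :=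
              mul_le_mul_of_nonneg_left this (hα j)
          _ = t' * (α j * ∑ v ∈ S.erase j, WS α k ((S.erase j).erase v)) := by ring
      have hsum : ((m:ℝ)-1) * u' * Y ≤ t' * ∑ j ∈ S, α j *
          ∑ v ∈ S.erase j, WS α k ((S.erase j).erase v) := by
        rw [hY, Finset.mul_sum, Finset.mul_sum]
        exact Finset.sum_le_sum step
      have hcond : ∀ x y : Fin n, x ∈ S ∧ y ∈ S.erase x ↔ x ∈ S.erase y ∧ y ∈ S := by
        intro x y
        simp only [Finset.mem_erase]
        constructor
        · rintro ⟨hxS, hyx, hyS⟩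
          exact ⟨⟨fun h => hyx h.symm, hxS⟩, hyS⟩
        · rintro ⟨⟨hxy, hxS⟩, hyS⟩
          exact ⟨hxS, fun h => hxy h.symm, hyS⟩
      have hswap : (∑ j ∈ S, α j * ∑ v ∈ S.erase j, WS α k ((S.erase j).erase v)) = Z := by
        calc (∑ j ∈ S, α j * ∑ v ∈ S.erase j, WS α k ((S.erase j).erase v))
            = ∑ j ∈ S, ∑ v ∈ S.erase j, α j * WS α k ((S.erase j).erase v) :=
              Finset.sum_congr rfl fun j _ => Finset.mul_sum _ _ _
          _ = ∑ v ∈ S, ∑ j ∈ S.erase v, α j * WS α k ((S.erase j).erase v) :=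
              Finset.sum_comm' hcond
          _ = Z := by
              rw [hZ]
              exact Finset.sum_congr rfl fun j hj => Finset.sum_congr rfl fun v hv => by
                rw [Finset.erase_right_comm]
      rw [← hswap]
      exact hsum
    have H3 : (m:ℝ) * Y ≤ σ * B := cheby_WS hα S
    have H4 : ((m:ℝ)-1) * s' * u' ≤ s' * t' + m * t' * t' := by
      have hlc : (CS k (p+2) : ℝ) * CS k p ≤ (CS k (p+1) : ℝ) * CS k (p+1) := by
        exact_mod_cast CS_log_concave k p
      have e1 : m - 1 = p + 1 := by omega
      have e2 : m - 2 = p := by omega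
      have e3 : (CS k m : ℝ) = CS k (p+2) := by rw [hp]
      have hsu : s' * u' ≤ t' * t' := by
        rw [hs', ht', hu', e1, e2, e3]
        exact hlc
      have hm2 : (2:ℝ) ≤ m := by exact_mod_cast (by omega : 2 ≤ m)
      nlinarith [hsu, hs'nn, ht'pos.le, hu'nn]
    -- final algebra
    rw [R1, R2, R3, R4]
    have hmm : ((m - 1 : ℕ) : ℝ) = (m:ℝ) - 1 := by
      push_cast [Nat.cast_sub (by omega : 1 ≤ m)]; ring
    rw [hmm]
    have hm1R : (1:ℝ) ≤ (m:ℝ) := by exact_mod_cast (by omega : 1 ≤ m)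
    have hmposR : (0:ℝ) < (m:ℝ) := lt_of_lt_of_le zero_lt_one hm1R
    have Ctil_nn : (0:ℝ) ≤ s' * t' + (m:ℝ) * t' * t' - ((m:ℝ)-1) * s' * u' := by
      linarith [H4]
    have goal0 : ((m:ℝ)-1) * (t' + u') * (σ * a' + Y) ≤ (s' + t') * (σ * B - Y + Z) := by
      have P1 : ((m:ℝ)-1) * (t' + u') * σ * ((m:ℝ) * t' * a')
          ≤ ((m:ℝ)-1) * (t' + u') * σ * (s' * B) :=
        mul_le_mul_of_nonneg_left H1
          (mul_nonneg (mul_nonneg (by linarith) (by linarith [ht'pos.le, hu'nn])) hσnn)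
      have P2 : (m:ℝ) * (s' + t') * (((m:ℝ)-1) * u' * Y)
          ≤ (m:ℝ) * (s' + t') * (t' * Z) :=
        mul_le_mul_of_nonneg_left H2
          (mul_nonneg hmposR.le (by linarith [ht'pos.le, hs'nn]))
      have P3 : (s' * t' + (m:ℝ) * t' * t' - ((m:ℝ)-1) * s' * u') * ((m:ℝ) * Y)
          ≤ (s' * t' + (m:ℝ) * t' * t' - ((m:ℝ)-1) * s' * u') * (σ * B) :=
        mul_le_mul_of_nonneg_left H3 Ctil_nn
      have hscaled : ((m:ℝ)*t') * (((m:ℝ)-1) * (t' + u') * (σ * a' + Y))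
          ≤ ((m:ℝ)*t') * ((s' + t') * (σ * B - Y + Z)) := by
        nlinarith [P1, P2, P3]
      exact le_of_mul_le_mul_left hscaled (mul_pos hmposR ht'pos)
    have := mul_le_mul_of_nonneg_left goal0 hmposR.le
    calc (m:ℝ) * (((m:ℝ)-1) * (t' + u')) * (σ * a' + Y)
        = (m:ℝ) * (((m:ℝ)-1) * (t' + u') * (σ * a' + Y)) := by ring
      _ ≤ (m:ℝ) * ((s' + t') * (σ * B - Y + Z)) := this
      _ = (m:ℝ) * (s' + t') * (σ * B - Y + Z) := by ring

lemma fiber_decomp {n k : ℕ} (ℓ : ℕ) (f : (Fin k → Fin n) → ℝ) :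
    ∑ x ∈ Finset.univ.filter (fun x : Fin k → Fin n => (Finset.univ.image x).card = ℓ), f x
      = ∑ T ∈ Finset.powersetCard ℓ (Finset.univ : Finset (Fin n)),
          ∑ x ∈ Finset.univ.filter (fun x : Fin k → Fin n => Finset.univ.image x = T), f x := by
  classical
  rw [← Finset.sum_fiberwise_of_maps_to (g := fun x : Fin k → Fin n => Finset.univ.image x)
    (t := Finset.powersetCard ℓ (Finset.univ : Finset (Fin n))) ?_ f]
  · apply Finset.sum_congr rfl
    intro T hT
    have hTcard : T.card = ℓ := (Finset.mem_powersetCard.1 hT).2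
    congr 1
    ext x
    simp only [Finset.mem_filter, Finset.mem_univ, true_and]
    constructor
    · rintro ⟨-, h⟩
      exact h
    · intro h
      exact ⟨h ▸ hTcard, h⟩
  · intro x hx
    rw [Finset.mem_powersetCard]
    exact ⟨Finset.subset_univ _, (Finset.mem_filter.1 hx).2⟩

lemma count_decomp {n k : ℕ} (ℓ : ℕ) :
    (((Finset.univ.filter
        (fun x : Fin k → Fin n => (Finset.univ.image x).card = ℓ)).card : ℝ))
      = (n.choose ℓ : ℝ) * CS k ℓ := by
  classical
  rw [Finset.card_eq_sum_ones]
  push_cast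
  rw [fiber_decomp ℓ (fun _ => (1:ℝ))]
  have : ∀ T ∈ Finset.powersetCard ℓ (Finset.univ : Finset (Fin n)),
      (∑ x ∈ Finset.univ.filter (fun x : Fin k → Fin n => Finset.univ.image x = T),
        (1:ℝ)) = (CS k ℓ : ℝ) := by
    intro T hT
    rw [Finset.sum_const, nsmul_eq_mul, mul_one, card_filter_image T,
      (Finset.mem_powersetCard.1 hT).2]
  rw [Finset.sum_congr rfl this, Finset.sum_const, nsmul_eq_mul,
    Finset.card_powersetCard, Finset.card_univ, Fintype.card_fin]

lemma double_count {n ℓ : ℕ} (f : Finset (Fin n) → ℝ) :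
    ∑ S ∈ Finset.powersetCard (ℓ+1) (Finset.univ : Finset (Fin n)), ∑ j ∈ S, f (S.erase j)
      = ((n - ℓ : ℕ) : ℝ) * ∑ T ∈ Finset.powersetCard ℓ (Finset.univ : Finset (Fin n)), f T := by
  classical
  rw [← Finset.sum_sigma (Finset.powersetCard (ℓ+1) (Finset.univ : Finset (Fin n)))
    (fun S => S) (fun p => f (p.1.erase p.2))]
  rw [show ((n - ℓ : ℕ) : ℝ) * ∑ T ∈ Finset.powersetCard ℓ (Finset.univ : Finset (Fin n)), f T
      = ∑ T ∈ Finset.powersetCard ℓ (Finset.univ : Finset (Fin n)), ∑ _j ∈ Tᶜ, f T by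
    rw [Finset.mul_sum]
    apply Finset.sum_congr rfl
    intro T hT
    rw [Finset.sum_const, nsmul_eq_mul, Finset.card_compl, Fintype.card_fin,
      (Finset.mem_powersetCard.1 hT).2, mul_comm]]
  rw [← Finset.sum_sigma (Finset.powersetCard ℓ (Finset.univ : Finset (Fin n)))
    (fun T => Tᶜ) (fun p => f p.1)]
  refine Finset.sum_nbij' (fun p => ⟨p.1.erase p.2, p.2⟩) (fun p => ⟨insert p.2 p.1, p.2⟩)
    ?_ ?_ ?_ ?_ ?_
  · rintro ⟨S, j⟩ hp
    rw [Finset.mem_sigma] at hp ⊢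
    obtain ⟨hS, hj⟩ := hp
    have hScard : S.card = ℓ + 1 := (Finset.mem_powersetCard.1 hS).2
    constructor
    · rw [Finset.mem_powersetCard]
      exact ⟨Finset.subset_univ _, by rw [Finset.card_erase_of_mem hj, hScard]; omega⟩
    · simp
  · rintro ⟨T, j⟩ hp
    rw [Finset.mem_sigma] at hp ⊢
    obtain ⟨hT, hj⟩ := hp
    have hjT : j ∉ T := by simpa using hj
    constructor
    · rw [Finset.mem_powersetCard]
      exact ⟨Finset.subset_univ _,
        by rw [Finset.card_insert_of_notMem hjT, (Finset.mem_powersetCard.1 hT).2]⟩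
    · exact Finset.mem_insert_self _ _
  · rintro ⟨S, j⟩ hp
    rw [Finset.mem_sigma] at hp
    have := Finset.insert_erase hp.2
    simp only [Sigma.mk.inj_iff]
    exact ⟨this, heq_of_eq rfl⟩
  · rintro ⟨T, j⟩ hp
    rw [Finset.mem_sigma] at hp
    have hjT : j ∉ T := by simpa using hp.2
    have := Finset.erase_insert hjT
    simp only [Sigma.mk.inj_iff]
    exact ⟨this, heq_of_eq rfl⟩
  · rintro ⟨S, j⟩ _
    rfl

/-- Monotonicity of the averaged symmetric polynomials: with
`m_ℓ = average of ∏_i α_{x_i} over tuples x ∈ [n]^k with exactly ℓ distinct entries`,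
one has `m_1 ≥ m_2 ≥ ⋯ ≥ m_{min(n,k)}` (stated as `m_{ℓ+1} ≤ m_ℓ` for consecutive indices). -/
theorem sym_poly_average_antitone (n k : ℕ) (hn : 1 ≤ n) (hk : 1 ≤ k)
    (α : Fin n → ℝ) (hα : ∀ i, 0 ≤ α i) (ℓ : ℕ) (h1 : 1 ≤ ℓ) (h2 : ℓ < min n k) :
    (∑ x ∈ Finset.univ.filter
        (fun x : Fin k → Fin n => (Finset.univ.image x).card = ℓ + 1),
        ∏ i, α (x i)) /
      ((Finset.univ.filter
        (fun x : Fin k → Fin n => (Finset.univ.image x).card = ℓ + 1)).card : ℝ)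
    ≤ (∑ x ∈ Finset.univ.filter
          (fun x : Fin k → Fin n => (Finset.univ.image x).card = ℓ),
          ∏ i, α (x i)) /
        ((Finset.univ.filter
          (fun x : Fin k → Fin n => (Finset.univ.image x).card = ℓ)).card : ℝ) := by
  classical
  obtain ⟨hℓn, hℓk⟩ := Nat.lt_min.1 h2
  have hN1 : (0:ℝ) < ((Finset.univ.filter
      (fun x : Fin k → Fin n => (Finset.univ.image x).card = ℓ + 1)).card : ℝ) := by
    rw [count_decomp (ℓ+1)]
    apply mul_pos
    · exact_mod_cast Nat.choose_pos (by omega : ℓ + 1 ≤ n)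
    · exact_mod_cast CS_pos (by omega : 1 ≤ ℓ + 1) (by omega : ℓ + 1 ≤ k)
  have hN0 : (0:ℝ) < ((Finset.univ.filter
      (fun x : Fin k → Fin n => (Finset.univ.image x).card = ℓ)).card : ℝ) := by
    rw [count_decomp ℓ]
    apply mul_pos
    · exact_mod_cast Nat.choose_pos (by omega : ℓ ≤ n)
    · exact_mod_cast CS_pos (by omega : 1 ≤ ℓ) (by omega : ℓ ≤ k)
  rw [div_le_div_iff₀ hN1 hN0]
  have hA1 : (∑ x ∈ Finset.univ.filter
      (fun x : Fin k → Fin n => (Finset.univ.image x).card = ℓ + 1), ∏ i, α (x i))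
      = ∑ T ∈ Finset.powersetCard (ℓ+1) (Finset.univ : Finset (Fin n)), WS α k T :=
    fiber_decomp (ℓ+1) _
  have hA0 : (∑ x ∈ Finset.univ.filter
      (fun x : Fin k → Fin n => (Finset.univ.image x).card = ℓ), ∏ i, α (x i))
      = ∑ T ∈ Finset.powersetCard ℓ (Finset.univ : Finset (Fin n)), WS α k T :=
    fiber_decomp ℓ _
  rw [hA1, hA0, count_decomp (ℓ+1), count_decomp ℓ]
  set A1 := ∑ T ∈ Finset.powersetCard (ℓ+1) (Finset.univ : Finset (Fin n)), WS α k T with hA1'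
  set A0 := ∑ T ∈ Finset.powersetCard ℓ (Finset.univ : Finset (Fin n)), WS α k T with hA0'
  -- key summed inequality
  have hstar : ((ℓ+1 : ℕ) : ℝ) * (CS k ℓ : ℝ) * A1
      ≤ (CS k (ℓ+1) : ℝ) * (((n - ℓ : ℕ) : ℝ) * A0) := by
    have hterm : ∀ S ∈ Finset.powersetCard (ℓ+1) (Finset.univ : Finset (Fin n)),
        ((ℓ+1 : ℕ) : ℝ) * (CS k ℓ : ℝ) * WS α k S
          ≤ (CS k (ℓ+1) : ℝ) * ∑ j ∈ S, WS α k (S.erase j) := by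
      intro S hS
      have hc : S.card = ℓ + 1 := (Finset.mem_powersetCard.1 hS).2
      have := star_s15 hα k S (by omega)
      rw [hc] at this
      exact this
    calc ((ℓ+1 : ℕ) : ℝ) * (CS k ℓ : ℝ) * A1
        = ∑ S ∈ Finset.powersetCard (ℓ+1) (Finset.univ : Finset (Fin n)),
            ((ℓ+1 : ℕ) : ℝ) * (CS k ℓ : ℝ) * WS α k S := by
          rw [hA1', Finset.mul_sum]
      _ ≤ ∑ S ∈ Finset.powersetCard (ℓ+1) (Finset.univ : Finset (Fin n)),
            (CS k (ℓ+1) : ℝ) * ∑ j ∈ S, WS α k (S.erase j) :=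
          Finset.sum_le_sum hterm
      _ = (CS k (ℓ+1) : ℝ) * ∑ S ∈ Finset.powersetCard (ℓ+1) (Finset.univ : Finset (Fin n)),
            ∑ j ∈ S, WS α k (S.erase j) := by rw [Finset.mul_sum]
      _ = (CS k (ℓ+1) : ℝ) * (((n - ℓ : ℕ) : ℝ) * A0) := by
          rw [double_count (WS α k)]
  have hchoose : ((n.choose (ℓ+1) : ℕ) : ℝ) * ((ℓ+1 : ℕ) : ℝ)
      = ((n.choose ℓ : ℕ) : ℝ) * ((n - ℓ : ℕ) : ℝ) := by
    exact_mod_cast congrArg (Nat.cast (R := ℝ)) (Nat.choose_succ_right_eq n ℓ)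
  have hc0nn : (0:ℝ) ≤ (n.choose ℓ : ℝ) := Nat.cast_nonneg _
  have hLpos : (0:ℝ) < ((ℓ+1 : ℕ) : ℝ) := by exact_mod_cast Nat.succ_pos ℓ
  have step1 : (n.choose ℓ : ℝ) * (((ℓ+1 : ℕ) : ℝ) * (CS k ℓ : ℝ) * A1)
      ≤ (n.choose ℓ : ℝ) * ((CS k (ℓ+1) : ℝ) * (((n - ℓ : ℕ) : ℝ) * A0)) :=
    mul_le_mul_of_nonneg_left hstar hc0nn
  have e1 : (n.choose ℓ : ℝ) * ((CS k (ℓ+1) : ℝ) * (((n - ℓ : ℕ) : ℝ) * A0))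
      = ((ℓ+1 : ℕ) : ℝ) * (A0 * ((n.choose (ℓ+1) : ℝ) * (CS k (ℓ+1) : ℝ))) := by
    have := congrArg (fun z => z * ((CS k (ℓ+1) : ℝ) * A0)) hchoose
    linarith [this]
  have step2 : ((ℓ+1 : ℕ) : ℝ) * (A1 * ((n.choose ℓ : ℝ) * (CS k ℓ : ℝ)))
      ≤ ((ℓ+1 : ℕ) : ℝ) * (A0 * ((n.choose (ℓ+1) : ℝ) * (CS k (ℓ+1) : ℝ))) := by
    calc ((ℓ+1 : ℕ) : ℝ) * (A1 * ((n.choose ℓ : ℝ) * (CS k ℓ : ℝ)))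
        = (n.choose ℓ : ℝ) * (((ℓ+1 : ℕ) : ℝ) * (CS k ℓ : ℝ) * A1) := by ring
      _ ≤ (n.choose ℓ : ℝ) * ((CS k (ℓ+1) : ℝ) * (((n - ℓ : ℕ) : ℝ) * A0)) := step1
      _ = ((ℓ+1 : ℕ) : ℝ) * (A0 * ((n.choose (ℓ+1) : ℝ) * (CS k (ℓ+1) : ℝ))) := e1
  have := le_of_mul_le_mul_left step2 hLpos
  push_cast at this ⊢
  linarith [this]
end

section
/- Let D be a nonempty finite set, k ≥ 1 an integer, α_x ≥ 0 a real for each x ∈ D, and τ : ℕ → [0,∞) a non-increasing function. For x ∈ D^k let |x| denote the number of distinct entries of x. Then (E_{x∈D^k}[τ(|x|)]) · (E_{x∈D^k}[∏_{i=1}^k α_{x_i}]) ≤ E_{x∈D^k}[τ(|x|) · ∏_{i=1}^k α_{x_i}], where E denotes the average over x drawn uniformly from D^k. -/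
section CorrelationIneqAux

variable {D : Type*} [Fintype D] [DecidableEq D]

lemma Rmono {c s s' : ℝ} (hc : 0 ≤ c) (hs' : 0 ≤ s') (hss : s' ≤ s) (p : ℕ) :
    (c + s') ^ p + (c - s') ^ p ≤ (c + s) ^ p + (c - s) ^ p := by
  have key : ∀ u : ℝ, (c + u) ^ p + (c - u) ^ p
      = ∑ j ∈ Finset.range (p + 1), (c ^ j * u ^ (p - j) * (p.choose j)
        + c ^ j * (-u) ^ (p - j) * (p.choose j)) := by
    intro u
    rw [Finset.sum_add_distrib, ← add_pow, sub_eq_add_neg, ← add_pow]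
  have hs : 0 ≤ s := le_trans hs' hss
  rw [key, key]
  apply Finset.sum_le_sum
  intro j _
  rcases Nat.even_or_odd (p - j) with he | ho
  · rw [he.neg_pow, he.neg_pow]
    have h1 : s' ^ (p - j) ≤ s ^ (p - j) := pow_le_pow_left₀ hs' hss _
    have hcj : (0:ℝ) ≤ c ^ j := pow_nonneg hc _
    have := mul_le_mul_of_nonneg_left h1 hcj
    have := mul_le_mul_of_nonneg_right this (by positivity : (0:ℝ) ≤ (p.choose j : ℝ))
    linarith
  · rw [ho.neg_pow, ho.neg_pow]
    ring_nf
    linarith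

lemma reindex (k : ℕ) (a b : D) (hab : a ≠ b) (G : (Fin k → D) → ℝ) :
    ∑ x : Fin k → D, G x
      = ∑ g ∈ Finset.univ.filter (fun g : Fin k → D => ∀ i, g i ≠ b),
          ∑ ξ ∈ (Finset.univ.filter (fun i => g i = a)).powerset,
            G (fun i => if i ∈ ξ then b else g i) := by
  rw [Finset.sum_sigma']
  refine Finset.sum_bij'
    (fun x _ => (⟨fun i => if x i = b then a else x i,
      Finset.univ.filter (fun i => x i = b)⟩ : Σ _ : Fin k → D, Finset (Fin k)))
    (fun q _ => (fun i => if i ∈ q.2 then b else q.1 i : Fin k → D))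
    ?_ ?_ ?_ ?_ ?_
  · intro x _
    simp only [Finset.mem_sigma, Finset.mem_filter, Finset.mem_univ, true_and,
      Finset.mem_powerset]
    constructor
    · intro i
      by_cases h : x i = b <;> simp [h, hab]
    · intro i hi
      simp only [Finset.mem_filter, Finset.mem_univ, true_and] at hi ⊢
      simp [hi]
  · intro q hq
    exact Finset.mem_univ _
  · intro x _
    funext i
    by_cases h : x i = b <;> simp [h]
  · rintro ⟨g, ξ⟩ hq
    simp only [Finset.mem_sigma, Finset.mem_filter, Finset.mem_univ, true_and,
      Finset.mem_powerset] at hq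
    obtain ⟨h1, h2⟩ := hq
    have hg : (fun i => if (if i ∈ ξ then b else g i) = b then a
        else (if i ∈ ξ then b else g i)) = g := by
      funext i
      by_cases h : i ∈ ξ
      · have ha' : g i = a := by have := h2 h; simpa using this
        simp [h, ha']
      · simp [h, h1 i]
    have hxi : Finset.univ.filter (fun i => (if i ∈ ξ then b else g i) = b) = ξ := by
      ext i
      simp only [Finset.mem_filter, Finset.mem_univ, true_and]
      by_cases h : i ∈ ξ
      · simp [h]
      · simp [h, h1 i]
    exact Sigma.ext hg (heq_of_eq hxi)
  · intro x _
    congr 1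
    funext i
    by_cases h : x i = b <;> simp [h]

lemma prod_eval (k : ℕ) (a b : D) (hab : a ≠ b) (β : D → ℝ) (c σ : ℝ)
    (g : Fin k → D) (hg : ∀ i, g i ≠ b) (ξ : Finset (Fin k))
    (hξ : ξ ⊆ Finset.univ.filter (fun i => g i = a)) :
    (∏ i, (Function.update (Function.update β a (c+σ)) b (c-σ))
        ((fun i => if i ∈ ξ then b else g i) i))
      = (c-σ) ^ ξ.card * (c+σ) ^ ((Finset.univ.filter (fun i => g i = a)).card - ξ.card)
          * ∏ i ∈ Finset.univ \ Finset.univ.filter (fun i => g i = a), β (g i) := by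
  set P := Finset.univ.filter (fun i => g i = a) with hP
  have h1 : ∀ i ∈ ξ, (Function.update (Function.update β a (c+σ)) b (c-σ))
      ((fun i => if i ∈ ξ then b else g i) i) = c - σ := by
    intro i hi
    show Function.update (Function.update β a (c+σ)) b (c-σ) (if i ∈ ξ then b else g i) = c - σ
    rw [if_pos hi, Function.update_self]
  have h2 : ∀ i ∈ P \ ξ, (Function.update (Function.update β a (c+σ)) b (c-σ))
      ((fun i => if i ∈ ξ then b else g i) i) = c + σ := by
    intro i hi
    rw [Finset.mem_sdiff] at hi
    obtain ⟨hiP, hiξ⟩ := hi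
    rw [hP, Finset.mem_filter] at hiP
    show Function.update (Function.update β a (c+σ)) b (c-σ) (if i ∈ ξ then b else g i) = c + σ
    rw [if_neg hiξ, hiP.2, Function.update_of_ne hab, Function.update_self]
  have h3 : ∀ i ∈ Finset.univ \ P, (Function.update (Function.update β a (c+σ)) b (c-σ))
      ((fun i => if i ∈ ξ then b else g i) i) = β (g i) := by
    intro i hi
    rw [Finset.mem_sdiff] at hi
    have hiξ : i ∉ ξ := fun h => hi.2 (hξ h)
    have hia : g i ≠ a := by
      intro h; exact hi.2 (by rw [hP]; simp [h])
    show Function.update (Function.update β a (c+σ)) b (c-σ) (if i ∈ ξ then b else g i) = β (g i)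
    rw [if_neg hiξ, Function.update_of_ne (hg i), Function.update_of_ne hia]
  have hd1 : Disjoint (P \ ξ) ξ := Finset.sdiff_disjoint
  have hd2 : Disjoint (Finset.univ \ P) (P \ ξ ∪ ξ) := by
    refine Finset.disjoint_union_right.2 ⟨?_, ?_⟩
    · exact Finset.disjoint_of_subset_right Finset.sdiff_subset Finset.sdiff_disjoint
    · exact Finset.disjoint_of_subset_right hξ Finset.sdiff_disjoint
  have hsplit : (Finset.univ : Finset (Fin k)) = (Finset.univ \ P) ∪ ((P \ ξ) ∪ ξ) := by
    rw [Finset.sdiff_union_of_subset hξ, Finset.sdiff_union_of_subset (Finset.subset_univ P)]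
  conv_lhs => rw [hsplit]
  rw [Finset.prod_union hd2, Finset.prod_union hd1]
  rw [Finset.prod_congr rfl h1, Finset.prod_congr rfl h2, Finset.prod_congr rfl h3,
    Finset.prod_const, Finset.prod_const]
  rw [Finset.card_sdiff_of_subset hξ]
  ring

lemma card_image_mk (k : ℕ) (a b : D) (hab : a ≠ b)
    (g : Fin k → D) (hg : ∀ i, g i ≠ b) (ξ : Finset (Fin k))
    (hξ : ξ ⊆ Finset.univ.filter (fun i => g i = a)) :
    (Finset.univ.image (fun i => if i ∈ ξ then b else g i)).card
      = if ξ = ∅ ∨ ξ = Finset.univ.filter (fun i => g i = a)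
        then (Finset.univ.image g).card else (Finset.univ.image g).card + 1 := by
  set P := Finset.univ.filter (fun i => g i = a) with hP
  have hbg : b ∉ Finset.univ.image g := by
    simp only [Finset.mem_image, Finset.mem_univ, true_and, not_exists]
    intro i; exact hg i
  by_cases h0 : ξ = ∅
  · subst h0
    simp
  by_cases hξP : ξ = P
  · -- all a-positions become b
    have himg : Finset.univ.image (fun i => if i ∈ ξ then b else g i)
        = insert b ((Finset.univ.image g).erase a) := by
      ext v
      simp only [Finset.mem_image, Finset.mem_univ, true_and, Finset.mem_insert,
        Finset.mem_erase]
      constructor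
      · rintro ⟨i, rfl⟩
        by_cases h : i ∈ ξ
        · simp [h]
        · have hia : g i ≠ a := by
            intro ha
            exact h (by rw [hξP, hP]; simp [ha])
          simp [h, hia]
      · rintro (rfl | ⟨hva, i, rfl⟩)
        · obtain ⟨i, hi⟩ := Finset.nonempty_iff_ne_empty.2 h0
          exact ⟨i, by simp [hi]⟩
        · have hiξ : i ∉ ξ := by
            rw [hξP, hP]
            simp only [Finset.mem_filter, Finset.mem_univ, true_and]
            exact hva
          exact ⟨i, by simp [hiξ]⟩
    have haimg : a ∈ Finset.univ.image g := by
      obtain ⟨i, hi⟩ := Finset.nonempty_iff_ne_empty.2 h0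
      have : g i = a := by
        have := hξ hi
        rw [hP, Finset.mem_filter] at this
        exact this.2
      exact Finset.mem_image.2 ⟨i, Finset.mem_univ i, this⟩
    rw [himg, Finset.card_insert_of_notMem (fun h => hbg (Finset.mem_of_mem_erase h)),
      Finset.card_erase_of_mem haimg]
    have hpos : 0 < (Finset.univ.image g).card := Finset.card_pos.2 ⟨a, haimg⟩
    simp only [hξP, or_true, if_true]
    omega
  · -- strictly between
    have hPne : P.Nonempty := Finset.nonempty_iff_ne_empty.2 (by
      intro h; rw [h] at hξ
      exact h0 (Finset.subset_empty.1 hξ))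
    obtain ⟨j, hjPdiff⟩ := Finset.exists_of_ssubset (Finset.ssubset_iff_subset_ne.2 ⟨hξ, hξP⟩)
    have himg : Finset.univ.image (fun i => if i ∈ ξ then b else g i)
        = insert b (Finset.univ.image g) := by
      ext v
      simp only [Finset.mem_image, Finset.mem_univ, true_and, Finset.mem_insert]
      constructor
      · rintro ⟨i, rfl⟩
        by_cases h : i ∈ ξ
        · simp [h]
        · simp [h]
      · rintro (rfl | ⟨i, rfl⟩)
        · obtain ⟨i, hi⟩ := Finset.nonempty_iff_ne_empty.2 h0
          exact ⟨i, by simp [hi]⟩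
        · by_cases h : i ∈ ξ
          · -- then g i = a; use j ∈ P \ ξ
            have hga : g i = a := by
              have := hξ h
              rw [hP, Finset.mem_filter] at this
              exact this.2
            have hgj : g j = a := by
              have := hjPdiff.1
              rw [hP, Finset.mem_filter] at this
              exact this.2
            exact ⟨j, by rw [if_neg hjPdiff.2, hgj, hga]⟩
          · exact ⟨i, by simp [h]⟩
    rw [himg, Finset.card_insert_of_notMem hbg]
    simp [h0, hξP]

lemma binom_powerset (P : Finset (Fin k)) (u v : ℝ) :
    ∑ ξ ∈ P.powerset, u ^ ξ.card * v ^ (P.card - ξ.card) = (u + v) ^ P.card := by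
  have h := Finset.prod_add (fun _ : Fin k => u) (fun _ : Fin k => v) P
  rw [Finset.prod_const] at h
  rw [h]
  apply Finset.sum_congr rfl
  intro ξ hξ
  rw [Finset.mem_powerset] at hξ
  rw [Finset.prod_const, Finset.prod_const, Finset.card_sdiff_of_subset hξ]

lemma inner_eq (k : ℕ) (τ : ℕ → ℝ) (a b : D) (hab : a ≠ b) (β : D → ℝ) (c σ : ℝ)
    (g : Fin k → D) (hg : ∀ i, g i ≠ b) :
    ∑ ξ ∈ (Finset.univ.filter (fun i => g i = a)).powerset,
        τ ((Finset.univ.image (fun i => if i ∈ ξ then b else g i)).card)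
          * ∏ i, (Function.update (Function.update β a (c+σ)) b (c-σ))
              ((fun i => if i ∈ ξ then b else g i) i)
      = (τ ((Finset.univ.image g).card + 1) * (2*c) ^ (Finset.univ.filter (fun i => g i = a)).card
          + (τ ((Finset.univ.image g).card) - τ ((Finset.univ.image g).card + 1))
            * (∑ ξ ∈ insert ∅ ({Finset.univ.filter (fun i => g i = a)} : Finset (Finset (Fin k))),
                (c-σ) ^ ξ.card * (c+σ) ^ ((Finset.univ.filter (fun i => g i = a)).card - ξ.card)))
        * ∏ i ∈ Finset.univ \ Finset.univ.filter (fun i => g i = a), β (g i) := by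
  set P := Finset.univ.filter (fun i => g i = a) with hP
  set M := (Finset.univ.image g).card with hM
  set π := ∏ i ∈ Finset.univ \ P, β (g i) with hπ
  have step : ∀ ξ ∈ P.powerset,
      τ ((Finset.univ.image (fun i => if i ∈ ξ then b else g i)).card)
        * ∏ i, (Function.update (Function.update β a (c+σ)) b (c-σ))
            ((fun i => if i ∈ ξ then b else g i) i)
      = τ (M+1) * ((c-σ) ^ ξ.card * (c+σ) ^ (P.card - ξ.card) * π)
        + (if ξ = ∅ ∨ ξ = P then (τ M - τ (M+1)) * ((c-σ) ^ ξ.card * (c+σ) ^ (P.card - ξ.card) * π) else 0) := by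
    intro ξ hξ
    rw [Finset.mem_powerset] at hξ
    rw [card_image_mk k a b hab g hg ξ hξ, prod_eval k a b hab β c σ g hg ξ hξ]
    split_ifs with h
    · ring
    · ring
  rw [Finset.sum_congr rfl step, Finset.sum_add_distrib, ← Finset.mul_sum, ← Finset.sum_filter]
  have hfil : P.powerset.filter (fun ξ => ξ = ∅ ∨ ξ = P) = insert ∅ ({P} : Finset (Finset (Fin k))) := by
    ext ξ
    simp only [Finset.mem_filter, Finset.mem_powerset, Finset.mem_insert, Finset.mem_singleton]
    constructor
    · rintro ⟨_, h⟩; exact h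
    · rintro (rfl | rfl)
      · exact ⟨Finset.empty_subset _, Or.inl rfl⟩
      · exact ⟨le_refl _, Or.inr rfl⟩
  rw [hfil]
  have hsum : ∑ ξ ∈ P.powerset, (c-σ) ^ ξ.card * (c+σ) ^ (P.card - ξ.card) * π
      = (2*c) ^ P.card * π := by
    rw [← Finset.sum_mul, binom_powerset]
    ring_nf
  rw [hsum]
  have h2 : ∑ ξ ∈ (insert ∅ ({P} : Finset (Finset (Fin k)))),
      (τ M - τ (M+1)) * ((c-σ) ^ ξ.card * (c+σ) ^ (P.card - ξ.card) * π)
      = (τ M - τ (M+1)) * (∑ ξ ∈ insert ∅ ({P} : Finset (Finset (Fin k))),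
          (c-σ) ^ ξ.card * (c+σ) ^ (P.card - ξ.card)) * π := by
    rw [Finset.mul_sum, Finset.sum_mul]
    apply Finset.sum_congr rfl
    intro ξ _
    ring
  rw [h2]
  ring

lemma core (k : ℕ) (τ : ℕ → ℝ) (hτ : Antitone τ) (a b : D) (hab : a ≠ b)
    (β : D → ℝ) (hβ : ∀ d, d ≠ a → d ≠ b → 0 ≤ β d)
    (c s s' : ℝ) (hc : 0 ≤ c) (hs' : 0 ≤ s') (hss : s' ≤ s) :
    ∑ x : Fin k → D, τ ((Finset.univ.image x).card)
        * ∏ i, (Function.update (Function.update β a (c+s')) b (c-s')) (x i)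
      ≤ ∑ x : Fin k → D, τ ((Finset.univ.image x).card)
          * ∏ i, (Function.update (Function.update β a (c+s)) b (c-s)) (x i) := by
  rw [reindex k a b hab, reindex k a b hab]
  apply Finset.sum_le_sum
  intro g hgmem
  rw [Finset.mem_filter] at hgmem
  have hg : ∀ i, g i ≠ b := hgmem.2
  rw [inner_eq k τ a b hab β c s' g hg, inner_eq k τ a b hab β c s g hg]
  set P := Finset.univ.filter (fun i => g i = a) with hP
  set M := (Finset.univ.image g).card with hM
  have hπ : 0 ≤ ∏ i ∈ Finset.univ \ P, β (g i) := by
    apply Finset.prod_nonneg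
    intro i hi
    rw [Finset.mem_sdiff] at hi
    have hia : g i ≠ a := by
      intro h
      exact hi.2 (by rw [hP]; simp [h])
    exact hβ (g i) hia (hg i)
  have hΔ : 0 ≤ τ M - τ (M + 1) := by
    have := hτ (Nat.le_succ M)
    linarith
  have hR : (∑ ξ ∈ insert ∅ ({P} : Finset (Finset (Fin k))),
        (c-s') ^ ξ.card * (c+s') ^ (P.card - ξ.card))
      ≤ ∑ ξ ∈ insert ∅ ({P} : Finset (Finset (Fin k))),
        (c-s) ^ ξ.card * (c+s) ^ (P.card - ξ.card) := by
    by_cases hPe : P = ∅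
    · rw [hPe]
      simp
    · have hne : (∅ : Finset (Fin k)) ∉ ({P} : Finset (Finset (Fin k))) := by
        simp [Ne.symm hPe]
      rw [Finset.sum_insert hne, Finset.sum_insert hne, Finset.sum_singleton,
        Finset.sum_singleton]
      simp only [Finset.card_empty, pow_zero, one_mul, Nat.sub_zero, Nat.sub_self, mul_one]
      have := Rmono hc hs' hss P.card
      linarith
  have key := mul_le_mul_of_nonneg_left hR hΔ
  have := add_le_add_right key (τ (M+1) * (2*c) ^ P.card)
  exact mul_le_mul_of_nonneg_right this hπ

lemma const_case (k : ℕ) (τ : ℕ → ℝ) (m : ℝ) (α : D → ℝ) (hconst : ∀ d, α d = m) :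
    ∑ x : Fin k → D, τ ((Finset.univ.image x).card) * ∏ i, α (x i)
      = (∑ x : Fin k → D, τ ((Finset.univ.image x).card)) * m ^ k := by
  rw [Finset.sum_mul]
  apply Finset.sum_congr rfl
  intro x _
  congr 1
  rw [Finset.prod_congr rfl (fun i _ => hconst (x i)), Finset.prod_const,
    Finset.card_univ, Fintype.card_fin]

lemma main_ind [Nonempty D] (k : ℕ) (τ : ℕ → ℝ) (hτ : Antitone τ) (m : ℝ) :
    ∀ N : ℕ, ∀ α : D → ℝ, (∀ d, 0 ≤ α d) → (∑ d, α d) = (Fintype.card D : ℝ) * m →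
    (Finset.univ.filter (fun d => α d ≠ m)).card ≤ N →
    (∑ x : Fin k → D, τ ((Finset.univ.image x).card)) * m ^ k
      ≤ ∑ x : Fin k → D, τ ((Finset.univ.image x).card) * ∏ i, α (x i) := by
  intro N
  induction N with
  | zero =>
    intro α hα hsum hcard
    have hconst : ∀ d, α d = m := by
      intro d
      by_contra h
      have : d ∈ Finset.univ.filter (fun d => α d ≠ m) := by simp [h]
      have := Finset.card_pos.2 ⟨d, this⟩
      omega
    rw [const_case k τ m α hconst]
  | succ N ih =>
    intro α hα hsum hcard
    by_cases hex : ∀ d, α d = m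
    · rw [const_case k τ m α hex]
    push_neg at hex
    obtain ⟨d0, hd0⟩ := hex
    have hn : (0:ℝ) < (Fintype.card D : ℝ) := by
      exact_mod_cast Fintype.card_pos
    have hm : 0 ≤ m := by
      have hSig : 0 ≤ ∑ d, α d := Finset.sum_nonneg (fun d _ => hα d)
      rw [hsum] at hSig
      nlinarith
    obtain ⟨a, _, hamax⟩ := Finset.exists_max_image Finset.univ α Finset.univ_nonempty
    obtain ⟨b, _, hbmin⟩ := Finset.exists_min_image Finset.univ α Finset.univ_nonempty
    have haM : m < α a := by
      by_contra h
      push_neg at h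
      have hlt : ∑ d, α d < ∑ _d : D, m := by
        apply Finset.sum_lt_sum
        · intro d _
          exact le_trans (hamax d (Finset.mem_univ d)) h
        · refine ⟨d0, Finset.mem_univ d0, ?_⟩
          exact lt_of_le_of_ne (le_trans (hamax d0 (Finset.mem_univ d0)) h) hd0
      rw [hsum, Finset.sum_const, Finset.card_univ, nsmul_eq_mul] at hlt
      linarith
    have hbm : α b < m := by
      by_contra h
      push_neg at h
      have hlt : ∑ _d : D, m < ∑ d, α d := by
        apply Finset.sum_lt_sum
        · intro d _
          exact le_trans h (hbmin d (Finset.mem_univ d))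
        · refine ⟨d0, Finset.mem_univ d0, ?_⟩
          exact lt_of_le_of_ne (le_trans h (hbmin d0 (Finset.mem_univ d0)))
            (fun hh => hd0 hh.symm)
      rw [hsum, Finset.sum_const, Finset.card_univ, nsmul_eq_mul] at hlt
      linarith
    have hab : a ≠ b := by
      intro h
      rw [h] at haM
      linarith
    set δ := min (α a - m) (m - α b) with hδ
    have hδ1 : δ ≤ α a - m := min_le_left _ _
    have hδ2 : δ ≤ m - α b := min_le_right _ _
    have hδpos : 0 < δ := lt_min (by linarith) (by linarith)
    set c := (α a + α b) / 2 with hcdef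
    set s := (α a - α b) / 2 with hsdef
    set s' := s - δ with hs'def
    have hc : 0 ≤ c := by
      have := hα a; have := hα b
      rw [hcdef]; linarith
    have hs'0 : 0 ≤ s' := by rw [hs'def, hsdef]; linarith
    have hss : s' ≤ s := by rw [hs'def]; linarith
    have hαeq : α = Function.update (Function.update α a (c+s)) b (c-s) := by
      funext d
      by_cases hdb : d = b
      · subst hdb
        rw [Function.update_self, hcdef, hsdef]; ring
      · rw [Function.update_of_ne hdb]
        by_cases hda : d = a
        · subst hda
          rw [Function.update_self, hcdef, hsdef]; ring
        · rw [Function.update_of_ne hda]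
    set α' := Function.update (Function.update α a (c+s')) b (c-s') with hα'def
    have ha' : α' a = α a - δ := by
      rw [hα'def, Function.update_of_ne hab, Function.update_self, hcdef, hs'def, hsdef]
      ring
    have hb' : α' b = α b + δ := by
      rw [hα'def, Function.update_self, hcdef, hs'def, hsdef]
      ring
    have hother : ∀ d, d ≠ a → d ≠ b → α' d = α d := by
      intro d hda hdb
      rw [hα'def, Function.update_of_ne hdb, Function.update_of_ne hda]
    have hα' : ∀ d, 0 ≤ α' d := by
      intro d
      by_cases hda : d = a
      · subst hda; rw [ha']; linarith
      by_cases hdb : d = b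
      · subst hdb; rw [hb']; linarith [hα d]
      rw [hother d hda hdb]; exact hα d
    have hsum' : ∑ d, α' d = (Fintype.card D : ℝ) * m := by
      have e1 : ∑ d, α' d = (c - s') + ((c + s') + ∑ d ∈ (Finset.univ \ {b}) \ {a}, α d) := by
        rw [hα'def, Finset.sum_update_of_mem (Finset.mem_univ b)]
        congr 1
        rw [Finset.sum_update_of_mem]
        rw [Finset.mem_sdiff]
        exact ⟨Finset.mem_univ a, by simp [hab]⟩
      have e2 : ∑ d, α d = α b + (α a + ∑ d ∈ (Finset.univ \ {b}) \ {a}, α d) := by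
        conv_lhs => rw [show α = Function.update (Function.update α a (α a)) b (α b) by
          rw [Function.update_eq_self, Function.update_eq_self]]
        rw [Finset.sum_update_of_mem (Finset.mem_univ b)]
        congr 1
        rw [Finset.sum_update_of_mem]
        rw [Finset.mem_sdiff]
        exact ⟨Finset.mem_univ a, by simp [hab]⟩
      rw [e1]
      rw [e2] at hsum
      linarith
    have hcard' : (Finset.univ.filter (fun d => α' d ≠ m)).card ≤ N := by
      rcases min_cases (α a - m) (m - α b) with ⟨heq, _⟩ | ⟨heq, _⟩
      · -- δ = α a - m, so α' a = m
        have hwa : α' a = m := by rw [ha', hδ, heq]; ring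
        have hsub : Finset.univ.filter (fun d => α' d ≠ m)
            ⊆ (Finset.univ.filter (fun d => α d ≠ m)).erase a := by
          intro d hd
          rw [Finset.mem_filter] at hd
          rw [Finset.mem_erase, Finset.mem_filter]
          have hda : d ≠ a := by
            intro h; subst h; exact hd.2 hwa
          refine ⟨hda, Finset.mem_univ d, ?_⟩
          by_cases hdb : d = b
          · subst hdb; exact ne_of_lt hbm
          · rw [← hother d hda hdb]; exact hd.2
        have hamem : a ∈ Finset.univ.filter (fun d => α d ≠ m) := by
          simp only [Finset.mem_filter, Finset.mem_univ, true_and]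
          exact ne_of_gt haM
        calc (Finset.univ.filter (fun d => α' d ≠ m)).card
            ≤ ((Finset.univ.filter (fun d => α d ≠ m)).erase a).card :=
              Finset.card_le_card hsub
          _ = (Finset.univ.filter (fun d => α d ≠ m)).card - 1 :=
              Finset.card_erase_of_mem hamem
          _ ≤ N := by omega
      · -- δ = m - α b, so α' b = m
        have hwb : α' b = m := by rw [hb', hδ, heq]; ring
        have hsub : Finset.univ.filter (fun d => α' d ≠ m)
            ⊆ (Finset.univ.filter (fun d => α d ≠ m)).erase b := by
          intro d hd
          rw [Finset.mem_filter] at hd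
          rw [Finset.mem_erase, Finset.mem_filter]
          have hdb : d ≠ b := by
            intro h; subst h; exact hd.2 hwb
          refine ⟨hdb, Finset.mem_univ d, ?_⟩
          by_cases hda : d = a
          · subst hda; exact ne_of_gt haM
          · rw [← hother d hda hdb]; exact hd.2
        have hbmem : b ∈ Finset.univ.filter (fun d => α d ≠ m) := by
          simp only [Finset.mem_filter, Finset.mem_univ, true_and]
          exact ne_of_lt hbm
        calc (Finset.univ.filter (fun d => α' d ≠ m)).card
            ≤ ((Finset.univ.filter (fun d => α d ≠ m)).erase b).card :=
              Finset.card_le_card hsub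
          _ = (Finset.univ.filter (fun d => α d ≠ m)).card - 1 :=
              Finset.card_erase_of_mem hbmem
          _ ≤ N := by omega
    calc (∑ x : Fin k → D, τ ((Finset.univ.image x).card)) * m ^ k
        ≤ ∑ x : Fin k → D, τ ((Finset.univ.image x).card) * ∏ i, α' (x i) :=
          ih α' hα' hsum' hcard'
      _ ≤ ∑ x : Fin k → D, τ ((Finset.univ.image x).card) * ∏ i, α (x i) := by
          conv_rhs => rw [hαeq]
          exact core k τ hτ a b hab α (fun d _ _ => hα d) c s s' hc hs'0 hss

end CorrelationIneqAux

/-- The correlation inequality: for a nonempty finite set `D`, nonnegative weights `α`, and a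
non-increasing `τ : ℕ → [0,∞)`,
`E[τ(|x|)] · E[∏_i α_{x_i}] ≤ E[τ(|x|) ∏_i α_{x_i}]`, where the averages are over uniform
`x ∈ D^k` and `|x|` is the number of distinct entries of `x`. -/
theorem correlation_ineq {D : Type*} [Fintype D] [Nonempty D] [DecidableEq D]
    (k : ℕ) (hk : 1 ≤ k) (α : D → ℝ) (hα : ∀ x, 0 ≤ α x)
    (τ : ℕ → ℝ) (hτ0 : ∀ n, 0 ≤ τ n) (hτ : Antitone τ) :
    ((∑ x : Fin k → D, τ (Finset.univ.image x).card) / (Fintype.card D : ℝ) ^ k) *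
      ((∑ x : Fin k → D, ∏ i, α (x i)) / (Fintype.card D : ℝ) ^ k)
    ≤ (∑ x : Fin k → D, τ (Finset.univ.image x).card * ∏ i, α (x i)) /
        (Fintype.card D : ℝ) ^ k := by
  classical
  have hn : (0:ℝ) < (Fintype.card D : ℝ) := by exact_mod_cast Fintype.card_pos
  set m : ℝ := (∑ d, α d) / (Fintype.card D : ℝ) with hm
  have hA : (∑ d, α d) = (Fintype.card D : ℝ) * m := by
    rw [hm]; field_simp
  have hprod : (∑ x : Fin k → D, ∏ i, α (x i)) = (∑ d, α d) ^ k := by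
    have h := Finset.prod_univ_sum (fun _ : Fin k => (Finset.univ : Finset D))
      (fun _ d => α d)
    rw [Fintype.piFinset_univ] at h
    rw [← h, Finset.prod_const, Finset.card_univ, Fintype.card_fin]
  have key := main_ind k τ hτ m (Finset.univ.filter (fun d => α d ≠ m)).card α hα hA le_rfl
  have hnk : (0:ℝ) < (Fintype.card D : ℝ) ^ k := by positivity
  rw [hprod, hA, mul_pow]
  have heq : ((∑ x : Fin k → D, τ (Finset.univ.image x).card) / (Fintype.card D : ℝ) ^ k)
      * (((Fintype.card D : ℝ) ^ k * m ^ k) / (Fintype.card D : ℝ) ^ k)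
      = ((∑ x : Fin k → D, τ (Finset.univ.image x).card) * m ^ k)
        / (Fintype.card D : ℝ) ^ k := by
    field_simp
  rw [heq]
  exact (div_le_div_iff_of_pos_right hnk).2 key
end

section
/- Fix a finite set of colors Ω and a subset Ω∘ ⊆ Ω of looped colors. Let A, B ⊆ Ω, let k be a nonnegative integer, and let r ≤ s ≤ t be nonnegative integers with r < t. Then C(A,B;k,s) ≤ C(A,B;k,r)^{(t−s)/(t−r)} · C(A,B;k,t)^{(s−r)/(t−r)}. -/
/-- `C(A,B;a,b)`: the number of semiproper colorings of `K_{a,b}` where the `a` vertices of the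
first part get colors from `A`, the `b` vertices of the second part get colors from `B`, and a
color shared across the bipartition must be looped (lie in `Ωo`). -/
noncomputable def semiCount {Ω : Type*} [Fintype Ω] (Ωo : Finset Ω)
    (A B : Finset Ω) (a b : ℕ) : ℕ :=
  Nat.card {p : (Fin a → Ω) × (Fin b → Ω) //
    (∀ i, p.1 i ∈ A) ∧ (∀ j, p.2 j ∈ B) ∧ ∀ i j, p.1 i = p.2 j → p.1 i ∈ Ωo}

open scoped Classical in
private lemma semiCount_eq_sum {Ω : Type*} [Fintype Ω] (Ωo A B : Finset Ω) (k b : ℕ) :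
    semiCount Ωo A B k b =
      ∑ φ ∈ Finset.univ.filter (fun φ : Fin k → Ω => ∀ i, φ i ∈ A),
        (B.filter fun c => ∀ i, φ i = c → c ∈ Ωo).card ^ b := by
  rw [semiCount]
  have e : {p : (Fin k → Ω) × (Fin b → Ω) //
      (∀ i, p.1 i ∈ A) ∧ (∀ j, p.2 j ∈ B) ∧ ∀ i j, p.1 i = p.2 j → p.1 i ∈ Ωo} ≃
      Σ φ : {φ : Fin k → Ω // ∀ i, φ i ∈ A},
        (Fin b → {c : Ω // c ∈ B ∧ ∀ i, φ.1 i = c → c ∈ Ωo}) :=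
    { toFun := fun p => ⟨⟨p.1.1, p.2.1⟩, fun j => ⟨p.1.2 j, p.2.2.1 j,
        fun i h => h ▸ p.2.2.2 i j h⟩⟩,
      invFun := fun q => ⟨(q.1.1, fun j => (q.2 j).1), q.1.2, fun j => (q.2 j).2.1,
        fun i j h => by rw [h]; exact (q.2 j).2.2 i h⟩,
      left_inv := fun p => rfl,
      right_inv := fun q => rfl }
  rw [Nat.card_congr e, Nat.card_eq_fintype_card, Fintype.card_sigma,
    Finset.sum_subtype (p := fun φ : Fin k → Ω => ∀ i, φ i ∈ A)
      (Finset.univ.filter (fun φ : Fin k → Ω => ∀ i, φ i ∈ A)) (by simp) (fun φ => (B.filter fun c => ∀ i, φ i = c → c ∈ Ωo).card ^ b)]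
  refine Finset.sum_congr rfl fun φ _ => ?_
  rw [Fintype.card_fun, Fintype.card_subtype, Fintype.card_fin]
  congr 2
  ext c
  simp [and_comm]

open scoped Classical in
/-- Log-convexity (Hölder) of `C(A,B;k,·)`:
`C(A,B;k,s) ≤ C(A,B;k,r)^{(t−s)/(t−r)} · C(A,B;k,t)^{(s−r)/(t−r)}` for `r ≤ s ≤ t`, `r < t`. -/
theorem semiCount_log_convex {Ω : Type*} [Fintype Ω] (Ωo A B : Finset Ω)
    (k r s t : ℕ) (hrs : r ≤ s) (hst : s ≤ t) (hrt : r < t) :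
    (semiCount Ωo A B k s : ℝ)
      ≤ (semiCount Ωo A B k r : ℝ) ^ (((t : ℝ) - s) / ((t : ℝ) - r)) *
        (semiCount Ωo A B k t : ℝ) ^ (((s : ℝ) - r) / ((t : ℝ) - r)) := by
  have htr : (0 : ℝ) < (t : ℝ) - r := by
    have : (r : ℝ) < t := by exact_mod_cast hrt
    linarith
  rcases eq_or_lt_of_le hrs with h | hrs'
  · rw [← h, sub_self, zero_div, Real.rpow_zero, mul_one, div_self htr.ne', Real.rpow_one]
  rcases eq_or_lt_of_le hst with h | hst'
  · rw [h, sub_self, zero_div, Real.rpow_zero, one_mul, div_self htr.ne', Real.rpow_one]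
  -- now r < s < t
  have hsr : (0 : ℝ) < (s : ℝ) - r := by
    have : (r : ℝ) < s := by exact_mod_cast hrs'
    linarith
  have hts : (0 : ℝ) < (t : ℝ) - s := by
    have : (s : ℝ) < t := by exact_mod_cast hst'
    linarith
  set θ' : ℝ := ((t : ℝ) - s) / ((t : ℝ) - r) with hθ'
  set θ : ℝ := ((s : ℝ) - r) / ((t : ℝ) - r) with hθ
  set p : ℝ := ((t : ℝ) - r) / ((t : ℝ) - s) with hp
  set q : ℝ := ((t : ℝ) - r) / ((s : ℝ) - r) with hq
  have hpq : p.HolderConjugate q := by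
    refine Real.holderConjugate_iff.mpr ⟨?_, ?_⟩
    · rw [hp, lt_div_iff₀ hts]; linarith
    · rw [hp, hq, inv_div, inv_div, ← add_div,
        show (t : ℝ) - s + ((s : ℝ) - r) = (t : ℝ) - r by ring, div_self htr.ne']
  have hinvp : 1 / p = θ' := by rw [hp, hθ', one_div_div]
  have hinvq : 1 / q = θ := by rw [hq, hθ, one_div_div]
  set F := Finset.univ.filter (fun φ : Fin k → Ω => ∀ i, φ i ∈ A) with hF
  set n : (Fin k → Ω) → ℕ := fun φ => (B.filter fun c => ∀ i, φ i = c → c ∈ Ωo).card with hn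
  have key : ∀ b : ℕ, (semiCount Ωo A B k b : ℝ) = ∑ φ ∈ F, ((n φ : ℝ)) ^ (b : ℝ) := by
    intro b
    rw [semiCount_eq_sum]
    push_cast
    refine Finset.sum_congr rfl fun φ _ => ?_
    rw [Real.rpow_natCast]
  rw [key r, key s, key t]
  have holder := Real.inner_le_Lp_mul_Lq_of_nonneg (f := fun φ => (n φ : ℝ) ^ ((r : ℝ) * θ'))
    (g := fun φ => (n φ : ℝ) ^ ((t : ℝ) * θ)) (s := F) hpq
    (fun i _ => Real.rpow_nonneg (Nat.cast_nonneg _) _)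
    (fun i _ => Real.rpow_nonneg (Nat.cast_nonneg _) _)
  have hsum : (r : ℝ) * θ' + (t : ℝ) * θ = (s : ℝ) := by
    rw [hθ, hθ']
    field_simp
    ring
  have hs0 : (0 : ℝ) < (s : ℝ) := lt_of_le_of_lt (Nat.cast_nonneg r) (by exact_mod_cast hrs')
  calc ∑ φ ∈ F, ((n φ : ℝ)) ^ (s : ℝ)
      = ∑ φ ∈ F, ((n φ : ℝ) ^ ((r : ℝ) * θ') * (n φ : ℝ) ^ ((t : ℝ) * θ)) := by
        refine Finset.sum_congr rfl fun φ _ => ?_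
        rw [← Real.rpow_add' (Nat.cast_nonneg _) (by rw [hsum]; exact hs0.ne'), hsum]
    _ ≤ (∑ φ ∈ F, ((n φ : ℝ) ^ ((r : ℝ) * θ')) ^ p) ^ (1 / p) *
        (∑ φ ∈ F, ((n φ : ℝ) ^ ((t : ℝ) * θ)) ^ q) ^ (1 / q) := holder
    _ = (∑ φ ∈ F, ((n φ : ℝ)) ^ (r : ℝ)) ^ θ' * (∑ φ ∈ F, ((n φ : ℝ)) ^ (t : ℝ)) ^ θ := by
        rw [hinvp, hinvq]
        congr 1
        · congr 1
          refine Finset.sum_congr rfl fun φ _ => ?_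
          rw [← Real.rpow_mul (Nat.cast_nonneg _),
            show (r : ℝ) * θ' * p = (r : ℝ) by rw [hθ', hp]; field_simp]
        · congr 1
          refine Finset.sum_congr rfl fun φ _ => ?_
          rw [← Real.rpow_mul (Nat.cast_nonneg _),
            show (t : ℝ) * θ * q = (t : ℝ) by rw [hθ, hq]; field_simp]
end
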